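/- arXiv:2109.11825 — 10 statements merged into one kernel-verified Lean document; each statement's English description precedes it below -/
import Mathlib

section
/- Let (Λ_n) be a uniform interpolating family for the polynomials of degree at most n in F². If Λ ⊆ ℂ is a weak limit of (Λ_n), or of some subsequence (Λ_{n_k}), then Λ is a set of interpolation for F². -/
open MeasureTheory Filter

/-- The squared Fock norm: ‖f‖²_{F²} = ∫_ℂ |f(z)|² e^{−π|z|²} dm(z). -/
noncomputable def fockNorm2 (f : ℂ → ℂ) : ℝ :=
  ∫ z : ℂ, ‖f z‖ ^ 2 * Real.exp (-Real.pi * ‖z‖ ^ 2)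

/-- k_n(z,z) = Σ_{k=0}^n (π|z|²)^k / k!. -/
noncomputable def kdiag (n : ℕ) (z : ℂ) : ℝ :=
  ∑ k ∈ Finset.range (n + 1), (Real.pi * ‖z‖ ^ 2) ^ k / (Nat.factorial k : ℝ)

/-- The normalized reproducing kernel of F² at λ: κ_λ(z) = e^{π z λ̄ − π|λ|²/2}. -/
noncomputable def fockKernelNorm (l z : ℂ) : ℂ :=
  Complex.exp ((Real.pi : ℂ) * z * (starRingEnd ℂ) l -
    ((Real.pi * ‖l‖ ^ 2 / 2 : ℝ) : ℂ))

/-- The normalized reproducing kernel of the degree-n polynomials: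
κ_{n,λ}(z) = k_n(z,λ)/k_n(λ,λ)^{1/2}. -/
noncomputable def polyKernelNorm (n : ℕ) (l z : ℂ) : ℂ :=
  (∑ k ∈ Finset.range (n + 1), ((Real.pi : ℂ) * z * (starRingEnd ℂ) l) ^ k /
    (Nat.factorial k : ℂ)) / ((Real.sqrt (kdiag n l) : ℝ) : ℂ)



lemma statement3_exp_tail_bound {R : ℝ} {w : ℂ} (hw : ‖w‖ ≤ R) (n : ℕ) :
    ‖Complex.exp w - ∑ j ∈ Finset.range n, w ^ j / (Nat.factorial j : ℂ)‖
      ≤ Real.exp R - ∑ j ∈ Finset.range n, R ^ j / (Nat.factorial j : ℝ) := by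
  have hsC : HasSum (fun j : ℕ => w ^ j / (Nat.factorial j : ℂ)) (Complex.exp w) := by
    rw [Complex.exp_eq_exp_ℂ]
    exact NormedSpace.expSeries_div_hasSum_exp w
  have hsR : HasSum (fun j : ℕ => R ^ j / (Nat.factorial j : ℝ)) (Real.exp R) := by
    rw [Real.exp_eq_exp_ℝ]
    exact NormedSpace.expSeries_div_hasSum_exp R
  have hterm : ∀ j : ℕ, ‖w ^ j / (Nat.factorial j : ℂ)‖ ≤ R ^ j / (Nat.factorial j : ℝ) := by
    intro j
    have : ‖w ^ j / (Nat.factorial j : ℂ)‖ = ‖w‖ ^ j / (Nat.factorial j : ℝ) := by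
      rw [norm_div, norm_pow, Complex.norm_natCast]
    rw [this]
    gcongr
  have hnormsum : Summable (fun j : ℕ => ‖w ^ j / (Nat.factorial j : ℂ)‖) :=
    Summable.of_nonneg_of_le (fun j => norm_nonneg _) hterm hsR.summable
  have hC := Summable.sum_add_tsum_compl (s := Finset.range n) hsC.summable
  have hRe := Summable.sum_add_tsum_compl (s := Finset.range n) hsR.summable
  rw [hsC.tsum_eq] at hC
  rw [hsR.tsum_eq] at hRe
  rw [← eq_sub_of_add_eq' hC, ← eq_sub_of_add_eq' hRe]
  refine le_trans (norm_tsum_le_tsum_norm (hnormsum.subtype _)) ?_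
  exact Summable.tsum_le_tsum (fun j => hterm j) (hnormsum.subtype _) (hsR.summable.subtype _)

lemma statement3_tendsto_exp_partial {n : ℕ → ℕ} (hn : Tendsto n atTop atTop)
    {w : ℕ → ℂ} {w₀ : ℂ} (hw : Tendsto w atTop (nhds w₀)) :
    Tendsto (fun k => ∑ j ∈ Finset.range (n k + 1), w k ^ j / (Nat.factorial j : ℂ))
      atTop (nhds (Complex.exp w₀)) := by
  set R : ℝ := ‖w₀‖ + 1 with hRdef
  have hwk : ∀ᶠ k in atTop, ‖w k‖ ≤ R :=
    (hw.norm.eventually (eventually_lt_nhds (lt_add_one ‖w₀‖))).mono fun k hk => hk.le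
  have hsR : HasSum (fun j : ℕ => R ^ j / (Nat.factorial j : ℝ)) (Real.exp R) := by
    rw [Real.exp_eq_exp_ℝ]
    exact NormedSpace.expSeries_div_hasSum_exp R
  have hRpart : Tendsto (fun k => ∑ j ∈ Finset.range (n k + 1), R ^ j / (Nat.factorial j : ℝ))
      atTop (nhds (Real.exp R)) := by
    have h1 : Tendsto (fun m => ∑ j ∈ Finset.range m, R ^ j / (Nat.factorial j : ℝ))
        atTop (nhds (Real.exp R)) := hsR.tendsto_sum_nat
    exact h1.comp (tendsto_atTop_mono (fun k => Nat.le_succ (n k)) hn)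
  have hexp : Tendsto (fun k => Complex.exp (w k)) atTop (nhds (Complex.exp w₀)) :=
    (Complex.continuous_exp.tendsto w₀).comp hw
  rw [tendsto_iff_norm_sub_tendsto_zero]
  have hg : Tendsto (fun k => (Real.exp R - ∑ j ∈ Finset.range (n k + 1),
      R ^ j / (Nat.factorial j : ℝ)) + ‖Complex.exp (w k) - Complex.exp w₀‖) atTop (nhds 0) := by
    have h1 : Tendsto (fun k => Real.exp R - ∑ j ∈ Finset.range (n k + 1),
        R ^ j / (Nat.factorial j : ℝ)) atTop (nhds 0) := by
      have := (tendsto_const_nhds (x := Real.exp R) (f := atTop (α := ℕ))).sub hRpart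
      simpa using this
    have h2 := tendsto_iff_norm_sub_tendsto_zero.1 hexp
    simpa using h1.add h2
  refine squeeze_zero' (Eventually.of_forall fun k => norm_nonneg _) ?_ hg
  filter_upwards [hwk] with k hk
  have htri : ‖(∑ j ∈ Finset.range (n k + 1), w k ^ j / (Nat.factorial j : ℂ)) - Complex.exp w₀‖
      ≤ ‖(∑ j ∈ Finset.range (n k + 1), w k ^ j / (Nat.factorial j : ℂ)) - Complex.exp (w k)‖
        + ‖Complex.exp (w k) - Complex.exp w₀‖ := norm_sub_le_norm_sub_add_norm_sub _ _ _
  refine htri.trans ?_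
  gcongr
  rw [norm_sub_rev]
  exact statement3_exp_tail_bound hk (n k + 1)


lemma statement3_tendsto_kdiag {n : ℕ → ℕ} (hn : Tendsto n atTop atTop)
    {l : ℕ → ℂ} {l₀ : ℂ} (hl : Tendsto l atTop (nhds l₀)) :
    Tendsto (fun k => kdiag (n k) (l k)) atTop
      (nhds (Real.exp (Real.pi * ‖l₀‖ ^ 2))) := by
  have habs : Tendsto (fun k => (Real.pi * ‖l k‖ ^ 2 : ℝ)) atTop
      (nhds (Real.pi * ‖l₀‖ ^ 2)) := by
    have h1 : Tendsto (fun k => ‖l k‖) atTop (nhds (‖l₀‖)) :=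
      (continuous_norm.tendsto l₀).comp hl
    exact (h1.pow 2).const_mul Real.pi
  have hw : Tendsto (fun k => ((Real.pi * ‖l k‖ ^ 2 : ℝ) : ℂ)) atTop
      (nhds ((Real.pi * ‖l₀‖ ^ 2 : ℝ) : ℂ)) :=
    (Complex.continuous_ofReal.tendsto _).comp habs
  have key := statement3_tendsto_exp_partial hn hw
  have heq : ∀ k, ((kdiag (n k) (l k) : ℝ) : ℂ)
      = ∑ j ∈ Finset.range (n k + 1), ((Real.pi * ‖l k‖ ^ 2 : ℝ) : ℂ) ^ j
          / (Nat.factorial j : ℂ) := by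
    intro k
    rw [kdiag]
    push_cast
    rfl
  have key2 : Tendsto (fun k => ((kdiag (n k) (l k) : ℝ) : ℂ)) atTop
      (nhds (Complex.exp ((Real.pi * ‖l₀‖ ^ 2 : ℝ) : ℂ))) :=
    key.congr fun k => (heq k).symm
  have h3 := (Complex.continuous_re.tendsto _).comp key2
  simp only [Function.comp_def, Complex.ofReal_re] at h3
  rwa [Complex.exp_ofReal_re] at h3

lemma statement3_tendsto_polyKernelNorm {n : ℕ → ℕ} (hn : Tendsto n atTop atTop)
    {l : ℕ → ℂ} {l₀ : ℂ} (hl : Tendsto l atTop (nhds l₀)) (z : ℂ) :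
    Tendsto (fun k => polyKernelNorm (n k) (l k) z) atTop (nhds (fockKernelNorm l₀ z)) := by
  have hconj : Tendsto (fun k => (starRingEnd ℂ) (l k)) atTop (nhds ((starRingEnd ℂ) l₀)) :=
    ((RCLike.continuous_conj (K := ℂ)).tendsto l₀).comp hl
  have hnum : Tendsto (fun k => ∑ j ∈ Finset.range (n k + 1),
      ((Real.pi : ℂ) * z * (starRingEnd ℂ) (l k)) ^ j / (Nat.factorial j : ℂ)) atTop
      (nhds (Complex.exp ((Real.pi : ℂ) * z * (starRingEnd ℂ) l₀))) :=
    statement3_tendsto_exp_partial hn (hconj.const_mul ((Real.pi : ℂ) * z))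
  have hden : Tendsto (fun k => ((Real.sqrt (kdiag (n k) (l k)) : ℝ) : ℂ)) atTop
      (nhds ((Real.exp (Real.pi * ‖l₀‖ ^ 2 / 2) : ℝ) : ℂ)) := by
    have h2 : Tendsto (fun k => Real.sqrt (kdiag (n k) (l k))) atTop
        (nhds (Real.sqrt (Real.exp (Real.pi * ‖l₀‖ ^ 2)))) :=
      (Real.continuous_sqrt.tendsto _).comp (statement3_tendsto_kdiag hn hl)
    rw [← Real.exp_half] at h2
    exact (Complex.continuous_ofReal.tendsto _).comp h2
  have hne : ((Real.exp (Real.pi * ‖l₀‖ ^ 2 / 2) : ℝ) : ℂ) ≠ 0 := by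
    simpa using (Real.exp_pos (Real.pi * ‖l₀‖ ^ 2 / 2)).ne'
  have hval : fockKernelNorm l₀ z
      = Complex.exp ((Real.pi : ℂ) * z * (starRingEnd ℂ) l₀)
        / ((Real.exp (Real.pi * ‖l₀‖ ^ 2 / 2) : ℝ) : ℂ) := by
    rw [fockKernelNorm, Complex.exp_sub, Complex.ofReal_exp]
  rw [hval]
  simp only [polyKernelNorm]
  exact hnum.div hden hne

lemma statement3_polyKernelNorm_abs_le (n : ℕ) (l z : ℂ) :
    ‖polyKernelNorm n l z‖ ≤ Real.exp (Real.pi * ‖z‖ * ‖l‖) := by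
  have hk1 : (1 : ℝ) ≤ kdiag n l := by
    rw [kdiag]
    have h0 : ((Real.pi * ‖l‖ ^ 2) ^ 0 / (Nat.factorial 0 : ℝ)) = 1 := by norm_num
    calc (1 : ℝ) = (Real.pi * ‖l‖ ^ 2) ^ 0 / (Nat.factorial 0 : ℝ) := h0.symm
      _ ≤ ∑ k ∈ Finset.range (n + 1), (Real.pi * ‖l‖ ^ 2) ^ k / (Nat.factorial k : ℝ) := by
          refine Finset.single_le_sum (f := fun k => (Real.pi * ‖l‖ ^ 2) ^ k / (Nat.factorial k : ℝ)) (fun j _ => ?_) (Finset.mem_range.2 (Nat.succ_pos n))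
          have := Real.pi_pos
          positivity
  have hsq : (1 : ℝ) ≤ Real.sqrt (kdiag n l) := by
    have := Real.sqrt_le_sqrt hk1
    simpa using this
  rw [polyKernelNorm, norm_div]
  have habs : ‖((Real.sqrt (kdiag n l) : ℝ) : ℂ)‖ = Real.sqrt (kdiag n l) := by
    rw [Complex.norm_of_nonneg (Real.sqrt_nonneg _)]
  rw [habs]
  have hnum : ‖∑ j ∈ Finset.range (n + 1),
      ((Real.pi : ℂ) * z * (starRingEnd ℂ) l) ^ j / (Nat.factorial j : ℂ)‖
      ≤ Real.exp (Real.pi * ‖z‖ * ‖l‖) := by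
    have h1 : ‖∑ j ∈ Finset.range (n + 1),
        ((Real.pi : ℂ) * z * (starRingEnd ℂ) l) ^ j / (Nat.factorial j : ℂ)‖
        ≤ ∑ j ∈ Finset.range (n + 1),
          ‖((Real.pi : ℂ) * z * (starRingEnd ℂ) l) ^ j / (Nat.factorial j : ℂ)‖ := by
      simpa using norm_sum_le (Finset.range (n + 1))
        (fun j => ((Real.pi : ℂ) * z * (starRingEnd ℂ) l) ^ j / (Nat.factorial j : ℂ))
    refine le_trans h1 ?_
    have hterm : ∀ j ∈ Finset.range (n + 1),
        ‖((Real.pi : ℂ) * z * (starRingEnd ℂ) l) ^ j / (Nat.factorial j : ℂ)‖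
          = (Real.pi * ‖z‖ * ‖l‖) ^ j / (Nat.factorial j : ℝ) := by
      intro j _
      rw [norm_div, norm_pow, norm_mul, norm_mul,
        Complex.norm_of_nonneg Real.pi_pos.le, Complex.norm_conj, Complex.norm_natCast]
    rw [Finset.sum_congr rfl hterm]
    exact Real.sum_le_exp_of_nonneg (by positivity) (n + 1)
  calc ‖∑ j ∈ Finset.range (n + 1),
        ((Real.pi : ℂ) * z * (starRingEnd ℂ) l) ^ j / (Nat.factorial j : ℂ)‖
        / Real.sqrt (kdiag n l)
      ≤ ‖∑ j ∈ Finset.range (n + 1),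
        ((Real.pi : ℂ) * z * (starRingEnd ℂ) l) ^ j / (Nat.factorial j : ℂ)‖ :=
        div_le_self (norm_nonneg _) hsq
    _ ≤ _ := hnum


lemma statement3_integrable_gauss {b : ℝ} (hb : 0 < b) :
    Integrable (fun z : ℂ => Real.exp (-b * ‖z‖ ^ 2)) := by
  have h1 : Integrable (fun p : ℝ × ℝ => Real.exp (-b * p.1 ^ 2) * Real.exp (-b * p.2 ^ 2)) :=
    (integrable_exp_neg_mul_sq hb).mul_prod (integrable_exp_neg_mul_sq hb)
  have h2 := (Complex.volume_preserving_equiv_real_prod.integrable_comp_emb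
    Complex.measurableEquivRealProd.measurableEmbedding).2 h1
  refine h2.congr ?_
  filter_upwards with z
  simp only [Function.comp_apply, Complex.measurableEquivRealProd_apply]
  rw [← Real.exp_add, Complex.sq_norm, Complex.normSq_apply]
  ring_nf

lemma statement3_integrable_explin (c : ℝ) :
    Integrable (fun z : ℂ => Real.exp (c * ‖z‖ - Real.pi * ‖z‖ ^ 2)) := by
  have hπ := Real.pi_pos
  have hbound : ∀ z : ℂ, Real.exp (c * ‖z‖ - Real.pi * ‖z‖ ^ 2)
      ≤ Real.exp (c ^ 2 / (2 * Real.pi)) * Real.exp (-(Real.pi / 2) * ‖z‖ ^ 2) := by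
    intro z
    rw [← Real.exp_add]
    apply Real.exp_le_exp.2
    have h := sq_nonneg (Real.pi * ‖z‖ - c)
    have hc : c ^ 2 / (2 * Real.pi) * (2 * Real.pi) = c ^ 2 :=
      div_mul_cancel₀ _ (by positivity)
    nlinarith [norm_nonneg z, hπ, hc, h]
  have hint : Integrable (fun z : ℂ =>
      Real.exp (c ^ 2 / (2 * Real.pi)) * Real.exp (-(Real.pi / 2) * ‖z‖ ^ 2)) :=
    (statement3_integrable_gauss (by positivity)).const_mul _
  refine hint.mono' ?_ ?_
  · apply Continuous.aestronglyMeasurable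
    have : Continuous fun z : ℂ => c * ‖z‖ - Real.pi * ‖z‖ ^ 2 := by
      continuity
    exact Real.continuous_exp.comp this
  · filter_upwards with z
    rw [Real.norm_eq_abs, abs_of_nonneg (Real.exp_pos _).le]
    exact hbound z

lemma statement3_continuous_polyKernelNorm (n : ℕ) (l : ℂ) :
    Continuous (fun z => polyKernelNorm n l z) := by
  simp only [polyKernelNorm]
  apply Continuous.div_const
  apply continuous_finset_sum
  intro j _
  exact (((continuous_const.mul continuous_id').mul continuous_const).pow j).div_const _

/-- If (Λ_n) is a uniform interpolating family for the polynomials of degree ≤ n in F²,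
and Λ ⊆ ℂ is a weak limit of (Λ_n) or of some subsequence, then Λ is a set of
interpolation for F². -/
theorem statement3 (Λseq : ℕ → Finset ℂ) (A B : ℝ) (hA : 0 < A) (hB : 0 < B) (n₀ : ℕ)
    (hunif : ∀ n : ℕ, n₀ ≤ n → ∀ a : ℂ → ℂ,
      A * ∑ l ∈ Λseq n, ‖a l‖ ^ 2 ≤
          fockNorm2 (fun z => ∑ l ∈ Λseq n, a l * polyKernelNorm n l z) ∧
      fockNorm2 (fun z => ∑ l ∈ Λseq n, a l * polyKernelNorm n l z) ≤
          B * ∑ l ∈ Λseq n, ‖a l‖ ^ 2)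
    (Λ : Set ℂ)
    (hweak : ∃ φ : ℕ → ℕ, StrictMono φ ∧ ∀ (c : ℂ) (r : ℝ), 0 < r →
      Tendsto (fun k : ℕ => Metric.hausdorffDist
          (((Λseq (φ k) : Set ℂ) ∩ Metric.closedBall c r) ∪ Metric.sphere c r)
          ((Λ ∩ Metric.closedBall c r) ∪ Metric.sphere c r))
        atTop (nhds 0)) :
    ∃ A' B' : ℝ, 0 < A' ∧ 0 < B' ∧ ∀ a : ℂ →₀ ℂ, (a.support : Set ℂ) ⊆ Λ →
      A' * ∑ l ∈ a.support, ‖a l‖ ^ 2 ≤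
          fockNorm2 (fun z => ∑ l ∈ a.support, a l * fockKernelNorm l z) ∧
      fockNorm2 (fun z => ∑ l ∈ a.support, a l * fockKernelNorm l z) ≤
          B' * ∑ l ∈ a.support, ‖a l‖ ^ 2 := by
  classical
  obtain ⟨φ, hφ, hconv⟩ := hweak
  -- Approximation of points of Λ by points of Λseq (φ k)
  have hμ : ∀ l₀ : ℂ, l₀ ∈ Λ → ∃ μ : ℕ → ℂ,
      Tendsto μ atTop (nhds l₀) ∧ ∀ᶠ k in atTop, μ k ∈ Λseq (φ k) := by
    intro l₀ hl₀
    set r : ℝ := ‖l₀‖ + 1 with hrdef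
    have hr : 0 < r := by positivity
    have hkey : ∀ ε : ℝ, 0 < ε → ∀ᶠ k in atTop, ∃ y ∈ Λseq (φ k), dist l₀ y < min ε 1 := by
      intro ε hε
      have hε1 : (0:ℝ) < min ε 1 := lt_min hε one_pos
      filter_upwards [(hconv 0 r hr).eventually (eventually_lt_nhds hε1)] with k hk
      have hsphne : (Metric.sphere (0:ℂ) r).Nonempty := NormedSpace.sphere_nonempty.2 hr.le
      have hT1ne : (((Λseq (φ k) : Set ℂ) ∩ Metric.closedBall 0 r) ∪
          Metric.sphere 0 r).Nonempty := hsphne.mono Set.subset_union_right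
      have hT2ne : ((Λ ∩ Metric.closedBall 0 r) ∪ Metric.sphere 0 r).Nonempty :=
        hsphne.mono Set.subset_union_right
      have hb1 : Bornology.IsBounded (((Λseq (φ k) : Set ℂ) ∩ Metric.closedBall 0 r) ∪
          Metric.sphere 0 r) :=
        Metric.isBounded_closedBall.subset
          (Set.union_subset Set.inter_subset_right Metric.sphere_subset_closedBall)
      have hb2 : Bornology.IsBounded ((Λ ∩ Metric.closedBall 0 r) ∪ Metric.sphere 0 r) :=
        Metric.isBounded_closedBall.subset
          (Set.union_subset Set.inter_subset_right Metric.sphere_subset_closedBall)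
      have hfin : EMetric.hausdorffEdist ((Λ ∩ Metric.closedBall 0 r) ∪ Metric.sphere 0 r)
          (((Λseq (φ k) : Set ℂ) ∩ Metric.closedBall 0 r) ∪ Metric.sphere 0 r) ≠ ⊤ :=
        Metric.hausdorffEdist_ne_top_of_nonempty_of_bounded hT2ne hT1ne hb2 hb1
      have hl₀T2 : l₀ ∈ (Λ ∩ Metric.closedBall 0 r) ∪ Metric.sphere 0 r := by
        left
        refine ⟨hl₀, ?_⟩
        rw [Metric.mem_closedBall, dist_zero_right]
        linarith
      have hinf : Metric.infDist l₀ (((Λseq (φ k) : Set ℂ) ∩ Metric.closedBall 0 r) ∪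
          Metric.sphere 0 r) < min ε 1 := by
        refine lt_of_le_of_lt ?_ hk
        rw [Metric.hausdorffDist_comm]
        exact Metric.infDist_le_hausdorffDist_of_mem hl₀T2 hfin
      obtain ⟨y, hyT1, hy⟩ := (Metric.infDist_lt_iff hT1ne).1 hinf
      rcases hyT1 with hy1 | hy2
      · exact ⟨y, hy1.1, hy⟩
      · exfalso
        have h1 : dist y 0 = r := by simpa using hy2
        have h2 : dist y 0 ≤ dist y l₀ + dist l₀ 0 := dist_triangle _ _ _
        have h3 : dist l₀ 0 = ‖l₀‖ := by
          rw [dist_zero_right]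
        have h4 : dist l₀ y < 1 := hy.trans_le (min_le_right _ _)
        rw [dist_comm] at h4
        rw [hrdef] at h1
        linarith
    have hne : ∀ᶠ k in atTop, (Λseq (φ k)).Nonempty := by
      filter_upwards [hkey 1 one_pos] with k hk
      obtain ⟨y, hy, _⟩ := hk
      exact ⟨y, hy⟩
    refine ⟨fun k => if h : (Λseq (φ k)).Nonempty then
      ((Λseq (φ k)).exists_min_image (fun y => dist l₀ y) h).choose else l₀, ?_, ?_⟩
    · rw [Metric.tendsto_atTop]
      intro ε hε
      obtain ⟨N, hN⟩ := eventually_atTop.1 (hkey ε hε)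
      refine ⟨N, fun k hk => ?_⟩
      obtain ⟨y, hymem, hydist⟩ := hN k hk
      have hnonempty : (Λseq (φ k)).Nonempty := ⟨y, hymem⟩
      rw [dif_pos hnonempty]
      obtain ⟨hmem, hmin⟩ :=
        ((Λseq (φ k)).exists_min_image (fun y => dist l₀ y) hnonempty).choose_spec
      rw [dist_comm]
      exact lt_of_le_of_lt (hmin y hymem) (hydist.trans_le (min_le_left _ _))
    · filter_upwards [hne] with k hk
      rw [dif_pos hk]
      exact ((Λseq (φ k)).exists_min_image (fun y => dist l₀ y) hk).choose_spec.1
  choose! μ hμtend hμmem using hμ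
  refine ⟨A, B, hA, hB, ?_⟩
  intro a ha
  by_cases hs : a.support.Nonempty
  swap
  · rw [Finset.not_nonempty_iff_eq_empty.1 hs]
    simp [fockNorm2]
  -- separation constant
  obtain ⟨d, hd0, hdle⟩ : ∃ d : ℝ, 0 < d ∧
      ∀ x ∈ a.support, ∀ y ∈ a.support, x ≠ y → d ≤ dist x y := by
    by_cases hoff : ((a.support ×ˢ a.support).filter fun p => p.1 ≠ p.2).Nonempty
    · obtain ⟨p, hp, hmin⟩ := Finset.exists_min_image _ (fun p => dist p.1 p.2) hoff
      have hpne : p.1 ≠ p.2 := (Finset.mem_filter.1 hp).2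
      refine ⟨dist p.1 p.2, dist_pos.2 hpne, fun x hx y hy hxy => ?_⟩
      exact hmin (x, y) (Finset.mem_filter.2 ⟨Finset.mem_product.2 ⟨hx, hy⟩, hxy⟩)
    · refine ⟨1, one_pos, fun x hx y hy hxy => absurd ?_ hoff⟩
      exact ⟨(x, y), Finset.mem_filter.2 ⟨Finset.mem_product.2 ⟨hx, hy⟩, hxy⟩⟩
  have hδ0 : (0:ℝ) < min (d / 2) 1 := lt_min (by linarith) one_pos
  -- eventual goodness
  have hgood : ∀ᶠ k in atTop, n₀ ≤ φ k ∧
      ∀ x ∈ a.support, μ x k ∈ Λseq (φ k) ∧ dist x (μ x k) < min (d / 2) 1 := by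
    have h1 : ∀ᶠ k in atTop, n₀ ≤ φ k := by
      refine eventually_atTop.2 ⟨n₀, fun k hk => hk.trans hφ.le_apply⟩
    have h2 : ∀ᶠ k in atTop, ∀ x ∈ a.support,
        μ x k ∈ Λseq (φ k) ∧ dist x (μ x k) < min (d / 2) 1 := by
      rw [eventually_all_finset]
      intro x hx
      have hxΛ : x ∈ Λ := ha hx
      have hm := hμmem x hxΛ
      have ht : ∀ᶠ k in atTop, dist x (μ x k) < min (d / 2) 1 := by
        have := (hμtend x hxΛ).eventually (Metric.ball_mem_nhds x hδ0)
        filter_upwards [this] with k hk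
        rw [dist_comm]
        exact hk
      filter_upwards [hm, ht] with k hk1 hk2
      exact ⟨hk1, hk2⟩
    filter_upwards [h1, h2] with k hk1 hk2
    exact ⟨hk1, hk2⟩
  obtain ⟨K, hK⟩ := eventually_atTop.1 hgood
  set S : ℝ := ∑ l ∈ a.support, ‖a l‖ ^ 2 with hSdef
  set Ffun : ℕ → ℂ → ℂ := fun j z => ∑ x ∈ a.support,
    a x * polyKernelNorm (φ (j + K)) (μ x (j + K)) z with hFdef
  -- the uniform bounds hold for each j
  have hbounds : ∀ j : ℕ, A * S ≤ fockNorm2 (Ffun j) ∧ fockNorm2 (Ffun j) ≤ B * S := by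
    intro j
    obtain ⟨hn₀, hmd⟩ := hK (j + K) (Nat.le_add_left K j)
    have hinj : ∀ x ∈ a.support, ∀ y ∈ a.support, μ x (j + K) = μ y (j + K) → x = y := by
      intro x hx y hy hxy
      by_contra hne
      have h1 := (hmd x hx).2
      have h2 := (hmd y hy).2
      have h3 : d ≤ dist x y := hdle x hx y hy hne
      rw [hxy] at h1
      have h4 : dist x y ≤ dist x (μ y (j + K)) + dist (μ y (j + K)) y := dist_triangle _ _ _
      have h6 : dist (μ y (j + K)) y = dist y (μ y (j + K)) := dist_comm _ _
      have h5 : min (d / 2) 1 ≤ d / 2 := min_le_left _ _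
      linarith
    have hmaps : ∀ x ∈ a.support, μ x (j + K) ∈ Λseq (φ (j + K)) := fun x hx => (hmd x hx).1
    set ν : ℂ → ℂ := fun l => ∑ x ∈ a.support.filter (fun x => μ x (j + K) = l), a x with hν
    have hfib : ∀ l, (a.support.filter (fun x => μ x (j + K) = l)).Nonempty →
        ∃ x₀, a.support.filter (fun x => μ x (j + K) = l) = {x₀} := by
      intro l hf
      obtain ⟨x₀, hx₀⟩ := hf
      refine ⟨x₀, Finset.eq_singleton_iff_unique_mem.2 ⟨hx₀, fun y hy => ?_⟩⟩
      have h1 := Finset.mem_filter.1 hx₀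
      have h2 := Finset.mem_filter.1 hy
      exact hinj y h2.1 x₀ h1.1 (h2.2.trans h1.2.symm)
    have hsum1 : ∑ l ∈ Λseq (φ (j + K)), ‖ν l‖ ^ 2 = S := by
      have hcongr : ∀ l ∈ Λseq (φ (j + K)), ‖ν l‖ ^ 2
          = ∑ x ∈ a.support.filter (fun x => μ x (j + K) = l), ‖a x‖ ^ 2 := by
        intro l _
        by_cases hf : (a.support.filter (fun x => μ x (j + K) = l)).Nonempty
        · obtain ⟨x₀, hx₀⟩ := hfib l hf
          simp only [hν, hx₀, Finset.sum_singleton]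
        · rw [Finset.not_nonempty_iff_eq_empty.1 hf]
          simp [hν, Finset.not_nonempty_iff_eq_empty.1 hf]
      rw [Finset.sum_congr rfl hcongr, Finset.sum_fiberwise_of_maps_to hmaps]
    have hsum2 : (fun z => ∑ l ∈ Λseq (φ (j + K)), ν l * polyKernelNorm (φ (j + K)) l z)
        = Ffun j := by
      funext z
      have hcongr : ∀ l ∈ Λseq (φ (j + K)), ν l * polyKernelNorm (φ (j + K)) l z
          = ∑ x ∈ a.support.filter (fun x => μ x (j + K) = l),
              a x * polyKernelNorm (φ (j + K)) (μ x (j + K)) z := by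
        intro l _
        simp only [hν, Finset.sum_mul]
        refine Finset.sum_congr rfl fun x hx => ?_
        rw [(Finset.mem_filter.1 hx).2]
      rw [Finset.sum_congr rfl hcongr, Finset.sum_fiberwise_of_maps_to hmaps]
    have hres := hunif (φ (j + K)) hn₀ ν
    rw [hsum1, hsum2] at hres
    exact hres
  -- limit of the Fock norms
  set C : ℝ := 1 + a.support.sup' hs (fun x => ‖x‖) with hCdef
  have hCbd : ∀ j : ℕ, ∀ x ∈ a.support, ‖μ x (j + K)‖ ≤ C := by
    intro j x hx
    obtain ⟨_, hmd⟩ := hK (j + K) (Nat.le_add_left K j)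
    have h1 : dist x (μ x (j + K)) < min (d / 2) 1 := (hmd x hx).2
    have h2 : min (d / 2) 1 ≤ 1 := min_le_right _ _
    have h3 : dist (μ x (j + K)) 0 ≤ dist (μ x (j + K)) x + dist x 0 := dist_triangle _ _ _
    rw [dist_comm (μ x (j + K)) x] at h3
    have h4 : ‖x‖ ≤ a.support.sup' hs (fun x => ‖x‖) :=
      Finset.le_sup' _ hx
    have h5 : dist (μ x (j + K)) 0 = ‖μ x (j + K)‖ := by
      rw [dist_zero_right]
    have h6 : dist x 0 = ‖x‖ := by
      rw [dist_zero_right]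
    rw [hCdef]
    linarith
  have hC0 : 0 ≤ C := by
    have := (norm_nonneg (hs.choose))
    have h4 : ‖hs.choose‖ ≤ a.support.sup' hs (fun x => ‖x‖) :=
      Finset.le_sup' _ hs.choose_spec
    rw [hCdef]; linarith
  set M : ℝ := ∑ x ∈ a.support, ‖a x‖ with hMdef
  have hM0 : 0 ≤ M := Finset.sum_nonneg fun x _ => norm_nonneg _
  have htendI : Tendsto (fun j => fockNorm2 (Ffun j)) atTop
      (nhds (fockNorm2 (fun z => ∑ l ∈ a.support, a l * fockKernelNorm l z))) := by
    simp only [fockNorm2]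
    apply tendsto_integral_of_dominated_convergence
      (bound := fun z : ℂ => M ^ 2 *
        Real.exp (2 * (Real.pi * C) * ‖z‖ - Real.pi * ‖z‖ ^ 2))
    · intro j
      apply Continuous.aestronglyMeasurable
      have hFc : Continuous (Ffun j) := by
        simp only [hFdef]
        exact continuous_finset_sum _ fun x _ =>
          continuous_const.mul (statement3_continuous_polyKernelNorm _ _)
      have h1 : Continuous fun z : ℂ => ‖Ffun j z‖ ^ 2 :=
        (continuous_norm.comp hFc).pow 2
      have h2 : Continuous fun z : ℂ => Real.exp (-Real.pi * ‖z‖ ^ 2) :=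
        Real.continuous_exp.comp (continuous_const.mul (continuous_norm.pow 2))
      exact h1.mul h2
    · exact (statement3_integrable_explin (2 * (Real.pi * C))).const_mul _
    · intro j
      filter_upwards with z
      have h1 : ‖Ffun j z‖ ≤ M * Real.exp (Real.pi * ‖z‖ * C) := by
        have htri : ‖Ffun j z‖ ≤ ∑ x ∈ a.support,
            ‖a x * polyKernelNorm (φ (j + K)) (μ x (j + K)) z‖ := by
          simp only [hFdef]
          simpa using norm_sum_le a.support
            (fun x => a x * polyKernelNorm (φ (j + K)) (μ x (j + K)) z)
        refine htri.trans ?_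
        rw [hMdef, Finset.sum_mul]
        refine Finset.sum_le_sum fun x hx => ?_
        rw [norm_mul]
        refine mul_le_mul_of_nonneg_left ?_ (norm_nonneg _)
        refine (statement3_polyKernelNorm_abs_le _ _ _).trans ?_
        apply Real.exp_le_exp.2
        have h7 : ‖μ x (j + K)‖ ≤ C := hCbd j x hx
        have h8 : (0:ℝ) ≤ Real.pi * ‖z‖ := by positivity
        exact mul_le_mul_of_nonneg_left h7 h8
      have hnn : (0:ℝ) ≤ ‖Ffun j z‖ ^ 2 *
          Real.exp (-Real.pi * ‖z‖ ^ 2) := by positivity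
      rw [Real.norm_eq_abs, abs_of_nonneg hnn]
      have h2 : ‖Ffun j z‖ ^ 2 ≤ (M * Real.exp (Real.pi * ‖z‖ * C)) ^ 2 :=
        pow_le_pow_left₀ (norm_nonneg _) h1 2
      calc ‖Ffun j z‖ ^ 2 * Real.exp (-Real.pi * ‖z‖ ^ 2)
          ≤ (M * Real.exp (Real.pi * ‖z‖ * C)) ^ 2 *
            Real.exp (-Real.pi * ‖z‖ ^ 2) := by
            exact mul_le_mul_of_nonneg_right h2 (Real.exp_pos _).le
        _ = M ^ 2 * Real.exp (2 * (Real.pi * C) * ‖z‖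
              - Real.pi * ‖z‖ ^ 2) := by
            rw [mul_pow, sq (Real.exp (Real.pi * ‖z‖ * C)), ← Real.exp_add,
              mul_assoc, ← Real.exp_add]
            congr 2
            ring
    · filter_upwards with z
      have hn' : Tendsto (fun j : ℕ => φ (j + K)) atTop atTop :=
        hφ.tendsto_atTop.comp (tendsto_add_atTop_nat K)
      have hF : Tendsto (fun j => Ffun j z) atTop
          (nhds (∑ l ∈ a.support, a l * fockKernelNorm l z)) := by
        simp only [hFdef]
        refine tendsto_finset_sum _ fun x hx => ?_
        have hlx : Tendsto (fun j : ℕ => μ x (j + K)) atTop (nhds x) :=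
          (hμtend x (ha hx)).comp (tendsto_add_atTop_nat K)
        exact (statement3_tendsto_polyKernelNorm hn' hlx z).const_mul (a x)
      exact (((continuous_norm.tendsto _).comp hF).pow 2).mul_const _
  constructor
  · exact ge_of_tendsto htendI (Eventually.of_forall fun j => (hbounds j).1)
  · exact le_of_tendsto htendI (Eventually.of_forall fun j => (hbounds j).2)
end

section
/- For every τ > 0 there exist a constant C(τ) > 0 and n₀ ∈ ℕ such that Γ(n+1, n+√n·τ)/n! ≥ C(τ) for all n ≥ n₀, i.e., (1/n!)∫_{n+√n·τ}^∞ t^n e^{−t} dt ≥ C(τ). -/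
open MeasureTheory

private theorem log_lb' (x : ℝ) (hx : 0 ≤ x) : x - x^2 ≤ Real.log (1 + x) := by
  have hp : (0:ℝ) < 1 + x := by linarith
  have h := Real.log_le_sub_one_of_pos (show (0:ℝ) < 1/(1+x) by positivity)
  rw [Real.log_div one_ne_zero (ne_of_gt hp), Real.log_one] at h
  have h2 : (1:ℝ)/(1+x) - 1 = -(x/(1+x)) := by field_simp; ring
  have h3 : x - x^2 ≤ x/(1+x) := by
    rw [le_div_iff₀ hp]; nlinarith [pow_nonneg hx 3]
  linarith

private theorem mono_lem' (n : ℕ) (x y : ℝ) (hx : (n:ℝ) ≤ x) (hx0 : 0 < x) (hxy : x ≤ y) :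
    y ^ n * Real.exp (-y) ≤ x ^ n * Real.exp (-x) := by
  have hy0 : 0 < y := lt_of_lt_of_le hx0 hxy
  have h1 : y / x ≤ Real.exp ((y - x)/x) := by
    have h0 : (y-x)/x + 1 = y/x := by field_simp; ring
    linarith [Real.add_one_le_exp ((y-x)/x)]
  have h2 : (y/x)^n ≤ Real.exp ((y-x)/x) ^ n :=
    pow_le_pow_left₀ (by positivity) h1 n
  have h3 : Real.exp ((y-x)/x) ^ n = Real.exp ((n:ℝ) * ((y-x)/x)) := by
    rw [← Real.exp_nat_mul]
  have h4 : (n:ℝ) * ((y-x)/x) ≤ y - x := by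
    rw [mul_div_assoc', div_le_iff₀ hx0]
    nlinarith
  have h5 : (y/x)^n ≤ Real.exp (y - x) := by
    calc (y/x)^n ≤ Real.exp ((n:ℝ) * ((y-x)/x)) := by rw [← h3]; exact h2
    _ ≤ Real.exp (y-x) := Real.exp_le_exp.mpr h4
  rw [div_pow, div_le_iff₀ (by positivity : (0:ℝ) < x^n)] at h5
  have he := Real.exp_pos (-y)
  calc y^n * Real.exp (-y) ≤ (Real.exp (y-x) * x^n) * Real.exp (-y) :=
        mul_le_mul_of_nonneg_right h5 (le_of_lt he)
    _ = x^n * Real.exp (-x) := by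
        rw [Real.exp_sub, Real.exp_neg x, Real.exp_neg y]; field_simp

private theorem int_lem' (n : ℕ) :
    IntegrableOn (fun t : ℝ => t ^ n * Real.exp (-t)) (Set.Ioi (0:ℝ)) := by
  have h := Real.GammaIntegral_convergent (s := (n:ℝ)+1) (by positivity)
  refine h.congr_fun ?_ measurableSet_Ioi
  intro x hx
  simp only [Set.mem_Ioi] at hx
  simp only [add_sub_cancel_right, Real.rpow_natCast]
  ring

private theorem step1' (n : ℕ) (a b : ℝ) (ha0 : 0 < a) (hna : (n:ℝ) ≤ a) (hab : a ≤ b) :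
    (b - a) * (b ^ n * Real.exp (-b)) ≤
      ∫ t in Set.Ioi a, t ^ n * Real.exp (-t) := by
  set f : ℝ → ℝ := fun t : ℝ => t ^ n * Real.exp (-t) with hf
  have hint : IntegrableOn f (Set.Ioi a) :=
    (int_lem' n).mono_set (Set.Ioi_subset_Ioi ha0.le)
  have hnn : 0 ≤ᵐ[volume.restrict (Set.Ioi a)] f := by
    filter_upwards [ae_restrict_mem measurableSet_Ioi] with t ht
    have : 0 < t := lt_trans ha0 ht
    positivity
  have h2 : ∫ t in Set.Ioc a b, f t ≤ ∫ t in Set.Ioi a, f t :=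
    setIntegral_mono_set hint hnn (HasSubset.Subset.eventuallyLE Set.Ioc_subset_Ioi_self)
  refine le_trans ?_ h2
  have h1 : ∫ t in Set.Ioc a b, (b ^ n * Real.exp (-b)) ≤ ∫ t in Set.Ioc a b, f t := by
    refine setIntegral_mono_on ((integrableOn_const_iff).mpr ?_) (hint.mono_set Set.Ioc_subset_Ioi_self)
      measurableSet_Ioc ?_
    · right; rw [Real.volume_Ioc]; exact ENNReal.ofReal_lt_top
    · intro t ht
      exact mono_lem' n t b (le_trans hna ht.1.le) (lt_trans ha0 ht.1) ht.2
  refine le_trans (le_of_eq ?_) h1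
  rw [setIntegral_const, measureReal_def, Real.volume_Ioc, smul_eq_mul, ENNReal.toReal_ofReal (by linarith)]

private theorem fact_bound' (n : ℕ) (hn : 1 ≤ n) :
    (Nat.factorial n : ℝ) ≤ Real.exp 1 * Real.sqrt n * ((n:ℝ)/Real.exp 1)^n := by
  obtain ⟨m, rfl⟩ := Nat.exists_eq_add_of_le hn
  have h := Stirling.stirlingSeq'_antitone (Nat.zero_le m)
  simp only [Function.comp] at h
  have h1 : Stirling.stirlingSeq (1 + m) ≤ Real.exp 1 / Real.sqrt 2 := by
    simpa [Stirling.stirlingSeq_one, Nat.succ_eq_add_one, add_comm] using h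
  rw [Stirling.stirlingSeq] at h1
  push_cast at h1 ⊢
  set x : ℝ := 1 + (m:ℝ) with hx
  have hxp : (0:ℝ) < x := by positivity
  have hden : (0:ℝ) < Real.sqrt (2*x) * (x/Real.exp 1)^(1+m) := by positivity
  rw [div_le_iff₀ hden] at h1
  refine h1.trans (le_of_eq ?_)
  rw [Real.sqrt_mul (by norm_num : (0:ℝ) ≤ 2)]
  have hs2 : Real.sqrt 2 ≠ 0 := by positivity
  field_simp

/-- For every τ > 0 there exist a constant C(τ) > 0 and n₀ ∈ ℕ such that
Γ(n+1, n+√n·τ)/n! = (1/n!)∫_{n+√n·τ}^∞ tⁿ e^{−t} dt ≥ C(τ) for all n ≥ n₀. -/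
theorem statement9 (τ : ℝ) (hτ : 0 < τ) :
    ∃ C : ℝ, 0 < C ∧ ∃ n₀ : ℕ, ∀ n : ℕ, n₀ ≤ n →
      C ≤ (∫ t in Set.Ioi ((n : ℝ) + Real.sqrt n * τ), t ^ n * Real.exp (-t)) /
        (Nat.factorial n : ℝ) := by
  refine ⟨Real.exp (-(1 + (τ+1)^2)), Real.exp_pos _, 1, fun n hn => ?_⟩
  set s : ℝ := τ + 1 with hsdef
  have hs0 : 0 < s := by linarith
  have hn1 : (1:ℝ) ≤ (n:ℝ) := by exact_mod_cast hn
  have hn0 : (0:ℝ) < (n:ℝ) := by linarith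
  have hrt : 0 < Real.sqrt n := Real.sqrt_pos.mpr hn0
  have hrr : Real.sqrt n * Real.sqrt n = (n:ℝ) := Real.mul_self_sqrt hn0.le
  set a : ℝ := (n:ℝ) + Real.sqrt n * τ with hadef
  set b : ℝ := (n:ℝ) + Real.sqrt n * s with hbdef
  have ha0 : 0 < a := by have : 0 < Real.sqrt n * τ := by positivity
                         simp only [hadef]; linarith
  have hna : (n:ℝ) ≤ a := by have : 0 ≤ Real.sqrt n * τ := by positivity
                             simp only [hadef]; linarith
  have hab : a ≤ b := by
    simp only [hadef, hbdef, hsdef]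
    nlinarith
  have hba : b - a = Real.sqrt n := by
    simp only [hadef, hbdef, hsdef]; ring
  have hstep := step1' n a b ha0 hna hab
  -- key pointwise estimate
  set x : ℝ := s / Real.sqrt n with hxdef
  have hx0 : 0 ≤ x := by positivity
  have hb : b = (n:ℝ) * (1 + x) := by
    simp only [hbdef, hxdef]
    field_simp
    nlinarith
  have hnx : (n:ℝ) * x = Real.sqrt n * s := by
    simp only [hxdef]
    field_simp
    nlinarith
  have hnx2 : (n:ℝ) * x^2 = s^2 := by
    simp only [hxdef]
    field_simp
    rw [Real.sq_sqrt hn0.le]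
  have hexp1 : Real.exp (x - x^2) ≤ 1 + x := by
    rw [← Real.exp_log (show (0:ℝ) < 1 + x by linarith)]
    exact Real.exp_le_exp.mpr (log_lb' x hx0)
  have hpow : Real.exp ((n:ℝ) * (x - x^2)) ≤ (1+x)^n := by
    rw [Real.exp_nat_mul]
    exact pow_le_pow_left₀ (Real.exp_nonneg _) hexp1 n
  have heq : (n:ℝ) * (x - x^2) = Real.sqrt n * s - s^2 := by
    rw [mul_sub, hnx, hnx2]
  have hmain : (n:ℝ)^n * Real.exp (Real.sqrt n * s - s^2) ≤ b^n := by
    rw [hb, mul_pow, ← heq]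
    exact mul_le_mul_of_nonneg_left hpow (by positivity)
  have hebs : Real.exp (-b) = Real.exp (-(n:ℝ)) * Real.exp (-(Real.sqrt n * s)) := by
    rw [← Real.exp_add]; congr 1; simp only [hbdef]; ring
  have claim : Real.exp (-s^2) * (n:ℝ)^n * Real.exp (-(n:ℝ)) ≤ b^n * Real.exp (-b) := by
    calc Real.exp (-s^2) * (n:ℝ)^n * Real.exp (-(n:ℝ))
        = ((n:ℝ)^n * Real.exp (Real.sqrt n * s - s^2)) *
            (Real.exp (-(n:ℝ)) * Real.exp (-(Real.sqrt n * s))) := by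
          rw [show Real.exp (-s^2)
              = Real.exp (Real.sqrt ↑n * s - s^2) * Real.exp (-(Real.sqrt ↑n * s)) by
            rw [← Real.exp_add]; congr 1; ring]
          ring
      _ ≤ b^n * (Real.exp (-(n:ℝ)) * Real.exp (-(Real.sqrt n * s))) :=
          mul_le_mul_of_nonneg_right hmain (by positivity)
      _ = b^n * Real.exp (-b) := by rw [hebs]
  -- assemble
  have hfp : (0:ℝ) < (Nat.factorial n : ℝ) := by exact_mod_cast Nat.factorial_pos n
  rw [le_div_iff₀ hfp]
  have hfact := fact_bound' n hn
  have e1 : Real.exp (-(1+s^2)) * Real.exp 1 = Real.exp (-s^2) := by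
    rw [← Real.exp_add]; congr 1; ring
  have e2 : ((n:ℝ)/Real.exp 1)^n = (n:ℝ)^n * Real.exp (-(n:ℝ)) := by
    have h3 : Real.exp 1 ^ n = Real.exp (n:ℝ) := by rw [← Real.exp_nat_mul, mul_one]
    rw [div_pow, h3, Real.exp_neg]
    ring
  calc Real.exp (-(1 + (τ+1)^2)) * (Nat.factorial n : ℝ)
      ≤ Real.exp (-(1 + s^2)) * (Real.exp 1 * Real.sqrt n * ((n:ℝ)/Real.exp 1)^n) := by
        rw [hsdef]
        exact mul_le_mul_of_nonneg_left hfact (Real.exp_nonneg _)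
    _ = Real.sqrt n * (Real.exp (-s^2) * (n:ℝ)^n * Real.exp (-(n:ℝ))) := by
        rw [e2, ← e1]; ring
    _ ≤ Real.sqrt n * (b^n * Real.exp (-b)) :=
        mul_le_mul_of_nonneg_left claim hrt.le
    _ = (b - a) * (b^n * Real.exp (-b)) := by rw [hba]
    _ ≤ _ := hstep
end

section
/- For every τ > 0 there exists n₀ ∈ ℕ (with n₀ ≥ τ²) such that for all n ≥ n₀: 1 − Γ(n+1, n−√n·τ)/n! ≤ e^{−τ²/2}; equivalently, γ(n+1, n−√n·τ)/n! = (1/n!)∫_0^{n−√n·τ} t^n e^{−t} dt ≤ e^{−τ²/2}. -/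
open MeasureTheory Set Real

lemma log_le_aux {u : ℝ} (h0 : 0 < u) (h1 : u ≤ 1) :
    Real.log u ≤ (u - 1) - (1 - u) ^ 2 / 2 := by
  have hder : ∀ x : ℝ, x ≠ 0 → HasDerivAt (fun u : ℝ => (u - 1) - (1 - u) ^ 2 / 2 - Real.log u)
      (2 - x - 1 / x) x := by
    intro x hx
    have h1 : HasDerivAt (fun u : ℝ => (u - 1) - (1 - u) ^ 2 / 2 - Real.log u)
        ((1 : ℝ) - (2 * (1 - x) ^ 1 * (0 - 1)) / 2 - 1/x) x := by
      have := ((hasDerivAt_id x).sub_const 1).sub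
        ((((hasDerivAt_const x (1:ℝ)).sub (hasDerivAt_id x)).pow 2).div_const 2)
      have h2 : HasDerivAt (fun u : ℝ => (u - 1) - (1 - u) ^ 2 / 2 - Real.log u) _ x :=
        this.sub (Real.hasDerivAt_log hx)
      convert h2 using 1; simp [one_div]
    convert h1 using 1; ring
  have hA : AntitoneOn (fun u : ℝ => (u - 1) - (1 - u) ^ 2 / 2 - Real.log u) (Set.Ioc 0 1) := by
    apply antitoneOn_of_deriv_nonpos (convex_Ioc 0 1)
    · exact fun x hx => (hder x (ne_of_gt hx.1)).continuousAt.continuousWithinAt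
    · intro x hx
      rw [interior_Ioc] at hx
      exact (hder x (ne_of_gt hx.1)).differentiableAt.differentiableWithinAt
    · intro x hx
      rw [interior_Ioc] at hx
      rw [(hder x (ne_of_gt hx.1)).deriv, sub_sub, sub_nonpos, ← sub_le_iff_le_add',
        le_div_iff₀ hx.1]
      nlinarith [sq_nonneg (1 - x)]
  have := hA (Set.mem_Ioc.2 ⟨h0, h1⟩) (Set.mem_Ioc.2 ⟨one_pos, le_refl 1⟩) h1
  simp only [Real.log_one] at this
  nlinarith [this]
lemma intOn (n : ℕ) : IntegrableOn (fun t : ℝ => t ^ n * Real.exp (-t)) (Set.Ioi 0) := by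
  have h := Real.GammaIntegral_convergent (s := n + 1) (by positivity)
  refine (h.congr_fun (fun t ht => ?_) measurableSet_Ioi)
  rw [add_sub_cancel_right]; beta_reduce; rw [Real.rpow_natCast, mul_comm]

lemma intval (n : ℕ) : ∫ t in Set.Ioi (0:ℝ), t ^ n * Real.exp (-t) = (n.factorial : ℝ) := by
  rw [← Real.Gamma_nat_eq_factorial, Real.Gamma_eq_integral (by positivity : (0:ℝ) < n + 1)]
  refine setIntegral_congr_fun measurableSet_Ioi (fun t ht => ?_)
  rw [add_sub_cancel_right, Real.rpow_natCast, mul_comm]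

lemma intval2 (n : ℕ) {c : ℝ} (hc : 0 < c) :
    ∫ t in Set.Ioi (0:ℝ), t ^ n * Real.exp (-(c * t))
      = (1 / c) ^ (n + 1) * (n.factorial : ℝ) := by
  have h := Real.integral_rpow_mul_exp_neg_mul_Ioi (a := n + 1) (r := c) (by positivity) hc
  rw [show ((n:ℝ) + 1 - 1) = (n:ℝ) by ring] at h
  rw [Real.Gamma_nat_eq_factorial] at h
  rw [show ((1:ℝ)/c) ^ (n+1 : ℕ) = (1/c) ^ ((n:ℝ)+1) by
    rw [← Real.rpow_natCast (1/c) (n+1)]; norm_num, ← h]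
  refine setIntegral_congr_fun measurableSet_Ioi (fun t ht => ?_)
  rw [Real.rpow_natCast]

lemma intOn2 (n : ℕ) {c : ℝ} (hc : 1 ≤ c) :
    IntegrableOn (fun t : ℝ => t ^ n * Real.exp (-(c * t))) (Set.Ioi 0) := by
  refine (intOn n).mono' ?_ ?_
  · exact ((continuous_pow n).mul (by fun_prop)).aestronglyMeasurable
  · filter_upwards [ae_restrict_mem measurableSet_Ioi] with t ht
    have ht' : (0:ℝ) < t := ht
    rw [norm_mul, norm_pow, Real.norm_eq_abs, Real.norm_eq_abs, abs_of_pos ht',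
      abs_of_pos (Real.exp_pos _)]
    gcongr
    · nlinarith

set_option maxHeartbeats 1000000 in
/-- For every τ > 0 there exists n₀ ∈ ℕ with n₀ ≥ τ² such that for all n ≥ n₀:
1 − Γ(n+1, n−√n·τ)/n! ≤ e^{−τ²/2}, where Γ(n+1, a) = ∫_a^∞ tⁿ e^{−t} dt. -/
theorem statement10 (τ : ℝ) (hτ : 0 < τ) :
    ∃ n₀ : ℕ, τ ^ 2 ≤ (n₀ : ℝ) ∧ ∀ n : ℕ, n₀ ≤ n →
      1 - (∫ t in Set.Ioi ((n : ℝ) - Real.sqrt n * τ), t ^ n * Real.exp (-t)) /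
        (Nat.factorial n : ℝ) ≤ Real.exp (-τ ^ 2 / 2) := by
  refine ⟨⌈τ^2⌉₊ + 1, by push_cast; linarith [Nat.le_ceil (τ^2)], fun n hn => ?_⟩
  have hn' : τ^2 + 1 ≤ (n:ℝ) := by
    have h1 : τ^2 ≤ (⌈τ^2⌉₊ : ℝ) := Nat.le_ceil _
    have h2 : ((⌈τ^2⌉₊ + 1 : ℕ) : ℝ) ≤ n := Nat.cast_le.2 hn
    push_cast at h2; linarith
  set s := Real.sqrt n with hsdef
  have hs0 : 0 ≤ s := Real.sqrt_nonneg _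
  have hs2 : s^2 = n := Real.sq_sqrt (by positivity)
  have hsτ : τ < s := by nlinarith
  set x := (n:ℝ) - s * τ with hxdef
  have hx : 0 < x := by nlinarith
  set m := (n:ℝ) + 1 with hmdef
  have hm : (0:ℝ) < m := by positivity
  have hxm : x < m := by nlinarith
  set c := m / x with hcdef
  have hc1 : 1 < c := (one_lt_div hx).2 hxm
  have hc0 : 0 < c := zero_lt_one.trans hc1
  set u := x / m with hudef
  have hum : u * m = x := div_mul_cancel₀ x hm.ne'
  have hu0 : 0 < u := div_pos hx hm
  have hu1 : u ≤ 1 := (div_le_one hm).2 hxm.le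
  have hfac : (0:ℝ) < n.factorial := by positivity
  -- integrability and splitting
  have If := intOn n
  have Ifx : IntegrableOn (fun t : ℝ => t ^ n * Real.exp (-t)) (Set.Ioi x) :=
    If.mono_set (Set.Ioi_subset_Ioi hx.le)
  have Ifc : IntegrableOn (fun t : ℝ => t ^ n * Real.exp (-t)) (Set.Ioc 0 x) :=
    If.mono_set Set.Ioc_subset_Ioi_self
  have hsplit : (n.factorial:ℝ) = (∫ t in Set.Ioc 0 x, t ^ n * Real.exp (-t))
      + ∫ t in Set.Ioi x, t ^ n * Real.exp (-t) := by
    rw [← intval n, ← setIntegral_union (Set.Ioc_disjoint_Ioi le_rfl) measurableSet_Ioi Ifc Ifx,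
      Set.Ioc_union_Ioi_eq_Ioi hx.le]
  -- key bound on the lower incomplete integral
  have key : (∫ t in Set.Ioc 0 x, t ^ n * Real.exp (-t))
      ≤ Real.exp (-τ^2/2) * (n.factorial : ℝ) := by
    have step1 : (∫ t in Set.Ioc 0 x, t ^ n * Real.exp (-t))
        ≤ ∫ t in Set.Ioc 0 x, Real.exp ((c-1)*x) * (t ^ n * Real.exp (-(c*t))) := by
      refine setIntegral_mono_on Ifc
        (((intOn2 n hc1.le).mono_set Set.Ioc_subset_Ioi_self).const_mul _)
        measurableSet_Ioc (fun t ht => ?_)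
      have e1 : Real.exp (-t) ≤ Real.exp ((c-1)*x) * Real.exp (-(c*t)) := by
        rw [← Real.exp_add]
        refine Real.exp_le_exp.2 ?_
        nlinarith [mul_le_mul_of_nonneg_left ht.2 (sub_pos.2 hc1).le]
      calc t ^ n * Real.exp (-t) ≤ t ^ n * (Real.exp ((c-1)*x) * Real.exp (-(c*t))) :=
            mul_le_mul_of_nonneg_left e1 (pow_nonneg ht.1.le n)
        _ = Real.exp ((c-1)*x) * (t ^ n * Real.exp (-(c*t))) := by ring
    have step2 : (∫ t in Set.Ioc 0 x, Real.exp ((c-1)*x) * (t ^ n * Real.exp (-(c*t))))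
        ≤ ∫ t in Set.Ioi 0, Real.exp ((c-1)*x) * (t ^ n * Real.exp (-(c*t))) := by
      refine setIntegral_mono_set ((intOn2 n hc1.le).const_mul _) ?_
        Set.Ioc_subset_Ioi_self.eventuallyLE
      filter_upwards [ae_restrict_mem measurableSet_Ioi] with t ht
      have ht' : (0:ℝ) < t := ht
      positivity
    have step3 : (∫ t in Set.Ioi 0, Real.exp ((c-1)*x) * (t ^ n * Real.exp (-(c*t))))
        = Real.exp ((c-1)*x) * ((1/c)^(n+1) * (n.factorial:ℝ)) := by
      rw [integral_const_mul, intval2 n hc0]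
    have step4 : Real.exp ((c-1)*x) * ((1/c)^(n+1) * (n.factorial:ℝ))
        ≤ Real.exp (-τ^2/2) * (n.factorial : ℝ) := by
      have h1c : (1:ℝ)/c = u := by rw [hcdef, one_div_div]
      have hpow : ((1:ℝ)/c)^(n+1) = Real.exp (m * Real.log u) := by
        rw [h1c, show m = ((n+1:ℕ):ℝ) by push_cast; ring, ← Real.log_pow,
          Real.exp_log (pow_pos hu0 _)]
      rw [hpow, ← mul_assoc, ← Real.exp_add]
      refine mul_le_mul_of_nonneg_right (Real.exp_le_exp.2 ?_) hfac.le
      have hcx : (c-1)*x = m - x := by rw [hcdef, sub_mul, div_mul_cancel₀ _ hx.ne', one_mul]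
      have hlog := log_le_aux hu0 hu1
      have hlogm := mul_le_mul_of_nonneg_left hlog hm.le
      have h1 : m * (1-u) = m - x := by
        rw [mul_sub, mul_one, mul_comm m u, hum]
      have h2 : τ^2 ≤ m * (1-u)^2 := by
        have hsq : (m*(1-u))^2 = (1 + s*τ)^2 := by rw [h1, hmdef, hxdef]; ring
        have hmt : m * τ^2 ≤ (1 + s*τ)^2 := by nlinarith [mul_lt_mul_of_pos_right hsτ hτ]
        nlinarith [sq_nonneg (1-u)]
      rw [hcx]
      nlinarith [hlogm, h2, h1]
    linarith
  -- conclude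
  have hIoi : (∫ t in Set.Ioi x, t ^ n * Real.exp (-t))
      = (n.factorial:ℝ) - ∫ t in Set.Ioc 0 x, t ^ n * Real.exp (-t) := by linarith
  rw [hIoi]
  have heq : 1 - ((n.factorial:ℝ) - ∫ t in Set.Ioc 0 x, t ^ n * Real.exp (-t)) / n.factorial
      = (∫ t in Set.Ioc 0 x, t ^ n * Real.exp (-t)) / n.factorial := by
    field_simp
    ring
  rw [heq, div_le_iff₀ hfac]
  exact key
end

section
/- For every n ∈ ℕ, Γ(n+1, n)/n! > 1/2; that is, (1/n!)∫_n^∞ t^n e^{−t} dt > 1/2. -/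
open MeasureTheory

lemma aux_exp_ineq (v : ℝ) (hv : 0 < v) : (1 - v) * Real.exp (2 * v) < 1 + v := by
  set h : ℝ → ℝ := fun v => 1 + v - (1 - v) * Real.exp (2 * v) with hh
  have hd : ∀ v : ℝ, HasDerivAt h (1 - (1 - 2 * v) * Real.exp (2 * v)) v := by
    intro v
    have he : HasDerivAt (fun v : ℝ => Real.exp (2 * v)) (Real.exp (2 * v) * 2) v := by
      simpa using ((hasDerivAt_id v).const_mul 2).exp
    have h1 : HasDerivAt (fun v : ℝ => (1 - v) * Real.exp (2 * v))
        ((-1) * Real.exp (2 * v) + (1 - v) * (Real.exp (2 * v) * 2)) v := by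
      have := ((hasDerivAt_id v).const_sub 1).mul he
      exact this
    have h2 : HasDerivAt h (1 - ((-1) * Real.exp (2 * v) + (1 - v) * (Real.exp (2 * v) * 2))) v := by
      exact ((hasDerivAt_id v).const_add 1).sub h1
    convert h2 using 1
    ring
  have hmono : StrictMonoOn h (Set.Ici (0 : ℝ)) := by
    apply strictMonoOn_of_deriv_pos (convex_Ici 0)
    · exact Continuous.continuousOn (by continuity)
    · intro x hx
      rw [interior_Ici] at hx
      have hx0 : (0:ℝ) < x := hx
      rw [(hd x).deriv]
      have hlt : (1 : ℝ) - 2 * x < Real.exp (-(2 * x)) := by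
        have := Real.add_one_lt_exp (x := -(2 * x)) (by linarith : -(2*x) < 0).ne
        linarith
      have := mul_lt_mul_of_pos_right hlt (Real.exp_pos (2 * x))
      rw [← Real.exp_add] at this
      simp at this
      linarith
  have := hmono (Set.self_mem_Ici) (Set.mem_Ici.mpr hv.le) hv
  simp [hh] at this
  linarith

lemma key_pt (n : ℕ) (y : ℝ) (h0 : 0 < y) (hy : y < n) :
    ((n : ℝ) - y) ^ n * Real.exp (-((n : ℝ) - y)) < ((n : ℝ) + y) ^ n * Real.exp (-((n : ℝ) + y)) := by
  have hn : (0 : ℝ) < n := h0.trans hy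
  have hn' : (n : ℝ) ≠ 0 := hn.ne'
  have hv : 0 < y / n := div_pos h0 hn
  have base := aux_exp_ineq (y / n) hv
  -- multiply by n : (n - y) * exp (2 * (y/n)) < n + y
  have hbase : ((n : ℝ) - y) * Real.exp (2 * (y / n)) < (n : ℝ) + y := by
    have := mul_lt_mul_of_pos_left base hn
    calc ((n : ℝ) - y) * Real.exp (2 * (y / n))
        = (n : ℝ) * ((1 - y / n) * Real.exp (2 * (y / n))) := by
          field_simp
      _ < (n : ℝ) * (1 + y / n) := this
      _ = (n : ℝ) + y := by field_simp
  have hpos : 0 < ((n : ℝ) - y) * Real.exp (2 * (y / n)) :=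
    mul_pos (by linarith) (Real.exp_pos _)
  have hpow : (((n : ℝ) - y) * Real.exp (2 * (y / n))) ^ n < ((n : ℝ) + y) ^ n := by
    apply pow_lt_pow_left₀ hbase hpos.le
    have : 1 ≤ n := by
      by_contra h
      push_neg at h
      interval_cases n
      · simp at hn
    omega
  have hexp : (Real.exp (2 * (y / n))) ^ n = Real.exp (2 * y) := by
    rw [← Real.exp_nat_mul]
    congr 1
    field_simp
  rw [mul_pow, hexp] at hpow
  have := mul_lt_mul_of_pos_right hpow (Real.exp_pos (-((n : ℝ) + y)))
  calc ((n : ℝ) - y) ^ n * Real.exp (-((n : ℝ) - y))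
      = ((n : ℝ) - y) ^ n * Real.exp (2 * y) * Real.exp (-((n : ℝ) + y)) := by
        rw [mul_assoc, ← Real.exp_add]; ring_nf
    _ < ((n : ℝ) + y) ^ n * Real.exp (-((n : ℝ) + y)) := this

/-- For every n ∈ ℕ, Γ(n+1, n)/n! > 1/2, where
Γ(n+1, a) = ∫_a^∞ tⁿ e^{−t} dt is the upper incomplete Gamma function. -/
theorem statement12 (n : ℕ) :
    1 / 2 < (∫ t in Set.Ioi (n : ℝ), t ^ n * Real.exp (-t)) / (Nat.factorial n : ℝ) := by
  rcases Nat.eq_zero_or_pos n with rfl | hn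
  · simp only [Nat.cast_zero, pow_zero, one_mul, Nat.factorial_zero, Nat.cast_one, div_one, integral_exp_neg_Ioi]
    norm_num
  have hn0 : (0 : ℝ) < n := by exact_mod_cast hn
  set f : ℝ → ℝ := fun t => t ^ n * Real.exp (-t) with hf
  -- integrability on Ioi 0
  have hInt0 : IntegrableOn f (Set.Ioi (0 : ℝ)) := by
    have h := Real.GammaIntegral_convergent (s := (n : ℝ) + 1) (by positivity)
    apply h.congr_fun _ measurableSet_Ioi
    intro x hx
    simp only [add_sub_cancel_right, Real.rpow_natCast, hf]
    ring
  have hIntn : IntegrableOn f (Set.Ioi (n : ℝ)) :=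
    hInt0.mono_set (Set.Ioi_subset_Ioi hn0.le)
  -- total integral = n!
  have hTotal : ∫ t in Set.Ioi (0 : ℝ), f t = (Nat.factorial n : ℝ) := by
    rw [← Real.Gamma_nat_eq_factorial, Real.Gamma_eq_integral (by positivity : (0:ℝ) < n + 1)]
    apply setIntegral_congr_fun measurableSet_Ioi
    intro x hx
    simp only [add_sub_cancel_right, Real.rpow_natCast, hf]
    ring
  -- split
  have hsplit : (∫ t in Set.Ioc (0 : ℝ) n, f t) + ∫ t in Set.Ioi (n : ℝ), f t
      = ∫ t in Set.Ioi (0 : ℝ), f t := by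
    rw [← setIntegral_union (Set.Ioc_disjoint_Ioi le_rfl) measurableSet_Ioi
      (hInt0.mono_set Set.Ioc_subset_Ioi_self) hIntn,
      Set.Ioc_union_Ioi_eq_Ioi hn0.le]
  -- continuity
  have hfc : Continuous f := by continuity
  -- strict inequality on [0, n]
  have hAlt : (∫ t in (0:ℝ)..n, f t) < ∫ x in (0:ℝ)..n, f (2 * n - x) := by
    apply intervalIntegral.integral_lt_integral_of_continuousOn_of_le_of_exists_lt hn0
      hfc.continuousOn (hfc.comp (by continuity)).continuousOn
    · intro x hx
      rcases eq_or_lt_of_le hx.2 with h | h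
      · subst h
        show f (n:ℝ) ≤ f (2 * (n:ℝ) - n)
        have e : 2 * (n : ℝ) - n = n := by ring
        rw [e]
      · have := key_pt n (n - x) (by linarith) (by linarith [hx.1])
        have e1 : (n : ℝ) - ((n : ℝ) - x) = x := by ring
        have e2 : (n : ℝ) + ((n : ℝ) - x) = 2 * n - x := by ring
        rw [e1, e2] at this
        exact this.le
    · refine ⟨0, Set.left_mem_Icc.mpr hn0.le, ?_⟩
      show f 0 < f (2 * (n:ℝ) - 0)
      simp only [hf]
      rw [zero_pow (by omega), sub_zero, zero_mul]
      positivity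
  -- reflection
  have hrefl : (∫ x in (0:ℝ)..n, f (2 * n - x)) = ∫ t in (n:ℝ)..(2 * n), f t := by
    rw [intervalIntegral.integral_comp_sub_left f (2 * n)]
    have e : 2 * (n : ℝ) - n = n := by ring
    rw [e, sub_zero]
  -- ∫ n..2n ≤ ∫ Ioi n
  have hle : (∫ t in (n:ℝ)..(2 * n), f t) ≤ ∫ t in Set.Ioi (n : ℝ), f t := by
    rw [intervalIntegral.integral_of_le (by linarith)]
    apply setIntegral_mono_set hIntn
    · refine (ae_restrict_iff' measurableSet_Ioi).2 (Filter.Eventually.of_forall fun t ht => ?_)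
      exact mul_nonneg (pow_nonneg (le_of_lt (hn0.trans ht)) n) (Real.exp_pos _).le
    · exact Filter.Eventually.of_forall fun t ht => Set.Ioc_subset_Ioi_self ht
  have hA : (∫ t in (0:ℝ)..n, f t) = ∫ t in Set.Ioc (0 : ℝ) n, f t :=
    intervalIntegral.integral_of_le hn0.le
  have hfactpos : (0 : ℝ) < (Nat.factorial n : ℝ) := by
    exact_mod_cast Nat.factorial_pos n
  rw [lt_div_iff₀ hfactpos]
  have : (∫ t in Set.Ioc (0 : ℝ) n, f t) < ∫ t in Set.Ioi (n : ℝ), f t := by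
    rw [← hA]
    calc (∫ t in (0:ℝ)..n, f t) < ∫ x in (0:ℝ)..n, f (2 * n - x) := hAlt
      _ = ∫ t in (n:ℝ)..(2 * n), f t := hrefl
      _ ≤ ∫ t in Set.Ioi (n : ℝ), f t := hle
  have := hsplit.symm ▸ hTotal
  linarith [hsplit, hTotal]
end

section
/- For every τ > 0 there exist a constant C ≥ 1 and n₀ ∈ ℕ such that for all n ≥ n₀ and all z ∈ ℂ with π|z|² ≤ n + √n·τ: C⁻¹ e^{π|z|²} ≤ k_n(z,z) ≤ e^{π|z|²}, where k_n(z,z) = Σ_{k=0}^n (π|z|²)^k/k!. -/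
open MeasureTheory

noncomputable def Ssum (n : ℕ) (x : ℝ) : ℝ :=
  ∑ k ∈ Finset.range (n + 1), x ^ k / (Nat.factorial k : ℝ)

lemma Ssum_antitone (n : ℕ) :
    AntitoneOn (fun x : ℝ => Real.exp (-x) * Ssum n x) (Set.Ici 0) := by
  have hderiv : ∀ x : ℝ, HasDerivAt (fun x : ℝ => Real.exp (-x) * Ssum n x)
      (-(Real.exp (-x) * (x ^ n / (Nat.factorial n : ℝ)))) x := by
    intro x
    have h1 : HasDerivAt (fun x : ℝ => Ssum n x)
        (∑ k ∈ Finset.range (n + 1), (k : ℝ) * x ^ (k - 1) / (Nat.factorial k : ℝ)) x :=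
      HasDerivAt.fun_sum fun k _ => (hasDerivAt_pow k x).div_const _
    have h2 : HasDerivAt (fun x : ℝ => Real.exp (-x)) (-Real.exp (-x)) x := by
      convert (hasDerivAt_neg x).exp using 1; ring
    have h3 := h2.mul h1
    have hT : ∑ k ∈ Finset.range (n + 1), (k : ℝ) * x ^ (k - 1) / (Nat.factorial k : ℝ)
        = ∑ k ∈ Finset.range n, x ^ k / (Nat.factorial k : ℝ) := by
      rw [Finset.sum_range_succ']
      simp only [Nat.cast_zero, zero_mul, zero_div, add_zero]
      refine Finset.sum_congr rfl fun k _ => ?_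
      have : ((k + 1).factorial : ℝ) = (k + 1) * (Nat.factorial k : ℝ) := by
        push_cast [Nat.factorial_succ]; ring
      rw [Nat.add_sub_cancel, this]
      have h0 : (0:ℝ) < (k : ℝ) + 1 := by positivity
      push_cast
      field_simp
    have hS : Ssum n x = (∑ k ∈ Finset.range n, x ^ k / (Nat.factorial k : ℝ))
        + x ^ n / (Nat.factorial n : ℝ) := Finset.sum_range_succ _ _
    exact h3.congr_deriv (by rw [hT, hS]; ring)
  apply antitoneOn_of_deriv_nonpos (convex_Ici 0)
  · exact fun x _ => (hderiv x).differentiableAt.continuousAt.continuousWithinAt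
  · exact fun x _ => (hderiv x).differentiableAt.differentiableWithinAt
  · intro x hx
    rw [(hderiv x).deriv]
    rw [interior_Ici] at hx
    have hx' : (0:ℝ) < x := hx
    have : (0:ℝ) ≤ Real.exp (-x) * (x ^ n / (Nat.factorial n : ℝ)) :=
      mul_nonneg (Real.exp_nonneg _)
        (div_nonneg (pow_nonneg hx'.le n) (Nat.cast_nonneg _))
    linarith

lemma exp_quad_le' (u : ℝ) (h0 : 0 ≤ u) (h1 : u ≤ 1) :
    Real.exp (u - u ^ 2 / 2) ≤ 1 + u := by
  have h2 : Real.exp u ≤ 1 + u + u ^ 2 / 2 + u ^ 3 / 2 := by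
    rcases eq_or_lt_of_le h0 with h | h
    · simp [← h]
    · have := Real.exp_bound' h0 h1 (n := 3) (by norm_num)
      have e1 : ∑ m ∈ Finset.range 3, u ^ m / (Nat.factorial m : ℝ)
          = 1 + u + u ^ 2 / 2 := by
        simp [Finset.sum_range_succ, Nat.factorial]
        try ring
      rw [e1] at this
      norm_num [Nat.factorial] at this
      nlinarith [pow_pos h 3]
  have h3 : 1 + u ^ 2 / 2 ≤ Real.exp (u ^ 2 / 2) := by
    have := Real.add_one_le_exp (u ^ 2 / 2); linarith
  have h4 : Real.exp (u - u ^ 2 / 2) * Real.exp (u ^ 2 / 2) = Real.exp u := by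
    rw [← Real.exp_add]; ring_nf
  have h5 : (1 + u) * (1 + u ^ 2 / 2) = 1 + u + u ^ 2 / 2 + u ^ 3 / 2 := by ring
  nlinarith [Real.exp_pos (u - u ^ 2 / 2), Real.exp_pos (u ^ 2 / 2),
    mul_le_mul_of_nonneg_left h3 (Real.exp_nonneg (u - u ^ 2 / 2))]

lemma exp_neg_two_le' (u : ℝ) (h0 : 0 ≤ u) (h1 : u ≤ 1 / 2) :
    Real.exp (-(2 * u)) ≤ 1 - u := by
  have h2 : 1 + 2 * u ≤ Real.exp (2 * u) := by
    have := Real.add_one_le_exp (2 * u); linarith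
  have h3 : Real.exp (-(2 * u)) * Real.exp (2 * u) = 1 := by
    rw [← Real.exp_add]; simp
  nlinarith [Real.exp_pos (-(2 * u)), Real.exp_pos (2 * u)]

lemma stirling_upper' (n : ℕ) (hn : 1 ≤ n) :
    (Nat.factorial n : ℝ) ≤ Real.exp 1 * Real.sqrt n * ((n : ℝ) / Real.exp 1) ^ n := by
  have h1 : Stirling.stirlingSeq n ≤ Stirling.stirlingSeq 1 := by
    obtain ⟨m, rfl⟩ := Nat.exists_eq_add_of_le hn
    have : Stirling.stirlingSeq (m + 1) ≤ Stirling.stirlingSeq 1 :=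
      Stirling.stirlingSeq'_antitone (Nat.zero_le m)
    simpa [Nat.add_comm] using this
  rw [Stirling.stirlingSeq_one] at h1
  have hn' : (0:ℝ) < n := by exact_mod_cast hn
  have hden : (0:ℝ) < Real.sqrt (2 * n) * ((n : ℝ) / Real.exp 1) ^ n := by
    apply mul_pos (Real.sqrt_pos.mpr (by positivity))
    exact pow_pos (by positivity) n
  have := (div_le_iff₀ hden).mp h1
  calc (Nat.factorial n : ℝ)
      ≤ Real.exp 1 / Real.sqrt 2 * (Real.sqrt (2 * n) * ((n : ℝ) / Real.exp 1) ^ n) := by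
        simpa [Stirling.stirlingSeq] using this
    _ = Real.exp 1 * Real.sqrt n * ((n : ℝ) / Real.exp 1) ^ n := by
        rw [show (2 : ℝ) * n = 2 * n by ring, Real.sqrt_mul (by norm_num : (0:ℝ) ≤ 2)]
        have h2 : Real.sqrt 2 ≠ 0 := by positivity
        field_simp

lemma term_lower (n m k : ℕ) (x : ℝ) (hm1 : 1 ≤ m) (hmn : m ≤ n)
    (hk : n + 1 - m ≤ k) (hkn : k ≤ n) (hx : (n : ℝ) ≤ x) :
    x ^ n / (Nat.factorial n : ℝ) * (((n + 1 - m : ℕ) : ℝ) / x) ^ (m - 1)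
      ≤ x ^ k / (Nat.factorial k : ℝ) := by
  have hn1 : 1 ≤ n := le_trans hm1 hmn
  have hx0 : (0 : ℝ) < x := lt_of_lt_of_le (by exact_mod_cast hn1) hx
  set b : ℕ := n + 1 - m with hb
  set d : ℕ := n - k with hd
  have hdm : d ≤ m - 1 := by omega
  have hkd : k + d = n := by omega
  have hbk : b ≤ k := hk
  -- Nat inequality: k! * b^d ≤ n!
  have hnat : Nat.factorial k * b ^ d ≤ Nat.factorial n := by
    calc Nat.factorial k * b ^ d ≤ Nat.factorial k * (k + 1) ^ d := by
          exact Nat.mul_le_mul_left _ (Nat.pow_le_pow_left (by omega) d)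
      _ ≤ Nat.factorial (k + d) := Nat.factorial_mul_pow_le_factorial
      _ = Nat.factorial n := by rw [hkd]
  have hcast : (Nat.factorial k : ℝ) * ((b : ℝ)) ^ d ≤ (Nat.factorial n : ℝ) := by
    exact_mod_cast hnat
  have hBx : ((b : ℝ)) ≤ x := le_trans (by exact_mod_cast (by omega : b ≤ n)) hx
  have hB0 : (0 : ℝ) ≤ (b : ℝ) := Nat.cast_nonneg _
  have hsplit : ((b : ℝ)) ^ (m - 1) = (b : ℝ) ^ d * (b : ℝ) ^ (m - 1 - d) := by
    rw [← pow_add]; congr 1; omega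
  have hxsplit : x ^ k * x ^ (m - 1) = x ^ n * x ^ (m - 1 - d) := by
    rw [← pow_add, ← pow_add]; congr 1; omega
  have hkey : x ^ n * (b : ℝ) ^ (m - 1) * (Nat.factorial k : ℝ)
      ≤ x ^ k * ((Nat.factorial n : ℝ) * x ^ (m - 1)) := by
    have h1 : ((Nat.factorial k : ℝ) * (b : ℝ) ^ d) * (b : ℝ) ^ (m - 1 - d)
        ≤ (Nat.factorial n : ℝ) * x ^ (m - 1 - d) := by
      apply mul_le_mul hcast (pow_le_pow_left₀ hB0 hBx _) (by positivity)
        (Nat.cast_nonneg _)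
    calc x ^ n * (b : ℝ) ^ (m - 1) * (Nat.factorial k : ℝ)
        = x ^ n * (((Nat.factorial k : ℝ) * (b : ℝ) ^ d) * (b : ℝ) ^ (m - 1 - d)) := by
          rw [hsplit]; ring
      _ ≤ x ^ n * ((Nat.factorial n : ℝ) * x ^ (m - 1 - d)) := by
          exact mul_le_mul_of_nonneg_left h1 (by positivity)
      _ = x ^ k * ((Nat.factorial n : ℝ) * x ^ (m - 1)) := by
          rw [show x ^ n * ((Nat.factorial n:ℝ) * x ^ (m-1-d)) =
            (x ^ n * x ^ (m-1-d)) * (Nat.factorial n:ℝ) by ring,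
            ← hxsplit]; ring
  have hfk : (0 : ℝ) < (Nat.factorial k : ℝ) := by exact_mod_cast Nat.factorial_pos k
  have hfn : (0 : ℝ) < (Nat.factorial n : ℝ) := by exact_mod_cast Nat.factorial_pos n
  have hden : (0 : ℝ) < (Nat.factorial n : ℝ) * x ^ (m - 1) := by positivity
  rw [div_pow, div_mul_div_comm]
  rw [div_le_div_iff₀ hden hfk]
  exact hkey

set_option maxHeartbeats 1000000 in
lemma key_lower (τ : ℝ) (hτ : 0 < τ) (n : ℕ) (hn : 4 * (1 + τ) ^ 2 ≤ (n : ℝ)) :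
    Real.exp (((n : ℝ) + Real.sqrt n * τ) - (τ ^ 2 / 2 + 2 * τ + 3))
      ≤ Ssum n ((n : ℝ) + Real.sqrt n * τ) := by
  set s : ℝ := Real.sqrt n with hs
  set x : ℝ := (n : ℝ) + s * τ with hxdef
  have hn0 : (0 : ℝ) ≤ (n : ℝ) := Nat.cast_nonneg n
  have hs2 : s * s = (n : ℝ) := Real.mul_self_sqrt hn0
  have hn4 : (4 : ℝ) ≤ (n : ℝ) := by nlinarith
  have hn1 : 1 ≤ n := by
    have h : (1 : ℝ) ≤ (n : ℝ) := by linarith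
    exact_mod_cast h
  have hs_pos : (0 : ℝ) < s := Real.sqrt_pos.mpr (by linarith)
  have hs_ge : 2 * (1 + τ) ≤ s := by nlinarith
  have hs2' : (2 : ℝ) ≤ s := by nlinarith
  have hx_n : (n : ℝ) ≤ x := by nlinarith
  have hx_pos : (0 : ℝ) < x := by nlinarith
  set m : ℕ := Nat.floor s + 1 with hm
  have hfloor_le : ((Nat.floor s : ℕ) : ℝ) ≤ s := Nat.floor_le hs_pos.le
  have hm_ub : (m : ℝ) ≤ s + 1 := by rw [hm]; push_cast; linarith
  have hm_ge : s ≤ (m : ℝ) := by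
    have := Nat.lt_floor_add_one s
    rw [hm]; push_cast; linarith
  have hm1 : 1 ≤ m := by omega
  have hmn : m ≤ n := by
    have : (m : ℝ) ≤ (n : ℝ) := by nlinarith
    exact_mod_cast this
  set b : ℕ := n + 1 - m with hb
  have hB : ((b : ℕ) : ℝ) = (n : ℝ) + 1 - (m : ℝ) := by
    have : m ≤ n + 1 := by omega
    rw [hb]; push_cast [Nat.cast_sub this]; ring
  -- step 1: sum lower bound
  set t0 : ℝ := x ^ n / (Nat.factorial n : ℝ) * (((b : ℕ) : ℝ) / x) ^ (m - 1) with ht0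
  have hsum : (m : ℝ) * t0 ≤ Ssum n x := by
    have hsub : Finset.Ico b (n + 1) ⊆ Finset.range (n + 1) := by
      intro k hk
      simp only [Finset.mem_Ico, Finset.mem_range] at *
      omega
    have h1 : ∑ k ∈ Finset.Ico b (n + 1), x ^ k / (Nat.factorial k : ℝ) ≤ Ssum n x := by
      apply Finset.sum_le_sum_of_subset_of_nonneg hsub
      intro k _ _
      have : (0:ℝ) ≤ x ^ k := pow_nonneg hx_pos.le k
      positivity
    have h2 : ∀ k ∈ Finset.Ico b (n + 1), t0 ≤ x ^ k / (Nat.factorial k : ℝ) := by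
      intro k hk
      simp only [Finset.mem_Ico] at hk
      exact term_lower n m k x hm1 hmn hk.1 (by omega) hx_n
    have h3 := Finset.sum_le_sum h2
    have h4 : ∑ _k ∈ Finset.Ico b (n + 1), t0 = (m : ℝ) * t0 := by
      rw [Finset.sum_const, Nat.card_Ico]
      have : n + 1 - b = m := by omega
      rw [this, nsmul_eq_mul]
    linarith
  -- step 2: lower bound t0
  set w : ℝ := (1 + τ) / s with hw
  have hws : w * s = 1 + τ := div_mul_cancel₀ _ hs_pos.ne'
  have hw0 : 0 ≤ w := by positivity
  have hw12 : w ≤ 1 / 2 := by rw [hw, div_le_iff₀ hs_pos]; linarith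
  have hBx : 1 - w ≤ ((b : ℕ) : ℝ) / x := by
    rw [le_div_iff₀ hx_pos, hB]
    have key : ((1 : ℝ) - w) * x * s ≤ ((n : ℝ) + 1 - m) * s := by nlinarith
    nlinarith
  have hρ : Real.exp (-(2 * (1 + τ))) ≤ (((b : ℕ) : ℝ) / x) ^ (m - 1) := by
    have h1 : Real.exp (-(2 * w)) ≤ 1 - w := exp_neg_two_le' w hw0 hw12
    have h1' : (0:ℝ) ≤ 1 - w := le_trans (Real.exp_nonneg _) h1
    have h2 : (Real.exp (-(2 * w))) ^ (m - 1) ≤ (1 - w) ^ (m - 1) :=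
      pow_le_pow_left₀ (Real.exp_nonneg _) h1 _
    have h3 : (1 - w) ^ (m - 1) ≤ (((b : ℕ) : ℝ) / x) ^ (m - 1) :=
      pow_le_pow_left₀ h1' hBx _
    have h4 : (Real.exp (-(2 * w))) ^ (m - 1) = Real.exp (((m - 1 : ℕ) : ℝ) * (-(2 * w))) :=
      (Real.exp_nat_mul _ _).symm
    have hm1s : ((m - 1 : ℕ) : ℝ) ≤ s := by
      have : m - 1 = Nat.floor s := by omega
      rw [this]; exact hfloor_le
    have h5 : Real.exp (-(2 * (1 + τ))) ≤ Real.exp (((m - 1 : ℕ) : ℝ) * (-(2 * w))) := by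
      apply Real.exp_le_exp.mpr
      have hmm : ((m - 1 : ℕ) : ℝ) * (2 * w) ≤ s * (2 * w) :=
        mul_le_mul_of_nonneg_right hm1s (by positivity)
      nlinarith
    calc Real.exp (-(2 * (1 + τ))) ≤ Real.exp (((m - 1 : ℕ) : ℝ) * (-(2 * w))) := h5
      _ = (Real.exp (-(2 * w))) ^ (m - 1) := h4.symm
      _ ≤ (1 - w) ^ (m - 1) := h2
      _ ≤ _ := h3
  -- term bound via Stirling
  set u : ℝ := τ / s with hu
  have hus : u * s = τ := div_mul_cancel₀ _ hs_pos.ne'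
  have hu0 : 0 ≤ u := by positivity
  have hu1 : u ≤ 1 := by rw [hu, div_le_iff₀ hs_pos]; nlinarith
  have hxpow : (n : ℝ) ^ n * Real.exp (s * τ - τ ^ 2 / 2) ≤ x ^ n := by
    have h1 : Real.exp (u - u ^ 2 / 2) ≤ 1 + u := exp_quad_le' u hu0 hu1
    have h2 : (Real.exp (u - u ^ 2 / 2)) ^ n ≤ (1 + u) ^ n :=
      pow_le_pow_left₀ (Real.exp_nonneg _) h1 n
    have h3 : (Real.exp (u - u ^ 2 / 2)) ^ n = Real.exp ((n : ℝ) * (u - u ^ 2 / 2)) :=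
      (Real.exp_nat_mul _ _).symm
    have h4 : (n : ℝ) * (u - u ^ 2 / 2) = s * τ - τ ^ 2 / 2 := by
      rw [← hs2, hu]; field_simp
    have h5 : (n : ℝ) ^ n * (1 + u) ^ n = x ^ n := by
      rw [← mul_pow]; congr 1
      calc (n : ℝ) * (1 + u) = (n : ℝ) + (n : ℝ) * u := by ring
        _ = (n : ℝ) + (s * s) * u := by rw [hs2]
        _ = (n : ℝ) + s * (u * s) := by ring
        _ = (n : ℝ) + s * τ := by rw [hus]
    calc (n : ℝ) ^ n * Real.exp (s * τ - τ ^ 2 / 2)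
        = (n : ℝ) ^ n * (Real.exp (u - u ^ 2 / 2)) ^ n := by rw [h3, h4]
      _ ≤ (n : ℝ) ^ n * (1 + u) ^ n := by
          exact mul_le_mul_of_nonneg_left h2 (by positivity)
      _ = x ^ n := h5
  have hfact := stirling_upper' n hn1
  have hfn : (0:ℝ) < (Nat.factorial n : ℝ) := by exact_mod_cast Nat.factorial_pos n
  have hterm : Real.exp (x - (τ ^ 2 / 2 + 1)) / s ≤ x ^ n / (Nat.factorial n : ℝ) := by
    have hnn : (0:ℝ) < (n:ℝ) ^ n := pow_pos (by linarith) n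
    have hden : (0:ℝ) < Real.exp 1 * Real.sqrt n * ((n : ℝ) / Real.exp 1) ^ n := by
      apply mul_pos (mul_pos (Real.exp_pos 1) hs_pos)
      exact pow_pos (by positivity) n
    have h6 : ((n : ℝ) ^ n * Real.exp (s * τ - τ ^ 2 / 2)) /
        (Real.exp 1 * Real.sqrt n * ((n : ℝ) / Real.exp 1) ^ n)
        ≤ x ^ n / (Nat.factorial n : ℝ) :=
      div_le_div₀ (pow_nonneg hx_pos.le n) hxpow hfn hfact
    have h7 : ((n : ℝ) / Real.exp 1) ^ n = (n : ℝ) ^ n / Real.exp n := by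
      rw [div_pow]; congr 1
      rw [← Real.exp_nat_mul]; norm_num
    have h8 : ((n : ℝ) ^ n * Real.exp (s * τ - τ ^ 2 / 2)) /
        (Real.exp 1 * Real.sqrt n * ((n : ℝ) / Real.exp 1) ^ n)
        = Real.exp (x - (τ ^ 2 / 2 + 1)) / s := by
      rw [h7, ← hs]
      have he1 : Real.exp (x - (τ ^ 2 / 2 + 1))
          = Real.exp (s * τ - τ ^ 2 / 2) * Real.exp (n : ℝ) / Real.exp 1 := by
        rw [← Real.exp_add, ← Real.exp_sub]
        congr 1
        rw [hxdef]; ring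
      rw [he1]
      field_simp
    linarith [h8 ▸ h6]
  -- combine
  have hfinal : Real.exp (x - (τ ^ 2 / 2 + 2 * τ + 3))
      = (Real.exp (x - (τ ^ 2 / 2 + 1)) / s) * Real.exp (-(2 * (1 + τ))) * s := by
    rw [div_mul_eq_mul_div, div_mul_eq_mul_div, ← Real.exp_add]
    rw [mul_div_assoc, div_self hs_pos.ne', mul_one]
    congr 1
    ring
  have hcomb : (Real.exp (x - (τ ^ 2 / 2 + 1)) / s) * Real.exp (-(2 * (1 + τ))) * s
      ≤ x ^ n / (Nat.factorial n : ℝ) * (((b : ℕ) : ℝ) / x) ^ (m - 1) * (m : ℝ) := by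
    have e1 : (0:ℝ) ≤ Real.exp (x - (τ ^ 2 / 2 + 1)) / s := by positivity
    have e2 : (0:ℝ) ≤ Real.exp (-(2 * (1 + τ))) := Real.exp_nonneg _
    apply mul_le_mul (mul_le_mul hterm hρ e2 ?_) hm_ge hs_pos.le ?_
    · exact div_nonneg (pow_nonneg hx_pos.le n) hfn.le
    · exact mul_nonneg (div_nonneg (pow_nonneg hx_pos.le n) hfn.le)
        (le_trans e2 hρ)
  calc Real.exp (x - (τ ^ 2 / 2 + 2 * τ + 3))
      = (Real.exp (x - (τ ^ 2 / 2 + 1)) / s) * Real.exp (-(2 * (1 + τ))) * s := hfinal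
    _ ≤ t0 * (m : ℝ) := hcomb
    _ = (m : ℝ) * t0 := by ring
    _ ≤ Ssum n x := hsum

/-- For every τ > 0 there exist C ≥ 1 and n₀ such that for all n ≥ n₀ and all z ∈ ℂ
with π|z|² ≤ n + √n·τ: C⁻¹ e^{π|z|²} ≤ k_n(z,z) ≤ e^{π|z|²}. -/
theorem statement13 (τ : ℝ) (hτ : 0 < τ) :
    ∃ C : ℝ, 1 ≤ C ∧ ∃ n₀ : ℕ, ∀ n : ℕ, n₀ ≤ n → ∀ z : ℂ,
      Real.pi * ‖z‖ ^ 2 ≤ (n : ℝ) + Real.sqrt n * τ →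
        C⁻¹ * Real.exp (Real.pi * ‖z‖ ^ 2) ≤ kdiag n z ∧
        kdiag n z ≤ Real.exp (Real.pi * ‖z‖ ^ 2) := by
  set c : ℝ := τ ^ 2 / 2 + 2 * τ + 3 with hc
  refine ⟨Real.exp c, Real.one_le_exp (by positivity), ⌈4 * (1 + τ) ^ 2⌉₊, fun n hn z hz => ?_⟩
  have hn' : 4 * (1 + τ) ^ 2 ≤ (n : ℝ) :=
    le_trans (Nat.le_ceil _) (Nat.cast_le.mpr hn)
  set x₀ : ℝ := Real.pi * ‖z‖ ^ 2 with hx₀def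
  have hx₀ : 0 ≤ x₀ := by positivity
  set xs : ℝ := (n : ℝ) + Real.sqrt n * τ with hxs
  have hxs0 : 0 ≤ xs := by
    have : (0:ℝ) ≤ Real.sqrt n * τ := mul_nonneg (Real.sqrt_nonneg _) hτ.le
    have : (0:ℝ) ≤ (n:ℝ) := Nat.cast_nonneg n
    positivity
  have hkd : kdiag n z = Ssum n x₀ := rfl
  constructor
  · -- lower bound
    have hant := Ssum_antitone n (Set.mem_Ici.mpr hx₀) (Set.mem_Ici.mpr hxs0) hz
    have hkey := key_lower τ hτ n hn'
    have h1 : (Real.exp c)⁻¹ ≤ Real.exp (-x₀) * Ssum n x₀ := by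
      have h2 : Real.exp (-xs) * Real.exp (xs - c) ≤ Real.exp (-xs) * Ssum n xs :=
        mul_le_mul_of_nonneg_left hkey (Real.exp_nonneg _)
      have h3 : Real.exp (-xs) * Real.exp (xs - c) = (Real.exp c)⁻¹ := by
        rw [← Real.exp_add, ← Real.exp_neg]; congr 1; ring
      calc (Real.exp c)⁻¹ = Real.exp (-xs) * Real.exp (xs - c) := h3.symm
        _ ≤ Real.exp (-xs) * Ssum n xs := h2
        _ ≤ Real.exp (-x₀) * Ssum n x₀ := hant
    have hmul : Real.exp (-x₀) * Real.exp x₀ = 1 := by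
      rw [← Real.exp_add]; simp
    calc (Real.exp c)⁻¹ * Real.exp x₀
        ≤ (Real.exp (-x₀) * Ssum n x₀) * Real.exp x₀ :=
          mul_le_mul_of_nonneg_right h1 (Real.exp_nonneg _)
      _ = Ssum n x₀ * (Real.exp (-x₀) * Real.exp x₀) := by ring
      _ = Ssum n x₀ := by rw [hmul, mul_one]
      _ = kdiag n z := hkd.symm
  · rw [hkd]
    exact Real.sum_le_exp_of_nonneg hx₀ (n + 1)
end

section
/- For every ε ∈ (0,1) and τ > 0 there exist C > 0 and n₀ ∈ ℕ such that for all n ≥ n₀ and all z, w ∈ ℂ with π|z|² ≤ n(1−ε) and |z−w| ≤ τ: |Γ(n+1, π z w̄)/n! − Γ(n+1, π|z|²)/n!| ≤ C e^{−ε²n/4}, where for a ∈ ℂ the (analytically continued) normalized incomplete Gamma function with integer parameter is Γ(n+1, a)/n! = e^{−a} Σ_{k=0}^n a^k/k!. -/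
open MeasureTheory

/-- The analytically continued normalized incomplete Gamma function with integer
parameter n+1 and complex argument a: Γ(n+1, a)/n! = e^{−a} Σ_{k=0}^n a^k/k!. -/
noncomputable def normGammaC (n : ℕ) (a : ℂ) : ℂ :=
  Complex.exp (-a) * ∑ k ∈ Finset.range (n + 1), a ^ k / (Nat.factorial k : ℂ)

lemma hasDerivAt_normGammaC (n : ℕ) (a : ℂ) :
    HasDerivAt (normGammaC n) (-(Complex.exp (-a) * a ^ n / (Nat.factorial n : ℂ))) a := by
  have hexp : HasDerivAt (fun z : ℂ => Complex.exp (-z)) (-Complex.exp (-a)) a := by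
    have := (Complex.hasDerivAt_exp (-a)).comp a (hasDerivAt_neg a)
    simpa [Function.comp_def] using this
  have hsum : HasDerivAt (fun z : ℂ => ∑ k ∈ Finset.range (n + 1), z ^ k / (Nat.factorial k : ℂ))
      (∑ k ∈ Finset.range n, a ^ k / (Nat.factorial k : ℂ)) a := by
    have h1 : HasDerivAt (fun z : ℂ => ∑ k ∈ Finset.range (n + 1), z ^ k / (Nat.factorial k : ℂ))
        (∑ k ∈ Finset.range (n + 1), (k : ℂ) * a ^ (k - 1) / (Nat.factorial k : ℂ)) a := by
      apply HasDerivAt.fun_sum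
      intro k _
      exact (hasDerivAt_pow k a).div_const _
    convert h1 using 1
    rw [Finset.sum_range_succ']
    have h0 : ((0 : ℕ) : ℂ) * a ^ (0 - 1) / (Nat.factorial 0 : ℂ) = 0 := by simp
    rw [h0, add_zero]
    apply Finset.sum_congr rfl
    intro k _
    have hk : ((Nat.factorial (k + 1) : ℂ)) = (k + 1 : ℂ) * (Nat.factorial k : ℂ) := by
      push_cast [Nat.factorial_succ]; ring
    have hfk : (Nat.factorial k : ℂ) ≠ 0 := Nat.cast_ne_zero.2 (Nat.factorial_ne_zero k)
    have hk1 : (k + 1 : ℂ) ≠ 0 := by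
      have : ((k + 1 : ℕ) : ℂ) ≠ 0 := Nat.cast_ne_zero.2 (Nat.succ_ne_zero k)
      push_cast at this; exact this
    rw [hk]
    field_simp
    rw [show k + 1 - 1 = k by omega]; push_cast; ring
  have := hexp.mul hsum
  have e : -(Complex.exp (-a) * a ^ n / (Nat.factorial n : ℂ)) =
      -Complex.exp (-a) * ∑ k ∈ Finset.range (n + 1), a ^ k / (Nat.factorial k : ℂ) +
        Complex.exp (-a) * ∑ k ∈ Finset.range n, a ^ k / (Nat.factorial k : ℂ) := by
    rw [Finset.sum_range_succ]
    ring
  rw [e]; exact this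

lemma diff_le (n : ℕ) (b : ℝ) (hb : 0 ≤ b) (a : ℂ) :
    ‖normGammaC n a - normGammaC n (b : ℂ)‖ ≤
      ‖a - (b : ℂ)‖ *
        (Real.exp (‖a - (b : ℂ)‖ - b) * (b + ‖a - (b : ℂ)‖) ^ n /
          (Nat.factorial n : ℝ)) := by
  set m : ℝ := ‖a - (b : ℂ)‖ with hm
  set s : Set ℂ := segment ℝ (b : ℂ) a with hs
  have hm0 : 0 ≤ m := norm_nonneg _
  set C : ℝ := Real.exp (m - b) * (b + m) ^ n / (Nat.factorial n : ℝ) with hC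
  have hsub : s ⊆ Metric.closedBall (b : ℂ) m := by
    have : Convex ℝ (Metric.closedBall (b : ℂ) m) := convex_closedBall _ _
    apply this.segment_subset
    · exact Metric.mem_closedBall_self hm0
    · rw [Metric.mem_closedBall, dist_eq_norm]
  have bound : ∀ t ∈ s, ‖ContinuousLinearMap.smulRight (1 : ℂ →L[ℂ] ℂ)
      (-(Complex.exp (-t) * t ^ n / (Nat.factorial n : ℂ)))‖ ≤ C := by
    intro t ht
    have htb : ‖t - (b : ℂ)‖ ≤ m := by
      have := hsub ht
      rwa [Metric.mem_closedBall, dist_eq_norm] at this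
    rw [ContinuousLinearMap.norm_smulRight_apply, norm_one, one_mul]
    have h1 : ‖-(Complex.exp (-t) * t ^ n / (Nat.factorial n : ℂ))‖ =
        Real.exp (-t.re) * ‖t‖ ^ n / (Nat.factorial n : ℝ) := by
      rw [norm_neg]
      simp [Complex.norm_exp, map_div₀, map_mul, map_pow, Complex.norm_natCast]
    rw [h1, hC]
    have hre : b - m ≤ t.re := by
      have : |(t - (b : ℂ)).re| ≤ m := le_trans (Complex.abs_re_le_norm _) htb
      have := abs_le.1 this
      simp [Complex.sub_re] at this
      linarith [this.1]
    have habs : ‖t‖ ≤ b + m := by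
      calc ‖t‖ = ‖(t - (b:ℂ)) + (b:ℂ)‖ := by ring_nf
        _ ≤ ‖t - (b:ℂ)‖ + ‖(b:ℂ)‖ := norm_add_le _ _
        _ ≤ m + b := by
            rw [Complex.norm_of_nonneg hb]; linarith
        _ = b + m := by ring
    have e1 : Real.exp (-t.re) ≤ Real.exp (m - b) := Real.exp_le_exp.2 (by linarith)
    have e2 : ‖t‖ ^ n ≤ (b + m) ^ n :=
      pow_le_pow_left₀ (norm_nonneg _) habs n
    have hfpos : (0:ℝ) < (Nat.factorial n : ℝ) := by exact_mod_cast n.factorial_pos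
    exact div_le_div_of_nonneg_right (mul_le_mul e1 e2 (by positivity) (Real.exp_nonneg _)) hfpos.le
  have hderiv : ∀ t ∈ s, HasFDerivWithinAt (normGammaC n)
      (ContinuousLinearMap.smulRight (1 : ℂ →L[ℂ] ℂ)
        (-(Complex.exp (-t) * t ^ n / (Nat.factorial n : ℂ)))) s t := fun t _ =>
    ((hasDerivAt_normGammaC n t).hasDerivWithinAt).hasFDerivWithinAt
  have := Convex.norm_image_sub_le_of_norm_hasFDerivWithin_le hderiv bound
    (convex_segment _ _) (left_mem_segment ℝ _ _) (right_mem_segment ℝ _ _)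
  calc ‖normGammaC n a - normGammaC n (b : ℂ)‖ ≤ C * ‖a - (b:ℂ)‖ := this
    _ = m * C := by rw [mul_comm]

lemma mono_pow_exp (n : ℕ) (hn : 1 ≤ n) (x y : ℝ) (hx : 0 ≤ x) (hxy : x ≤ y) (hyn : y ≤ n) :
    x ^ n * Real.exp (-x) ≤ y ^ n * Real.exp (-y) := by
  rcases eq_or_lt_of_le hx with h0 | hx0
  · rw [← h0, zero_pow (by omega : n ≠ 0), zero_mul]
    exact mul_nonneg (pow_nonneg (h0 ▸ hxy) n) (Real.exp_nonneg _)
  · have hy0 : 0 < y := lt_of_lt_of_le hx0 hxy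
    have l1 : Real.log (x / y) ≤ x / y - 1 := Real.log_le_sub_one_of_pos (div_pos hx0 hy0)
    have l2 : Real.log (x / y) = Real.log x - Real.log y := Real.log_div hx0.ne' hy0.ne'
    have l3 : y * (x / y - 1) = x - y := by field_simp
    have l4 : y * (Real.log x - Real.log y) ≤ x - y := by
      calc y * (Real.log x - Real.log y) = y * Real.log (x / y) := by rw [l2]
        _ ≤ y * (x / y - 1) := mul_le_mul_of_nonneg_left l1 hy0.le
        _ = x - y := l3
    have l5 : Real.log x ≤ Real.log y := Real.log_le_log hx0 hxy
    have key : y - x ≤ (n : ℝ) * Real.log y - (n : ℝ) * Real.log x := by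
      nlinarith [mul_nonneg (sub_nonneg.2 hyn) (sub_nonneg.2 l5)]
    have ex : x ^ n * Real.exp (-x) = Real.exp ((n : ℝ) * Real.log x + (-x)) := by
      rw [Real.exp_add, Real.exp_nat_mul, Real.exp_log hx0]
    have ey : y ^ n * Real.exp (-y) = Real.exp ((n : ℝ) * Real.log y + (-y)) := by
      rw [Real.exp_add, Real.exp_nat_mul, Real.exp_log hy0]
    rw [ex, ey]
    exact Real.exp_le_exp.2 (by linarith)

lemma log_one_sub_le {ε : ℝ} (hε0 : 0 < ε) (hε1 : ε < 1) :
    Real.log (1 - ε) ≤ -ε - ε ^ 2 / 4 - ε ^ 3 / 8 := by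
  have h1 : (0 : ℝ) < 1 - ε := by linarith
  have he2 : ε ^ 2 ≤ ε := by nlinarith
  have he3 : ε ^ 3 ≤ ε ^ 2 := by nlinarith
  have hcpos : 0 < 1 - ε / 2 - ε ^ 2 / 8 - ε ^ 3 / 16 := by nlinarith
  have hsq : 1 - ε ≤ (1 - ε / 2 - ε ^ 2 / 8 - ε ^ 3 / 16) ^ 2 := by
    nlinarith [pow_nonneg hε0.le 4, pow_nonneg hε0.le 5, pow_nonneg hε0.le 6]
  have hs : Real.sqrt (1 - ε) ≤ 1 - ε / 2 - ε ^ 2 / 8 - ε ^ 3 / 16 := by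
    rw [show (1 - ε / 2 - ε ^ 2 / 8 - ε ^ 3 / 16) =
        Real.sqrt ((1 - ε / 2 - ε ^ 2 / 8 - ε ^ 3 / 16) ^ 2) from (Real.sqrt_sq hcpos.le).symm]
    exact Real.sqrt_le_sqrt hsq
  have hlog : Real.log (Real.sqrt (1 - ε)) ≤ Real.sqrt (1 - ε) - 1 :=
    Real.log_le_sub_one_of_pos (Real.sqrt_pos.2 h1)
  have h2 : Real.log (1 - ε) = 2 * Real.log (Real.sqrt (1 - ε)) := by
    rw [Real.log_sqrt h1.le]; ring
  rw [h2]
  linarith [hs, hlog]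

lemma core (ε : ℝ) (hε0 : 0 < ε) (hε1 : ε < 1) (n : ℕ) (hn : 1 ≤ n) (b m : ℝ)
    (hb : 0 ≤ b) (hm : 0 ≤ m) (hbn : b ≤ (n : ℝ) * (1 - ε))
    (hmn : m * (3 + ε / (1 - ε)) ≤ (n : ℝ) * ε ^ 3 / 8) :
    m * (Real.exp (m - b) * (b + m) ^ n / (Nat.factorial n : ℝ)) ≤
      Real.exp (-ε ^ 2 * n / 4) := by
  have h1ε : (0 : ℝ) < 1 - ε := by linarith
  have hnpos : (0 : ℝ) < n := by exact_mod_cast Nat.pos_of_ne_zero (by omega)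
  set r : ℝ := (n : ℝ) * (1 - ε) + m with hr
  have hrpos : 0 < r := by positivity
  have he3 : ε ^ 3 ≤ ε := by
    nlinarith [mul_pos (mul_pos hε0 h1ε) (show (0:ℝ) < 1 + ε by linarith)]
  have hd : 0 ≤ m * (ε / (1 - ε)) := mul_nonneg hm (div_nonneg hε0.le h1ε.le)
  have hne3 : (n : ℝ) * ε ^ 3 ≤ (n : ℝ) * ε := mul_le_mul_of_nonneg_left he3 hnpos.le
  have hmen : m ≤ (n : ℝ) * ε := by nlinarith [hd, hmn, hne3]
  have hrn : r ≤ (n : ℝ) := by nlinarith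
  have step1 : (b + m) ^ n * Real.exp (-(b + m)) ≤ r ^ n * Real.exp (-r) :=
    mono_pow_exp n hn _ _ (by linarith) (by linarith) hrn
  have t1 : m ≤ Real.exp m := by linarith [Real.add_one_le_exp m]
  -- log r bound
  have hne : (n : ℝ) * (1 - ε) ≠ 0 := by positivity
  have hlogr : Real.log r ≤ Real.log ((n : ℝ) * (1 - ε)) + m / ((n : ℝ) * (1 - ε)) := by
    have l1 : Real.log (r / ((n : ℝ) * (1 - ε))) ≤ r / ((n : ℝ) * (1 - ε)) - 1 :=
      Real.log_le_sub_one_of_pos (by positivity)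
    have l2 : Real.log (r / ((n : ℝ) * (1 - ε))) =
        Real.log r - Real.log ((n : ℝ) * (1 - ε)) := Real.log_div hrpos.ne' hne
    have l3 : r / ((n : ℝ) * (1 - ε)) - 1 = m / ((n : ℝ) * (1 - ε)) := by
      rw [hr]; field_simp; ring
    linarith [l2 ▸ l1, l3 ▸ (le_refl (r / ((n : ℝ) * (1 - ε)) - 1))]
  have hlogmul : Real.log ((n : ℝ) * (1 - ε)) = Real.log n + Real.log (1 - ε) :=
    Real.log_mul hnpos.ne' h1ε.ne'
  have t3 : r ^ n ≤ Real.exp ((n : ℝ) * Real.log n + (n : ℝ) * Real.log (1 - ε) + m / (1 - ε)) := by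
    have : r ^ n = Real.exp ((n : ℝ) * Real.log r) := by
      rw [Real.exp_nat_mul, Real.exp_log hrpos]
    rw [this]
    apply Real.exp_le_exp.2
    have := mul_le_mul_of_nonneg_left hlogr hnpos.le
    have hdiv : (n : ℝ) * (m / ((n : ℝ) * (1 - ε))) = m / (1 - ε) := by field_simp
    nlinarith [this]
  have hinv : (1 : ℝ) / (Nat.factorial n : ℝ) ≤ Real.exp ((n : ℝ) - (n : ℝ) * Real.log n) := by
    have h1 : (n : ℝ) ^ n / (Nat.factorial n : ℝ) ≤ Real.exp n :=
      Real.pow_div_factorial_le_exp (x := (n:ℝ)) hnpos.le n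
    have h2 : (n : ℝ) ^ n = Real.exp ((n : ℝ) * Real.log n) := by
      rw [Real.exp_nat_mul, Real.exp_log hnpos]
    have hfpos : (0 : ℝ) < (Nat.factorial n : ℝ) := by exact_mod_cast n.factorial_pos
    rw [Real.exp_sub, ← h2, div_le_div_iff₀ hfpos (by positivity)]
    rw [div_le_iff₀ hfpos] at h1
    nlinarith [h1, hfpos, pow_pos hnpos n]
  have hlog1 : Real.log (1 - ε) ≤ -ε - ε ^ 2 / 4 - ε ^ 3 / 8 := log_one_sub_le hε0 hε1
  have heq0 : m * (Real.exp (m - b) * (b + m) ^ n / (Nat.factorial n : ℝ)) =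
      m * Real.exp (2 * m) * ((b + m) ^ n * Real.exp (-(b + m))) * (1 / (Nat.factorial n : ℝ)) := by
    have : Real.exp (m - b) = Real.exp (2 * m) * Real.exp (-(b + m)) := by
      rw [← Real.exp_add]; ring_nf
    rw [this]; ring
  rw [heq0]
  have hfpos : (0 : ℝ) < (Nat.factorial n : ℝ) := by exact_mod_cast n.factorial_pos
  calc m * Real.exp (2 * m) * ((b + m) ^ n * Real.exp (-(b + m))) * (1 / (Nat.factorial n : ℝ))
      ≤ Real.exp m * Real.exp (2 * m) * (r ^ n * Real.exp (-r)) *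
        Real.exp ((n : ℝ) - (n : ℝ) * Real.log n) := by
        apply mul_le_mul
        · apply mul_le_mul
          · exact mul_le_mul_of_nonneg_right t1 (Real.exp_nonneg _)
          · exact step1
          · positivity
          · positivity
        · exact hinv
        · positivity
        · positivity
    _ ≤ Real.exp m * Real.exp (2 * m) *
        (Real.exp ((n : ℝ) * Real.log n + (n : ℝ) * Real.log (1 - ε) + m / (1 - ε)) *
          Real.exp (-r)) * Real.exp ((n : ℝ) - (n : ℝ) * Real.log n) := by
        apply mul_le_mul_of_nonneg_right _ (Real.exp_nonneg _)
        apply mul_le_mul_of_nonneg_left _ (by positivity)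
        exact mul_le_mul_of_nonneg_right t3 (Real.exp_nonneg _)
    _ = Real.exp (m + 2 * m + ((n : ℝ) * Real.log n + (n : ℝ) * Real.log (1 - ε) + m / (1 - ε))
          + (-r) + ((n : ℝ) - (n : ℝ) * Real.log n)) := by
        rw [← Real.exp_add, ← Real.exp_add, ← Real.exp_add, ← Real.exp_add]
        congr 1
        ring
    _ ≤ Real.exp (-ε ^ 2 * n / 4) := by
        apply Real.exp_le_exp.2
        have h5 : (n : ℝ) * Real.log (1 - ε) ≤ (n : ℝ) * (-ε - ε ^ 2 / 4 - ε ^ 3 / 8) :=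
          mul_le_mul_of_nonneg_left hlog1 hnpos.le
        have heq1 : 2 * m + m / (1 - ε) = m * (3 + ε / (1 - ε)) := by
          field_simp; ring
        have h6 : (n : ℝ) * (-ε - ε ^ 2 / 4 - ε ^ 3 / 8) =
            -((n : ℝ) * ε) - (n : ℝ) * ε ^ 2 / 4 - (n : ℝ) * ε ^ 3 / 8 := by ring
        have h7 : -ε ^ 2 * (n : ℝ) / 4 = -((n : ℝ) * ε ^ 2) / 4 := by ring
        linarith [h5, heq1, hmn, h6, h7]

/-- Off-diagonal estimate: for every ε ∈ (0,1) and τ > 0 there exist C > 0 and n₀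
such that for all n ≥ n₀ and all z, w ∈ ℂ with π|z|² ≤ n(1−ε) and |z−w| ≤ τ:
|Γ(n+1, π z w̄)/n! − Γ(n+1, π|z|²)/n!| ≤ C e^{−ε²n/4}. -/
theorem statement14 (ε τ : ℝ) (hε0 : 0 < ε) (hε1 : ε < 1) (hτ : 0 < τ) :
    ∃ C : ℝ, 0 < C ∧ ∃ n₀ : ℕ, ∀ n : ℕ, n₀ ≤ n → ∀ z w : ℂ,
      Real.pi * ‖z‖ ^ 2 ≤ (n : ℝ) * (1 - ε) →
      ‖z - w‖ ≤ τ →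
        ‖normGammaC n ((Real.pi : ℂ) * z * (starRingEnd ℂ) w) -
            normGammaC n ((Real.pi * ‖z‖ ^ 2 : ℝ) : ℂ)‖ ≤
          C * Real.exp (-ε ^ 2 * n / 4) := by
  have h1ε : (0 : ℝ) < 1 - ε := by linarith
  set K : ℝ := τ * Real.sqrt Real.pi * (3 + ε / (1 - ε)) with hK
  have hKpos : 0 < K := by
    have : 0 < 3 + ε / (1 - ε) := by positivity
    have : 0 < Real.sqrt Real.pi := Real.sqrt_pos.2 Real.pi_pos
    positivity
  refine ⟨1, one_pos, ⌈(8 * K / ε ^ 3) ^ 2⌉₊ + 1, fun n hn z w hbn hzw => ?_⟩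
  have hn1 : 1 ≤ n := le_trans (Nat.le_add_left 1 _) hn
  set b : ℝ := Real.pi * ‖z‖ ^ 2 with hb
  have hb0 : 0 ≤ b := by positivity
  set a : ℂ := (Real.pi : ℂ) * z * (starRingEnd ℂ) w with ha
  set m : ℝ := ‖a - (b : ℂ)‖ with hm
  have hm0 : 0 ≤ m := norm_nonneg _
  -- identify b as π z z̄
  have hzz : ((b : ℝ) : ℂ) = (Real.pi : ℂ) * z * (starRingEnd ℂ) z := by
    rw [hb, mul_assoc, Complex.mul_conj]
    push_cast [← Complex.sq_norm]
    ring
  -- bound m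
  have hmval : m = Real.pi * ‖z‖ * ‖z - w‖ := by
    rw [hm, hzz]
    have : a - (Real.pi : ℂ) * z * (starRingEnd ℂ) z
        = (Real.pi : ℂ) * z * (starRingEnd ℂ) (w - z) := by
      rw [ha, map_sub]; ring
    rw [this, norm_mul, norm_mul, Complex.norm_conj]
    have : ‖w - z‖ = ‖z - w‖ := by
      rw [← neg_sub z w, norm_neg]
    rw [this, Complex.norm_of_nonneg Real.pi_pos.le]
  have hsq : (Real.pi * ‖z‖) ^ 2 ≤ Real.pi * n := by
    have h1 : Real.pi * ‖z‖ ^ 2 ≤ (n : ℝ) := by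
      have : (n : ℝ) * (1 - ε) ≤ n := by
        nlinarith [Nat.cast_nonneg (α := ℝ) n]
      linarith [hbn]
    nlinarith [Real.pi_pos]
  have hpz : Real.pi * ‖z‖ ≤ Real.sqrt Real.pi * Real.sqrt n := by
    have h0 : 0 ≤ Real.pi * ‖z‖ := by positivity
    calc Real.pi * ‖z‖ = Real.sqrt ((Real.pi * ‖z‖) ^ 2) :=
          (Real.sqrt_sq h0).symm
      _ ≤ Real.sqrt (Real.pi * n) := Real.sqrt_le_sqrt hsq
      _ = Real.sqrt Real.pi * Real.sqrt n := Real.sqrt_mul Real.pi_pos.le _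
  have hmle : m ≤ τ * Real.sqrt Real.pi * Real.sqrt n := by
    rw [hmval]
    calc Real.pi * ‖z‖ * ‖z - w‖
        ≤ (Real.sqrt Real.pi * Real.sqrt n) * τ := by
          apply mul_le_mul hpz hzw (norm_nonneg _) (by positivity)
      _ = τ * Real.sqrt Real.pi * Real.sqrt n := by ring
  -- the sqrt(n) condition
  have hNn : (8 * K / ε ^ 3) ^ 2 ≤ (n : ℝ) := by
    have h1 : ((8 * K / ε ^ 3) ^ 2 : ℝ) ≤ (⌈(8 * K / ε ^ 3) ^ 2⌉₊ : ℝ) := Nat.le_ceil _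
    have h2 : (⌈(8 * K / ε ^ 3) ^ 2⌉₊ : ℝ) ≤ (n : ℝ) := by
      exact_mod_cast le_trans (Nat.le_add_right _ 1) hn
    linarith
  have hsn : 8 * K / ε ^ 3 ≤ Real.sqrt n := by
    have h0 : 0 ≤ 8 * K / ε ^ 3 := by positivity
    calc 8 * K / ε ^ 3 = Real.sqrt ((8 * K / ε ^ 3) ^ 2) := (Real.sqrt_sq h0).symm
      _ ≤ Real.sqrt n := Real.sqrt_le_sqrt hNn
  have hmn : m * (3 + ε / (1 - ε)) ≤ (n : ℝ) * ε ^ 3 / 8 := by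
    have h3 : (0 : ℝ) < 3 + ε / (1 - ε) := by positivity
    have hsn0 : 0 ≤ Real.sqrt (n : ℝ) := Real.sqrt_nonneg _
    have step : m * (3 + ε / (1 - ε)) ≤ K * Real.sqrt n := by
      rw [hK]
      calc m * (3 + ε / (1 - ε)) ≤ (τ * Real.sqrt Real.pi * Real.sqrt n) * (3 + ε / (1 - ε)) :=
            mul_le_mul_of_nonneg_right hmle h3.le
        _ = τ * Real.sqrt Real.pi * (3 + ε / (1 - ε)) * Real.sqrt n := by ring
    have step2 : K * Real.sqrt n ≤ (ε ^ 3 / 8) * (Real.sqrt n * Real.sqrt n) := by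
      have hKle : K ≤ (ε ^ 3 / 8) * Real.sqrt n := by
        rw [div_le_iff₀ (by positivity : (0:ℝ) < ε ^ 3)] at hsn
        nlinarith [hsn]
      calc K * Real.sqrt n ≤ ((ε ^ 3 / 8) * Real.sqrt n) * Real.sqrt n :=
            mul_le_mul_of_nonneg_right hKle hsn0
        _ = (ε ^ 3 / 8) * (Real.sqrt n * Real.sqrt n) := by ring
    have hss : Real.sqrt (n : ℝ) * Real.sqrt (n : ℝ) = (n : ℝ) :=
      Real.mul_self_sqrt (Nat.cast_nonneg n)
    rw [hss] at step2
    calc m * (3 + ε / (1 - ε)) ≤ K * Real.sqrt n := step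
      _ ≤ ε ^ 3 / 8 * n := step2
      _ = (n : ℝ) * ε ^ 3 / 8 := by ring
  -- combine
  have hdle := diff_le n b hb0 a
  have hcore := core ε hε0 hε1 n hn1 b m hb0 hm0 hbn hmn
  rw [one_mul]
  calc ‖normGammaC n a - normGammaC n ((b : ℝ) : ℂ)‖
      ≤ m * (Real.exp (m - b) * (b + m) ^ n / (Nat.factorial n : ℝ)) := hdle
    _ ≤ Real.exp (-ε ^ 2 * n / 4) := hcore
end

section
/- For every n ∈ ℕ, every ρ > 0 and every polynomial p of degree at most n: ∫_{|z|>ρ} |p(z)|² e^{−π|z|²} dm(z) ≤ (Γ(n+1, πρ²)/n!) · ‖p‖²_{F²}. -/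
open MeasureTheory

open MeasureTheory Real Set Filter

lemma intOn_pow_exp (k : ℕ) {a : ℝ} (ha : 0 ≤ a) :
    IntegrableOn (fun t : ℝ => t ^ k * rexp (-t)) (Ioi a) := by
  have h := (Real.GammaIntegral_convergent (s := k + 1) (by positivity)).mono_set
    (Ioi_subset_Ioi ha)
  refine h.congr_fun (fun x hx => ?_) measurableSet_Ioi
  have hx0 : 0 < x := lt_of_le_of_lt ha hx
  dsimp only
  rw [show ((k : ℝ) + 1 - 1) = (k : ℝ) by ring, Real.rpow_natCast, mul_comm]

lemma gamma_nonneg (k : ℕ) {a : ℝ} (ha : 0 ≤ a) : 0 ≤ ∫ t in Ioi a, t ^ k * rexp (-t) := by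
  refine setIntegral_nonneg measurableSet_Ioi (fun t ht => ?_)
  have : (0:ℝ) ≤ t := le_trans ha (le_of_lt ht)
  positivity

lemma gamma_rec (k : ℕ) {a : ℝ} (ha : 0 ≤ a) :
    ∫ t in Ioi a, t ^ (k + 1) * rexp (-t)
      = (k + 1) * (∫ t in Ioi a, t ^ k * rexp (-t)) + a ^ (k + 1) * rexp (-a) := by
  have hd : ∀ x ∈ Ici a, HasDerivAt (fun t : ℝ => -(t ^ (k + 1) * rexp (-t)))
      (x ^ (k + 1) * rexp (-x) - (k + 1) * (x ^ k * rexp (-x))) x := by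
    intro x _
    have h1 : HasDerivAt (fun t : ℝ => t ^ (k + 1)) ((k + 1) * x ^ k) x := by
      simpa using hasDerivAt_pow (k + 1) x
    have h2 : HasDerivAt (fun t : ℝ => rexp (-t)) (-rexp (-x)) x := by
      simpa using ((hasDerivAt_id x).neg.exp)
    have := (h1.mul h2).neg
    refine this.congr_deriv ?_
    ring
  have hint : IntegrableOn (fun x : ℝ => x ^ (k + 1) * rexp (-x) - (k + 1) * (x ^ k * rexp (-x)))
      (Ioi a) := (intOn_pow_exp (k + 1) ha).sub ((intOn_pow_exp k ha).const_mul _)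
  have htend : Tendsto (fun t : ℝ => -(t ^ (k + 1) * rexp (-t))) atTop (nhds 0) := by
    simpa using (tendsto_pow_mul_exp_neg_atTop_nhds_zero (k + 1)).neg
  have key := integral_Ioi_of_hasDerivAt_of_tendsto' hd hint htend
  rw [integral_sub (intOn_pow_exp (k + 1) ha) ((intOn_pow_exp k ha).const_mul _),
    MeasureTheory.integral_const_mul] at key
  simp only [zero_sub, neg_neg] at key
  linarith [key]

lemma gamma_zero (k : ℕ) : ∫ t in Ioi (0 : ℝ), t ^ k * rexp (-t) = k.factorial := by
  induction k with
  | zero => simpa using integral_exp_neg_Ioi_zero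
  | succ k ih =>
    rw [gamma_rec k le_rfl, ih]
    simp only [Nat.factorial_succ, zero_pow (Nat.succ_ne_zero k), zero_mul, add_zero]
    push_cast
    ring

lemma gamma_mono {k n : ℕ} (h : k ≤ n) {a : ℝ} (ha : 0 ≤ a) :
    (n.factorial : ℝ) * ∫ t in Ioi a, t ^ k * rexp (-t)
      ≤ (k.factorial : ℝ) * ∫ t in Ioi a, t ^ n * rexp (-t) := by
  induction n, h using Nat.le_induction with
  | base => exact le_rfl
  | succ n hkn ih =>

    have hrec := gamma_rec n ha
    have h1 : 0 ≤ a ^ (n + 1) * rexp (-a) := by positivity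
    have h2 : (0:ℝ) < n + 1 := by positivity
    rw [Nat.factorial_succ]
    push_cast
    nlinarith [gamma_nonneg k ha, gamma_nonneg n ha, mul_le_mul_of_nonneg_left ih (le_of_lt h2)]

lemma intOn_pow_gauss (m : ℕ) {ρ : ℝ} (hρ : 0 ≤ ρ) :
    IntegrableOn (fun r : ℝ => r ^ m * rexp (-π * r ^ 2)) (Ioi ρ) := by
  have h := (integrable_rpow_mul_exp_neg_mul_sq (b := π) pi_pos
      (s := m) (lt_of_lt_of_le neg_one_lt_zero (Nat.cast_nonneg m))).integrableOn.mono_set (subset_univ (Ioi ρ))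
  refine h.congr_fun (fun x hx => ?_) measurableSet_Ioi
  have hx0 : 0 < x := lt_of_le_of_lt hρ hx
  dsimp only
  rw [Real.rpow_natCast]

lemma tendsto_pow_gauss (m : ℕ) :
    Tendsto (fun r : ℝ => r ^ m * rexp (-π * r ^ 2)) atTop (nhds 0) := by
  refine squeeze_zero_norm' ?_ (tendsto_pow_mul_exp_neg_atTop_nhds_zero m)
  · filter_upwards [eventually_ge_atTop (1 : ℝ)] with r hr
    have h1 : r ≤ π * r ^ 2 := by nlinarith [pi_gt_three]
    have : rexp (-π * r ^ 2) ≤ rexp (-r) := by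
      apply Real.exp_le_exp.2; linarith
    have h0 : (0:ℝ) ≤ r ^ m := by positivity
    rw [Real.norm_eq_abs, abs_of_nonneg (by positivity)]
    exact mul_le_mul_of_nonneg_left this h0

lemma radial_rec (k : ℕ) {ρ : ℝ} (hρ : 0 ≤ ρ) :
    2 * π * ∫ r in Ioi ρ, r ^ (2 * (k + 1) + 1) * rexp (-π * r ^ 2)
      = (2 * k + 2) * (∫ r in Ioi ρ, r ^ (2 * k + 1) * rexp (-π * r ^ 2))
        + ρ ^ (2 * k + 2) * rexp (-π * ρ ^ 2) := by
  have hd : ∀ x ∈ Ici ρ, HasDerivAt (fun r : ℝ => -(r ^ (2 * k + 2) * rexp (-π * r ^ 2)))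
      (2 * π * (x ^ (2 * (k + 1) + 1) * rexp (-π * x ^ 2))
        - (2 * k + 2) * (x ^ (2 * k + 1) * rexp (-π * x ^ 2))) x := by
    intro x _
    have h1 : HasDerivAt (fun r : ℝ => r ^ (2 * k + 2)) ((2 * k + 2) * x ^ (2 * k + 1)) x := by
      simpa using hasDerivAt_pow (2 * k + 2) x
    have h2 : HasDerivAt (fun r : ℝ => -π * r ^ 2) (-π * (2 * x)) x := by
      simpa using (hasDerivAt_pow 2 x).const_mul (-π)
    have h3 := h2.exp
    have := (h1.mul h3).neg
    refine this.congr_deriv ?_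
    simp only [show 2 * (k + 1) + 1 = (2 * k + 1) + 2 by ring, pow_add, pow_succ]
    ring
  have hint : IntegrableOn (fun x : ℝ => 2 * π * (x ^ (2 * (k + 1) + 1) * rexp (-π * x ^ 2))
      - (2 * k + 2) * (x ^ (2 * k + 1) * rexp (-π * x ^ 2))) (Ioi ρ) :=
    ((intOn_pow_gauss _ hρ).const_mul _).sub ((intOn_pow_gauss _ hρ).const_mul _)
  have htend : Tendsto (fun r : ℝ => -(r ^ (2 * k + 2) * rexp (-π * r ^ 2))) atTop (nhds 0) := by
    simpa using (tendsto_pow_gauss (2 * k + 2)).neg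
  have key := integral_Ioi_of_hasDerivAt_of_tendsto' hd hint htend
  rw [integral_sub ((intOn_pow_gauss _ hρ).const_mul _) ((intOn_pow_gauss _ hρ).const_mul _),
    MeasureTheory.integral_const_mul, MeasureTheory.integral_const_mul] at key
  simp only [zero_sub, neg_neg] at key
  linarith [key]

lemma radial_eq (k : ℕ) {ρ : ℝ} (hρ : 0 ≤ ρ) :
    2 * π * π ^ k * ∫ r in Ioi ρ, r ^ (2 * k + 1) * rexp (-π * r ^ 2)
      = ∫ t in Ioi (π * ρ ^ 2), t ^ k * rexp (-t) := by
  induction k with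
  | zero =>
    have hd : ∀ x ∈ Ici ρ, HasDerivAt (fun r : ℝ => -(rexp (-π * r ^ 2) / (2 * π)))
        (x ^ (2 * 0 + 1) * rexp (-π * x ^ 2)) x := by
      intro x _
      have h2 : HasDerivAt (fun r : ℝ => -π * r ^ 2) (-π * (2 * x)) x := by
        simpa using (hasDerivAt_pow 2 x).const_mul (-π)
      have := ((h2.exp).div_const (2 * π)).neg
      refine this.congr_deriv ?_
      field_simp
      ring
    have key := integral_Ioi_of_hasDerivAt_of_tendsto' hd (intOn_pow_gauss _ hρ)
      (by simpa using ((tendsto_pow_gauss 0).div_const (2 * π)).neg : Tendsto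
        (fun r : ℝ => -(rexp (-π * r ^ 2) / (2 * π))) atTop (nhds 0))
    rw [key]
    simp only [pow_zero, one_mul, neg_mul]
    rw [integral_exp_neg_Ioi]
    have hπ : π ≠ 0 := pi_ne_zero
    field_simp
    ring
  | succ k ih =>
    have h1 := radial_rec k hρ
    have h2 := gamma_rec k (by positivity : (0:ℝ) ≤ π * ρ ^ 2)
    rw [← ih] at h2
    simp only [neg_mul] at h1 h2 ⊢
    linear_combination (π:ℝ)^(k+1) * h1 - h2


lemma integrable_gauss_complex {b : ℝ} (hb : 0 < b) :
    Integrable (fun z : ℂ => rexp (-b * ‖z‖ ^ 2)) := by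
  have h := (GaussianFourier.integrable_cexp_neg_mul_sq_norm_add (V := ℂ) (b := (b : ℂ))
      (by simpa using hb) 0 0).norm
  refine h.congr (Filter.Eventually.of_forall (fun z => ?_))
  simp [Complex.norm_exp]
  left
  norm_cast

lemma pow_gauss_bound (m : ℕ) (x : ℝ) (hx : 0 ≤ x) :
    x ^ m * rexp (-(π/2) * x ^ 2) ≤ m.factorial * rexp (1/2) := by
  have h1 : x ^ m ≤ m.factorial * rexp x := by
    have h2 := Real.sum_le_exp_of_nonneg hx (m + 1)
    have h3 : x ^ m / m.factorial ≤ ∑ i ∈ Finset.range (m + 1), x ^ i / i.factorial := by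
      refine Finset.single_le_sum (f := fun i => x ^ i / (i.factorial : ℝ))
        (fun i _ => by positivity) (Finset.self_mem_range_succ m)
    have h4 : x ^ m / m.factorial ≤ rexp x := le_trans h3 h2
    have h5 : (0:ℝ) < m.factorial := by positivity
    calc x ^ m = (x ^ m / m.factorial) * m.factorial := by field_simp
    _ ≤ rexp x * m.factorial := by gcongr
    _ = m.factorial * rexp x := by ring
  have h6 : rexp x * rexp (-(π/2) * x ^ 2) ≤ rexp (1/2) := by
    rw [← Real.exp_add]
    apply Real.exp_le_exp.2
    nlinarith [sq_nonneg (x - 1), pi_gt_three, sq_nonneg x]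
  calc x ^ m * rexp (-(π/2) * x ^ 2) ≤ (m.factorial * rexp x) * rexp (-(π/2) * x ^ 2) := by
        have : (0:ℝ) ≤ rexp (-(π/2) * x ^ 2) := (Real.exp_pos _).le
        exact mul_le_mul_of_nonneg_right h1 this
    _ = m.factorial * (rexp x * rexp (-(π/2) * x ^ 2)) := by ring
    _ ≤ m.factorial * rexp (1/2) := by
        have h5 : (0:ℝ) ≤ m.factorial := by positivity
        exact mul_le_mul_of_nonneg_left h6 h5

lemma integrable_monomial (j k : ℕ) :
    Integrable (fun z : ℂ => z ^ j * (starRingEnd ℂ) z ^ k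
      * (rexp (-π * ‖z‖ ^ 2) : ℂ)) := by
  refine Integrable.mono' (g := fun z : ℂ => ((j+k).factorial * rexp (1/2))
      * rexp (-(π/2) * ‖z‖ ^ 2)) ((integrable_gauss_complex (by positivity)).const_mul _)
    ?_ (Filter.Eventually.of_forall (fun z => ?_))
  · apply Continuous.aestronglyMeasurable
    continuity
  · rw [norm_mul, norm_mul, norm_pow, norm_pow]
    simp only [Complex.norm_conj, Complex.norm_real, Real.norm_eq_abs,
      abs_of_nonneg (Real.exp_pos _).le]
    have hb := pow_gauss_bound (j + k) (‖z‖) (norm_nonneg z)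
    have hsplit : rexp (-π * ‖z‖ ^ 2)
        = rexp (-(π/2) * ‖z‖ ^ 2) * rexp (-(π/2) * ‖z‖ ^ 2) := by
      rw [← Real.exp_add]; ring_nf
    have hE : (0:ℝ) ≤ rexp (-(π/2) * ‖z‖ ^ 2) := (Real.exp_pos _).le
    calc ‖z‖ ^ j * ‖z‖ ^ k * rexp (-π * ‖z‖ ^ 2)
        = (‖z‖ ^ (j + k) * rexp (-(π/2) * ‖z‖ ^ 2))
          * rexp (-(π/2) * ‖z‖ ^ 2) := by rw [hsplit, pow_add]; ring
      _ ≤ ((j + k).factorial * rexp (1/2)) * rexp (-(π/2) * ‖z‖ ^ 2) :=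
          mul_le_mul_of_nonneg_right hb hE

lemma I_jk (j k : ℕ) {ρ : ℝ} (hρ : 0 ≤ ρ) :
    (∫ z in (Metric.closedBall (0:ℂ) ρ)ᶜ,
        z ^ j * (starRingEnd ℂ) z ^ k * (rexp (-π * ‖z‖ ^ 2) : ℂ))
      = ((∫ r in Ioi ρ, r ^ (j + k + 1) * rexp (-π * r ^ 2) : ℝ) : ℂ)
        * ∫ θ in Ioo (-π) π, Complex.exp ((((j:ℂ) - k) * θ) * Complex.I) := by
  rw [← integral_indicator (measurableSet_closedBall.compl)]
  rw [← Complex.integral_comp_polarCoord_symm]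
  rw [polarCoord_target]
  have hfun : EqOn
      (fun p : ℝ × ℝ => p.1 • ((Metric.closedBall (0:ℂ) ρ)ᶜ).indicator
        (fun z => z ^ j * (starRingEnd ℂ) z ^ k * (rexp (-π * ‖z‖ ^ 2) : ℂ))
        (Complex.polarCoord.symm p))
      (fun p : ℝ × ℝ => (Ioi ρ).indicator
        (fun r => ((r ^ (j + k + 1) * rexp (-π * r ^ 2) : ℝ) : ℂ)) p.1
        * Complex.exp ((((j:ℂ) - k) * p.2) * Complex.I))
      (Ioi (0:ℝ) ×ˢ Ioo (-π) π) := by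
    rintro ⟨r, θ⟩ ⟨hr, hθ⟩
    simp only [mem_Ioi] at hr
    have habs : ‖Complex.polarCoord.symm (r, θ)‖ = r := by
      rw [Complex.norm_polarCoord_symm, abs_of_pos hr]
    have hmem : Complex.polarCoord.symm (r, θ) ∈ (Metric.closedBall (0:ℂ) ρ)ᶜ ↔ r ∈ Ioi ρ := by
      simp [Metric.mem_closedBall, Complex.dist_eq, Complex.norm_polarCoord_symm, not_le,
        mem_Ioi, abs_of_pos hr]
    by_cases hcase : r ∈ Ioi ρ
    · dsimp only
      rw [indicator_of_mem (hmem.2 hcase), indicator_of_mem hcase]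
      have hz : Complex.polarCoord.symm (r, θ) = (r : ℂ) * Complex.exp (θ * Complex.I) := by
        rw [Complex.polarCoord_symm_apply, Complex.exp_mul_I]
        push_cast
        ring
      simp only [hz, habs, mul_pow, ← Complex.exp_nat_mul, map_mul, map_pow,
        ← Complex.exp_conj, Complex.conj_ofReal, Complex.conj_I, smul_eq_mul,
        norm_mul, Complex.norm_exp_ofReal_mul_I, abs_of_pos hr, Complex.norm_real, Real.norm_eq_abs, Complex.ofReal_one,
        one_pow, mul_one, Complex.real_smul]
      rw [show ((j:ℂ) - k) * θ * Complex.I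
          = (j:ℂ) * (θ * Complex.I) + (k:ℂ) * (θ * -Complex.I) by ring, Complex.exp_add]
      push_cast
      ring_nf
    · dsimp only
      rw [indicator_of_notMem (fun hc => hcase (hmem.1 hc)), indicator_of_notMem hcase]
      simp
  rw [setIntegral_congr_fun (measurableSet_Ioi.prod measurableSet_Ioo) hfun,
    Measure.volume_eq_prod,
    setIntegral_prod_mul (fun r : ℝ => (Ioi ρ).indicator
      (fun r => ((r ^ (j + k + 1) * rexp (-π * r ^ 2) : ℝ) : ℂ)) r)
      (fun θ : ℝ => Complex.exp ((((j:ℂ) - k) * θ) * Complex.I)) (Ioi 0) (Ioo (-π) π),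
    setIntegral_indicator measurableSet_Ioi, Ioi_inter_Ioi, max_eq_right hρ]
  congr 1
  exact integral_ofReal

lemma theta_ne {j k : ℕ} (h : j ≠ k) :
    ∫ θ in Ioo (-π) π, Complex.exp ((((j:ℂ) - k) * θ) * Complex.I) = 0 := by
  have hc : ((j:ℂ) - k) * Complex.I ≠ 0 := by
    apply mul_ne_zero _ Complex.I_ne_zero
    intro hc
    apply h
    have : (j:ℂ) = k := by linear_combination hc
    exact_mod_cast this
  have h1 : ∫ θ in Ioo (-π) π, Complex.exp ((((j:ℂ) - k) * θ) * Complex.I)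
      = ∫ θ in (-π)..π, Complex.exp ((((j:ℂ) - k) * Complex.I) * θ) := by
    rw [intervalIntegral.integral_of_le (by linarith [pi_pos] : -π ≤ π),
      MeasureTheory.integral_Ioc_eq_integral_Ioo]
    congr 1
    ext θ
    ring_nf
  rw [h1, integral_exp_mul_complex hc]
  push_cast
  have h2 : Complex.exp ((((j:ℂ) - k) * Complex.I) * π)
      = Complex.exp ((((j:ℂ) - k) * Complex.I) * (-π)) := by
    rw [Complex.exp_eq_exp_iff_exists_int]
    exact ⟨(j:ℤ) - k, by push_cast; ring⟩
  rw [h2, sub_self, zero_div]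

lemma theta_diag (k : ℕ) :
    ∫ θ in Ioo (-π) π, Complex.exp ((((k:ℂ) - k) * θ) * Complex.I) = ((2 * π : ℝ) : ℂ) := by
  simp only [sub_self, zero_mul, Complex.exp_zero]
  rw [setIntegral_const]
  simp [Real.volume_Ioo, two_mul, ENNReal.toReal_ofReal (by positivity : (0:ℝ) ≤ π + π),
    max_eq_left (by positivity : (0:ℝ) ≤ π + π)]

lemma I_kk (k : ℕ) {ρ : ℝ} (hρ : 0 ≤ ρ) :
    (∫ z in (Metric.closedBall (0:ℂ) ρ)ᶜ,
        z ^ k * (starRingEnd ℂ) z ^ k * (rexp (-π * ‖z‖ ^ 2) : ℂ))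
      = (((∫ t in Ioi (π * ρ ^ 2), t ^ k * rexp (-t)) / π ^ k : ℝ) : ℂ) := by
  rw [I_jk k k hρ, theta_diag k]
  have h := radial_eq k hρ
  have hπ : (0:ℝ) < π := pi_pos
  have : (∫ r in Ioi ρ, r ^ (k + k + 1) * rexp (-π * r ^ 2))
      = ∫ r in Ioi ρ, r ^ (2 * k + 1) * rexp (-π * r ^ 2) := by
    congr 1
    ext r
    congr 2
    ring
  rw [this]
  norm_cast
  rw [eq_div_iff (by positivity : (π:ℝ) ^ k ≠ 0), ← h]
  ring
lemma key_expand (n : ℕ) (p : Polynomial ℂ) (hp : p.natDegree ≤ n) {ρ : ℝ} (hρ : 0 ≤ ρ) :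
    (∫ z in (Metric.closedBall (0:ℂ) ρ)ᶜ,
        ‖p.eval z‖ ^ 2 * rexp (-π * ‖z‖ ^ 2))
      = ∑ k ∈ Finset.range (n + 1), ‖p.coeff k‖ ^ 2
          * ((∫ t in Ioi (π * ρ ^ 2), t ^ k * rexp (-t)) / π ^ k) := by
  have hdeg : p.natDegree < n + 1 := Nat.lt_succ_of_le hp
  apply Complex.ofReal_injective
  have hcast : ((∫ z in (Metric.closedBall (0:ℂ) ρ)ᶜ,
        ‖p.eval z‖ ^ 2 * rexp (-π * ‖z‖ ^ 2) : ℝ) : ℂ)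
      = ∫ z in (Metric.closedBall (0:ℂ) ρ)ᶜ,
          ((‖p.eval z‖ ^ 2 * rexp (-π * ‖z‖ ^ 2) : ℝ) : ℂ) :=
    (integral_ofReal).symm
  rw [hcast]
  have hpt : ∀ z : ℂ, ((‖p.eval z‖ ^ 2 * rexp (-π * ‖z‖ ^ 2) : ℝ) : ℂ)
      = ∑ j ∈ Finset.range (n + 1), ∑ k ∈ Finset.range (n + 1),
          (p.coeff j * (starRingEnd ℂ) (p.coeff k))
            * (z ^ j * (starRingEnd ℂ) z ^ k * (rexp (-π * ‖z‖ ^ 2) : ℂ)) := by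
    intro z
    have h1 : ((‖p.eval z‖ ^ 2 : ℝ) : ℂ) = p.eval z * (starRingEnd ℂ) (p.eval z) := by
      rw [Complex.mul_conj, Complex.sq_norm]
    rw [Complex.ofReal_mul, h1]
    rw [Polynomial.eval_eq_sum_range' hdeg z, map_sum, Finset.sum_mul_sum]
    rw [Finset.sum_mul]
    refine Finset.sum_congr rfl (fun j _ => ?_)
    rw [Finset.sum_mul]
    refine Finset.sum_congr rfl (fun k _ => ?_)
    simp only [map_mul, map_pow]
    ring
  rw [setIntegral_congr_fun (measurableSet_closedBall.compl) (fun z _ => hpt z)]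
  rw [integral_finset_sum _ (fun j _ => integrable_finset_sum _ (fun k _ =>
    (((integrable_monomial j k).const_mul _).integrableOn)))]
  have hin : ∀ j ∈ Finset.range (n + 1),
      (∫ z in (Metric.closedBall (0:ℂ) ρ)ᶜ, ∑ k ∈ Finset.range (n + 1),
        (p.coeff j * (starRingEnd ℂ) (p.coeff k))
          * (z ^ j * (starRingEnd ℂ) z ^ k * (rexp (-π * ‖z‖ ^ 2) : ℂ)))
      = ((‖p.coeff j‖ ^ 2
          * ((∫ t in Ioi (π * ρ ^ 2), t ^ j * rexp (-t)) / π ^ j) : ℝ) : ℂ) := by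
    intro j hj
    rw [integral_finset_sum _ (fun k _ => ((integrable_monomial j k).const_mul _).integrableOn)]
    have hterm : ∀ k ∈ Finset.range (n + 1),
        (∫ z in (Metric.closedBall (0:ℂ) ρ)ᶜ,
          (p.coeff j * (starRingEnd ℂ) (p.coeff k))
            * (z ^ j * (starRingEnd ℂ) z ^ k * (rexp (-π * ‖z‖ ^ 2) : ℂ)))
        = (p.coeff j * (starRingEnd ℂ) (p.coeff k))
            * ∫ z in (Metric.closedBall (0:ℂ) ρ)ᶜ,
              (z ^ j * (starRingEnd ℂ) z ^ k * (rexp (-π * ‖z‖ ^ 2) : ℂ)) :=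
      fun k _ => integral_const_mul _ _
    rw [Finset.sum_congr rfl hterm]
    rw [Finset.sum_eq_single j]
    · rw [I_kk j hρ, Complex.mul_conj, Complex.sq_norm]
      push_cast
      ring
    · intro k _ hkj
      rw [I_jk j k hρ, theta_ne (fun h => hkj h.symm)]
      ring
    · intro hj'
      exact absurd hj hj'
  rw [Finset.sum_congr rfl hin]
  push_cast
  ring

lemma fock_expand (n : ℕ) (p : Polynomial ℂ) (hp : p.natDegree ≤ n) :
    fockNorm2 (fun z => p.eval z) = ∑ k ∈ Finset.range (n + 1),
      ‖p.coeff k‖ ^ 2 * ((k.factorial : ℝ) / π ^ k) := by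
  have hae : ((Metric.closedBall (0:ℂ) 0)ᶜ : Set ℂ) =ᵐ[volume] (univ : Set ℂ) := by
    refine ae_eq_univ.2 ?_
    rw [compl_compl, Metric.closedBall_zero]
    exact measure_singleton 0
  have h1 : fockNorm2 (fun z => p.eval z)
      = ∫ z in (Metric.closedBall (0:ℂ) 0)ᶜ,
          ‖p.eval z‖ ^ 2 * rexp (-π * ‖z‖ ^ 2) := by
    rw [fockNorm2, ← setIntegral_univ, ← setIntegral_congr_set hae]
  rw [h1, key_expand n p hp le_rfl]
  refine Finset.sum_congr rfl (fun k _ => ?_)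
  rw [show π * (0:ℝ) ^ 2 = 0 by ring, gamma_zero k]

/-- Tail energy estimate: for every n, ρ > 0 and polynomial p of degree ≤ n,
∫_{|z|>ρ} |p(z)|² e^{−π|z|²} dm(z) ≤ (Γ(n+1, πρ²)/n!) ‖p‖²_{F²},
where Γ(n+1, a) = ∫_a^∞ tⁿ e^{−t} dt. -/
theorem statement15 (n : ℕ) (ρ : ℝ) (hρ : 0 < ρ) (p : Polynomial ℂ) (hp : p.natDegree ≤ n) :
    (∫ z in (Metric.closedBall (0 : ℂ) ρ)ᶜ,
        ‖p.eval z‖ ^ 2 * Real.exp (-Real.pi * ‖z‖ ^ 2)) ≤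
      ((∫ t in Set.Ioi (Real.pi * ρ ^ 2), t ^ n * Real.exp (-t)) / (Nat.factorial n : ℝ)) *
        fockNorm2 (fun z => p.eval z) := by
  rw [key_expand n p hp hρ.le, fock_expand n p hp, Finset.mul_sum]
  have ha : (0:ℝ) ≤ π * ρ ^ 2 := by positivity
  refine Finset.sum_le_sum (fun k hk => ?_)
  have hkn : k ≤ n := Nat.lt_succ_iff.mp (Finset.mem_range.mp hk)
  have hmono := gamma_mono hkn ha
  have hπk : (0:ℝ) < π ^ k := by positivity
  have hnf : (0:ℝ) < (n.factorial : ℝ) := by positivity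
  have hstep : (∫ t in Ioi (π * ρ ^ 2), t ^ k * rexp (-t)) / π ^ k
      ≤ (∫ t in Ioi (π * ρ ^ 2), t ^ n * rexp (-t)) / (n.factorial : ℝ)
        * ((k.factorial : ℝ) / π ^ k) := by
    rw [show (∫ t in Ioi (π * ρ ^ 2), t ^ n * rexp (-t)) / (n.factorial : ℝ)
        * ((k.factorial : ℝ) / π ^ k)
        = ((k.factorial : ℝ) * ∫ t in Ioi (π * ρ ^ 2), t ^ n * rexp (-t))
          / ((n.factorial : ℝ) * π ^ k) by ring]
    rw [div_le_div_iff₀ hπk (by positivity)]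
    nlinarith [hmono, hπk.le]
  calc ‖p.coeff k‖ ^ 2 * ((∫ t in Ioi (π * ρ ^ 2), t ^ k * rexp (-t)) / π ^ k)
      ≤ ‖p.coeff k‖ ^ 2
        * ((∫ t in Ioi (π * ρ ^ 2), t ^ n * rexp (-t)) / (n.factorial : ℝ)
          * ((k.factorial : ℝ) / π ^ k)) :=
        mul_le_mul_of_nonneg_left hstep (by positivity)
    _ = (∫ t in Ioi (π * ρ ^ 2), t ^ n * rexp (-t)) / (n.factorial : ℝ)
        * (‖p.coeff k‖ ^ 2 * ((k.factorial : ℝ) / π ^ k)) := by ring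
end

section
/- For every n ∈ ℕ, every ρ > 0 and every polynomial p of degree at most n: ∫_{|z|≤ρ} |p(z)|² e^{−π|z|²} dm(z) ≥ (γ(n+1, πρ²)/n!) · ‖p‖²_{F²}. -/
open MeasureTheory Complex Real Set Finset intervalIntegral

noncomputable section

namespace Statement16Aux

lemma exp_orth (j k : ℕ) :
    ∫ θ in (-π)..π, Complex.exp (((j : ℂ) - k) * θ * I) =
      if j = k then (2 * π : ℂ) else 0 := by
  rcases eq_or_ne j k with h | h
  · simp [h]
    norm_num
    ring
  · have hc : ((j : ℂ) - k) * I ≠ 0 := by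
      simp [Complex.ext_iff, sub_eq_zero]
      exact_mod_cast fun hh => h (by exact_mod_cast Nat.cast_injective hh)
    rw [if_neg h]
    have : ∀ θ : ℝ, ((j : ℂ) - k) * θ * I = (((j : ℂ) - k) * I) * θ := by intro θ; ring
    simp_rw [this]
    rw [integral_exp_mul_complex hc]
    have hm : ∃ m : ℤ, (j : ℂ) - k = m := ⟨(j : ℤ) - k, by push_cast; ring⟩
    obtain ⟨m, hm⟩ := hm
    rw [hm]
    have h1 : (m : ℂ) * I * π = m * (π * I) := by ring
    have h2 : (m : ℂ) * I * (-π : ℝ) = ((-m : ℤ) : ℂ) * (π * I) := by push_cast; ring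
    rw [h1, h2, Complex.exp_int_mul, Complex.exp_int_mul, Complex.exp_pi_mul_I]
    rw [zpow_neg, div_eq_zero_iff]
    left
    rcases Int.even_or_odd m with he | ho
    · rw [he.neg_one_zpow]; norm_num
    · rw [ho.neg_one_zpow]; norm_num

lemma circle_avg (n : ℕ) (p : Polynomial ℂ) (hp : p.natDegree ≤ n) (r : ℝ) :
    ∫ θ in (-π)..π, Complex.normSq (p.eval ((r : ℂ) * Complex.exp (θ * I))) =
      2 * π * ∑ k ∈ Finset.range (n + 1), Complex.normSq (p.coeff k) * r ^ (2 * k) := by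
  have hofReal := @intervalIntegral.integral_ofReal (f := fun θ : ℝ =>
      Complex.normSq (p.eval ((r : ℂ) * Complex.exp (θ * I)))) (a := -π) (b := π) (μ := volume)
  apply Complex.ofReal_injective
  rw [← hofReal]
  have key : ∀ θ : ℝ, ((Complex.normSq (p.eval ((r : ℂ) * Complex.exp (θ * I))) : ℝ) : ℂ) =
      ∑ j ∈ range (n + 1), ∑ k ∈ range (n + 1),
        (p.coeff j * (starRingEnd ℂ) (p.coeff k) * (r : ℂ) ^ (j + k)) *
          Complex.exp (((j : ℂ) - k) * θ * I) := by
    intro θ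
    rw [← Complex.mul_conj]
    rw [Polynomial.eval_eq_sum_range' (hp.trans_lt (Nat.lt_succ_self n))]
    rw [map_sum, Finset.sum_mul_sum]
    refine Finset.sum_congr rfl fun j _ => Finset.sum_congr rfl fun k _ => ?_
    rw [map_mul, map_pow, map_mul, Complex.conj_ofReal, ← Complex.exp_conj]
    have hconj : (starRingEnd ℂ) ((θ : ℂ) * I) = -((θ : ℂ) * I) := by
      simp [Complex.ext_iff]
    rw [hconj]
    rw [mul_pow, mul_pow, ← Complex.exp_nat_mul, ← Complex.exp_nat_mul]
    rw [show ∀ a b c d e f : ℂ, a * (b * c) * (d * (e * f)) = (a * d * (b * e)) * (c * f)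
      from fun a b c d e f => by ring]
    rw [← Complex.exp_add, ← pow_add]
    ring_nf
  rw [intervalIntegral.integral_congr (fun θ _ => key θ)]
  rw [intervalIntegral.integral_finset_sum]
  · have inner : ∀ j ∈ range (n + 1),
        (∫ θ in (-π)..π, ∑ k ∈ range (n + 1),
          (p.coeff j * (starRingEnd ℂ) (p.coeff k) * (r : ℂ) ^ (j + k)) *
            Complex.exp (((j : ℂ) - k) * θ * I)) =
        p.coeff j * (starRingEnd ℂ) (p.coeff j) * (r : ℂ) ^ (j + j) * (2 * π) := by
      intro j hj
      rw [intervalIntegral.integral_finset_sum]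
      · have : ∀ k ∈ range (n + 1),
            (∫ θ in (-π)..π, (p.coeff j * (starRingEnd ℂ) (p.coeff k) * (r : ℂ) ^ (j + k)) *
              Complex.exp (((j : ℂ) - k) * θ * I)) =
            if j = k then p.coeff j * (starRingEnd ℂ) (p.coeff k) * (r : ℂ) ^ (j + k) * (2 * π)
              else 0 := by
          intro k _
          rw [intervalIntegral.integral_const_mul, exp_orth]
          split <;> simp
        rw [Finset.sum_congr rfl this, Finset.sum_ite_eq (range (n + 1)) j
          (fun k => p.coeff j * (starRingEnd ℂ) (p.coeff k) * (r : ℂ) ^ (j + k) * (2 * π)),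
          if_pos hj]
      · intro k _
        apply Continuous.intervalIntegrable
        fun_prop
    rw [Finset.sum_congr rfl inner]
    push_cast
    rw [Finset.mul_sum]
    refine Finset.sum_congr rfl fun j _ => ?_
    rw [Complex.mul_conj]
    push_cast
    ring_nf
  · intro j _
    apply Continuous.intervalIntegrable
    fun_prop

lemma lintegral_polar_real (g : ℝ × ℝ → ENNReal) :
    ∫⁻ p, g p = ∫⁻ p in polarCoord.target, ENNReal.ofReal p.1 * g (polarCoord.symm p) := by
  set B : ℝ × ℝ → ℝ × ℝ →L[ℝ] ℝ × ℝ := fun p =>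
    LinearMap.toContinuousLinearMap (Matrix.toLin (Module.Basis.finTwoProd ℝ) (Module.Basis.finTwoProd ℝ)
      !![Real.cos p.2, -p.1 * Real.sin p.2; Real.sin p.2, p.1 * Real.cos p.2])
  have A : ∀ p ∈ polarCoord.target, HasFDerivWithinAt polarCoord.symm (B p) polarCoord.target p :=
    fun p _ => (hasFDerivAt_polarCoord_symm p).hasFDerivWithinAt
  have B_det : ∀ p, (B p).det = p.1 := by
    intro p
    conv_rhs => rw [← one_mul p.1, ← Real.cos_sq_add_sin_sq p.2]
    simp only [B, neg_mul, LinearMap.det_toContinuousLinearMap, LinearMap.det_toLin,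
      Matrix.det_fin_two_of, sub_neg_eq_add]
    ring
  calc
    ∫⁻ p, g p = ∫⁻ p in polarCoord.source, g p := by
      rw [← setLIntegral_univ]
      exact setLIntegral_congr polarCoord_source_ae_eq_univ.symm
    _ = ∫⁻ p in polarCoord.symm '' polarCoord.target, g p := by
      rw [OpenPartialHomeomorph.symm_image_target_eq_source]
    _ = ∫⁻ p in polarCoord.target, ENNReal.ofReal |(B p).det| * g (polarCoord.symm p) := by
      apply lintegral_image_eq_lintegral_abs_det_fderiv_mul volume
        polarCoord.open_target.measurableSet A polarCoord.symm.injOn g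
    _ = ∫⁻ p in polarCoord.target, ENNReal.ofReal p.1 * g (polarCoord.symm p) := by
      refine setLIntegral_congr_fun polarCoord.open_target.measurableSet
        (fun x hx => ?_)
      rw [B_det, abs_of_pos hx.1]

lemma lintegral_polar_complex (f : ℂ → ENNReal) :
    ∫⁻ z, f z =
      ∫⁻ p in polarCoord.target, ENNReal.ofReal p.1 * f (Complex.polarCoord.symm p) := by
  rw [← (Complex.volume_preserving_equiv_real_prod.symm).lintegral_comp_emb
    Complex.measurableEquivRealProd.symm.measurableEmbedding, lintegral_polar_real]
  rfl

noncomputable def Fk (p : Polynomial ℂ) (z : ℂ) : ENNReal :=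
  ENNReal.ofReal (‖p.eval z‖ ^ 2 * Real.exp (-π * ‖z‖ ^ 2))

lemma measurable_Fk (p : Polynomial ℂ) : Measurable (Fk p) := by
  apply ENNReal.measurable_ofReal.comp
  have h1 : Continuous fun z : ℂ => ‖p.eval z‖ ^ 2 * Real.exp (-π * ‖z‖ ^ 2) := by
    apply Continuous.mul
    · exact (p.continuous.norm).pow 2
    · exact (Real.continuous_exp).comp (continuous_const.mul (continuous_norm.pow 2))
  exact h1.measurable

lemma reduction (n : ℕ) (p : Polynomial ℂ) (hp : p.natDegree ≤ n)
    (T : Set ℝ) (hT : MeasurableSet T) :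
    ∫⁻ z in (fun z : ℂ => ‖z‖) ⁻¹' T, Fk p z =
      ∑ k ∈ range (n + 1), ENNReal.ofReal (Complex.normSq (p.coeff k)) *
        ∫⁻ r in Ioi (0:ℝ) ∩ T, ENNReal.ofReal (2 * π * (r ^ (2*k+1) * Real.exp (-π * r^2))) := by
  have hS : MeasurableSet ((fun z : ℂ => ‖z‖) ⁻¹' T) := hT.preimage continuous_norm.measurable
  rw [← lintegral_indicator hS]
  rw [lintegral_polar_complex]
  -- restrict to product set
  have htarget : polarCoord.target = Ioi (0:ℝ) ×ˢ Ioo (-π) π := rfl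
  rw [htarget]
  have hprod : (volume : Measure (ℝ × ℝ)).restrict (Ioi (0:ℝ) ×ˢ Ioo (-π) π) =
      (volume.restrict (Ioi (0:ℝ))).prod (volume.restrict (Ioo (-π) π)) := by
    rw [Measure.volume_eq_prod, Measure.prod_restrict]
  rw [hprod, lintegral_prod _ (by
    apply Measurable.aemeasurable
    apply (measurable_fst.ennreal_ofReal).mul
    have hc : Continuous (fun q : ℝ × ℝ => (Complex.polarCoord.symm q : ℂ)) := by
      simp only [Complex.polarCoord_symm_apply]
      continuity
    exact ((measurable_Fk p).indicator hS).comp hc.measurable)]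
  -- inner integral computation
  have inner : ∀ r ∈ Ioi (0:ℝ),
      (∫⁻ θ in Ioo (-π) π,
        ENNReal.ofReal ((r, θ).1) * ((fun z : ℂ => ‖z‖) ⁻¹' T).indicator (Fk p)
          (Complex.polarCoord.symm (r, θ))) =
      T.indicator (fun r => ENNReal.ofReal (r * Real.exp (-π * r^2) *
        (2 * π * ∑ k ∈ range (n + 1), Complex.normSq (p.coeff k) * r ^ (2 * k)))) r := by
    intro r hr
    have hr0 : 0 < r := hr
    have hz : ∀ θ : ℝ, (Complex.polarCoord.symm (r, θ) : ℂ) = (r : ℂ) * Complex.exp (θ * I) := by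
      intro θ
      rw [Complex.polarCoord_symm_apply, Complex.exp_mul_I]
      push_cast
      ring
    have habs : ∀ θ : ℝ, ‖(r:ℂ) * Complex.exp (θ * I)‖ = r := by
      intro θ
      rw [norm_mul, Complex.norm_real, Real.norm_eq_abs, abs_of_pos hr0]
      rw [Complex.norm_exp_ofReal_mul_I, mul_one]
    by_cases hrT : r ∈ T
    · rw [Set.indicator_of_mem hrT]
      have : ∀ θ : ℝ, ((fun z : ℂ => ‖z‖) ⁻¹' T).indicator (Fk p) (Complex.polarCoord.symm (r, θ)) =
          ENNReal.ofReal (Real.exp (-π * r^2) * Complex.normSq (p.eval ((r:ℂ) * Complex.exp (θ * I)))) := by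
        intro θ
        rw [hz θ, Set.indicator_of_mem (by simp [Set.mem_preimage, habs θ, hrT, abs_of_pos hr0]), Fk]
        rw [habs θ, ← Complex.sq_norm]
        ring_nf
      simp only [this]
      have hg : ∀ θ : ℝ, ENNReal.ofReal r * ENNReal.ofReal
          (Real.exp (-π * r^2) * Complex.normSq (p.eval ((r:ℂ) * Complex.exp (θ * I)))) =
          ENNReal.ofReal (r * Real.exp (-π * r^2) *
            Complex.normSq (p.eval ((r:ℂ) * Complex.exp (θ * I)))) := by
        intro θ
        rw [← ENNReal.ofReal_mul hr0.le, mul_assoc]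
      simp only [hg]
      have hcont : Continuous fun θ : ℝ => r * Real.exp (-π * r^2) *
          Complex.normSq (p.eval ((r:ℂ) * Complex.exp (θ * I))) := by
        apply continuous_const.mul
        apply Complex.continuous_normSq.comp
        exact p.continuous.comp (continuous_const.mul ((continuous_ofReal.mul continuous_const).cexp))
      rw [← ofReal_integral_eq_lintegral_ofReal (hcont.integrableOn_Icc.mono_set Set.Ioo_subset_Icc_self)
        (Filter.Eventually.of_forall fun θ => mul_nonneg (mul_nonneg hr0.le (Real.exp_nonneg _)) (Complex.normSq_nonneg _))]
      congr 1
      rw [← integral_Ioc_eq_integral_Ioo, ← intervalIntegral.integral_of_le (by linarith [pi_pos])]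
      rw [intervalIntegral.integral_const_mul, circle_avg n p hp r]
    · rw [Set.indicator_of_notMem hrT]
      have : ∀ θ : ℝ, ((fun z : ℂ => ‖z‖) ⁻¹' T).indicator (Fk p) (Complex.polarCoord.symm (r, θ)) = 0 := by
        intro θ
        rw [hz θ, Set.indicator_of_notMem (by simp [Set.mem_preimage, habs θ, hrT, abs_of_pos hr0])]
      simp only [this, mul_zero, lintegral_zero]
  rw [setLIntegral_congr_fun measurableSet_Ioi
    (fun r hr => inner r hr)]
  -- indicator removal
  rw [lintegral_indicator hT, Measure.restrict_restrict hT, Set.inter_comm]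
  -- split the sum
  have hae : ∀ᵐ r ∂(volume.restrict (Ioi (0:ℝ) ∩ T)), r ∈ Ioi (0:ℝ) ∩ T :=
    ae_restrict_mem (measurableSet_Ioi.inter hT)
  have hsplit : ∀ r : ℝ, r ∈ Ioi (0:ℝ) ∩ T →
      ENNReal.ofReal (r * Real.exp (-π * r^2) *
        (2 * π * ∑ k ∈ range (n + 1), Complex.normSq (p.coeff k) * r ^ (2 * k))) =
      ∑ k ∈ range (n + 1), ENNReal.ofReal (Complex.normSq (p.coeff k)) *
        ENNReal.ofReal (2 * π * (r ^ (2*k+1) * Real.exp (-π * r^2))) := by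
    intro r hr
    have hr0 : (0:ℝ) ≤ r := le_of_lt hr.1
    rw [show r * Real.exp (-π * r^2) *
        (2 * π * ∑ k ∈ range (n + 1), Complex.normSq (p.coeff k) * r ^ (2 * k)) =
        ∑ k ∈ range (n + 1), Complex.normSq (p.coeff k) *
          (2 * π * (r ^ (2*k+1) * Real.exp (-π * r^2))) by
      rw [Finset.mul_sum, Finset.mul_sum]
      refine Finset.sum_congr rfl fun k _ => ?_
      rw [pow_add, pow_mul, pow_one]
      ring]
    rw [ENNReal.ofReal_sum_of_nonneg (fun k _ => mul_nonneg (Complex.normSq_nonneg _) (by positivity))]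
    refine Finset.sum_congr rfl fun k _ => ?_
    rw [ENNReal.ofReal_mul (Complex.normSq_nonneg _)]
  rw [lintegral_congr_ae (hae.mono fun r hr => hsplit r hr)]
  rw [lintegral_finset_sum]
  · refine Finset.sum_congr rfl fun k _ => ?_
    rw [lintegral_const_mul]
    apply Measurable.ennreal_ofReal
    apply Measurable.const_mul
    exact (measurable_id.pow_const _).mul
      (Real.measurable_exp.comp ((measurable_id.pow_const 2).const_mul (-π)))
  · intro k _
    apply Measurable.const_mul
    apply Measurable.ennreal_ofReal
    apply Measurable.const_mul
    exact (measurable_id.pow_const _).mul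
      (Real.measurable_exp.comp ((measurable_id.pow_const 2).const_mul (-π)))

lemma radial_ball (k : ℕ) (R : ℝ) (hR : 0 < R) :
    ∫⁻ r in Ioi (0:ℝ) ∩ Iic R,
        ENNReal.ofReal (2 * π * (r ^ (2*k+1) * Real.exp (-π * r^2))) =
      ENNReal.ofReal ((∫ t in (0:ℝ)..(π * R^2), t ^ k * Real.exp (-t)) / π ^ k) := by
  have hset : Ioi (0:ℝ) ∩ Iic R = Ioc 0 R := Ioi_inter_Iic
  rw [hset]
  have hcont : Continuous fun r : ℝ => 2 * π * (r ^ (2*k+1) * Real.exp (-π * r^2)) := by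
    apply continuous_const.mul
    exact (continuous_pow _).mul ((Real.continuous_exp).comp (continuous_const.mul (continuous_pow 2)))
  rw [← ofReal_integral_eq_lintegral_ofReal (hcont.integrableOn_Icc.mono_set Ioc_subset_Icc_self)
    ((ae_restrict_mem measurableSet_Ioc).mono fun r hr => by
      have : (0:ℝ) < r := hr.1; positivity)]
  congr 1
  rw [← intervalIntegral.integral_of_le hR.le]
  have hsub : ∫ x in (0:ℝ)..R, 2 * π * (x ^ (2*k+1) * Real.exp (-π * x^2)) =
      ∫ t in (π * 0^2)..(π * R^2), (t ^ k * Real.exp (-t)) / π ^ k := by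
    rw [← intervalIntegral.integral_comp_smul_deriv
      (f := fun x : ℝ => π * x ^ 2) (f' := fun x : ℝ => 2 * π * x)
      (g := fun t => (t ^ k * Real.exp (-t)) / π ^ k)
      (fun x _ => by
        simpa [mul_comm, mul_assoc, mul_left_comm] using (hasDerivAt_pow 2 x).const_mul π)
      (by fun_prop) (by fun_prop)]
    refine intervalIntegral.integral_congr fun x _ => ?_
    have hπ : (0:ℝ) < π := pi_pos
    field_simp [smul_eq_mul]
    simp only [Function.comp, smul_eq_mul, mul_pow, ← pow_mul]
    field_simp
    ring
  rw [hsub]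
  norm_num [intervalIntegral.integral_div]

lemma radial_full (k : ℕ) :
    ∫⁻ r in Ioi (0:ℝ),
        ENNReal.ofReal (2 * π * (r ^ (2*k+1) * Real.exp (-π * r^2))) =
      ENNReal.ofReal ((k.factorial : ℝ) / π ^ k) := by
  have hπ : (0:ℝ) < π := pi_pos
  have hs : (-1:ℝ) < ((2*k+1 : ℕ) : ℝ) := by
    have : (0:ℝ) ≤ ((2*k+1 : ℕ) : ℝ) := Nat.cast_nonneg _
    linarith
  have hint : IntegrableOn (fun r : ℝ => 2 * π * (r ^ (2*k+1) * Real.exp (-π * r^2))) (Ioi 0) := by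
    have h2 := (integrableOn_rpow_mul_exp_neg_mul_sq hπ hs).const_mul (2 * π)
    refine IntegrableOn.congr_fun h2 (fun x hx => ?_) measurableSet_Ioi
    rw [Real.rpow_natCast]
  rw [← ofReal_integral_eq_lintegral_ofReal hint
    ((ae_restrict_mem measurableSet_Ioi).mono fun r hr => by
      have : (0:ℝ) < r := hr; positivity)]
  congr 1
  have step1 : ∫ r in Ioi (0:ℝ), 2 * π * (r ^ (2*k+1) * Real.exp (-π * r^2)) =
      ∫ y in Ioi (0:ℝ), π * y ^ k * Real.exp (-π * y) := by
    rw [← integral_comp_rpow_Ioi (fun y => π * y ^ k * Real.exp (-π * y)) (p := 2) two_ne_zero]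
    refine (setIntegral_congr_fun measurableSet_Ioi (fun x hx => ?_)).symm
    have hx0 : (0:ℝ) < x := hx
    rw [smul_eq_mul]
    norm_num
    rw [← pow_mul]
    ring
  rw [step1]
  have hcm := integral_comp_mul_left_Ioi (fun t => t ^ k * Real.exp (-t)) 0 hπ
  have hπk : (0:ℝ) < π ^ k := pow_pos hπ _
  have step3 : ∫ t in Ioi (π * 0), t ^ k * Real.exp (-t) = (k.factorial : ℝ) := by
    rw [mul_zero]
    have hG := Real.Gamma_eq_integral (s := (k:ℝ) + 1) (by positivity)
    rw [Real.Gamma_nat_eq_factorial k] at hG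
    rw [hG]
    refine setIntegral_congr_fun measurableSet_Ioi (fun t ht => ?_)
    have ht0 : (0:ℝ) < t := ht
    rw [add_sub_cancel_right, Real.rpow_natCast]
    ring
  calc ∫ y in Ioi (0:ℝ), π * y ^ k * Real.exp (-π * y)
      = ∫ y in Ioi (0:ℝ), (π / π ^ k) • ((π * y) ^ k * Real.exp (-(π * y))) := by
        refine setIntegral_congr_fun measurableSet_Ioi (fun y hy => ?_)
        rw [smul_eq_mul, mul_pow, neg_mul]
        field_simp
    _ = (π / π ^ k) • ∫ y in Ioi (0:ℝ), ((π * y) ^ k * Real.exp (-(π * y))) :=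
        integral_smul _ _
    _ = (π / π ^ k) • (π⁻¹ • ∫ t in Ioi (π * 0), t ^ k * Real.exp (-t)) := by rw [hcm]
    _ = (k.factorial : ℝ) / π ^ k := by
        rw [step3, smul_eq_mul, smul_eq_mul]
        field_simp

lemma gamma_step (a : ℝ) (ha : 0 ≤ a) (m : ℕ) :
    (∫ t in (0:ℝ)..a, t ^ (m+1) * Real.exp (-t)) / (m+1).factorial ≤
      (∫ t in (0:ℝ)..a, t ^ m * Real.exp (-t)) / m.factorial := by
  have hexp : ∀ t : ℝ, HasDerivAt (fun t : ℝ => Real.exp (-t)) (Real.exp (-t) * (-1)) t :=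
    fun t => ((hasDerivAt_id t).neg).exp
  have hf : ∀ t : ℝ, HasDerivAt (fun t : ℝ => t ^ (m+1) * Real.exp (-t))
      ((↑(m+1) * t ^ m) * Real.exp (-t) + t ^ (m+1) * (Real.exp (-t) * (-1))) t :=
    fun t => (hasDerivAt_pow (m+1) t).mul (hexp t)
  have hcont1 : Continuous fun t : ℝ => (↑(m+1) * t ^ m) * Real.exp (-t) := by fun_prop
  have hcont2 : Continuous fun t : ℝ => t ^ (m+1) * (Real.exp (-t) * (-1)) := by fun_prop
  have hderiv : ∀ t ∈ Set.uIcc (0:ℝ) a, HasDerivAt (fun t : ℝ => t ^ (m+1) * Real.exp (-t))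
      ((↑(m+1) * t ^ m) * Real.exp (-t) + t ^ (m+1) * (Real.exp (-t) * (-1))) t := fun t _ => hf t
  have hint2 : IntervalIntegrable (fun t : ℝ =>
      (↑(m+1) * t ^ m) * Real.exp (-t) + t ^ (m+1) * (Real.exp (-t) * (-1))) volume 0 a :=
    (hcont1.add hcont2).intervalIntegrable 0 a
  have key := intervalIntegral.integral_eq_sub_of_hasDerivAt hderiv hint2
  simp only [zero_pow (Nat.succ_ne_zero m), zero_mul, sub_zero, neg_zero] at key
  rw [intervalIntegral.integral_add (hcont1.intervalIntegrable _ _)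
    (hcont2.intervalIntegrable _ _)] at key

  have h1 : ∫ t in (0:ℝ)..a, (↑(m+1) * t ^ m) * Real.exp (-t) =
      (m+1 : ℝ) * ∫ t in (0:ℝ)..a, t ^ m * Real.exp (-t) := by
    rw [← intervalIntegral.integral_const_mul]
    refine intervalIntegral.integral_congr fun t _ => ?_
    push_cast; ring
  have h2 : ∫ t in (0:ℝ)..a, t ^ (m+1) * (Real.exp (-t) * (-1)) =
      -∫ t in (0:ℝ)..a, t ^ (m+1) * Real.exp (-t) := by
    rw [← intervalIntegral.integral_neg]
    refine intervalIntegral.integral_congr fun t _ => by ring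
  rw [h1, h2] at key
  have hG : (∫ t in (0:ℝ)..a, t ^ (m+1) * Real.exp (-t)) =
      (m+1 : ℝ) * (∫ t in (0:ℝ)..a, t ^ m * Real.exp (-t)) - a ^ (m+1) * Real.exp (-a) := by
    linarith
  rw [hG]
  have hfac : ((m+1).factorial : ℝ) = (m+1 : ℝ) * m.factorial := by
    rw [Nat.factorial_succ]; push_cast; ring
  rw [hfac]
  have hm1 : (0:ℝ) < (m+1 : ℝ) := by positivity
  have hfc : (0:ℝ) < (m.factorial : ℝ) := by positivity
  rw [div_le_div_iff₀ (by positivity) hfc]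
  have hnn : 0 ≤ a ^ (m+1) * Real.exp (-a) := by positivity
  nlinarith [hfc, hm1]

lemma gamma_ratio_mono (a : ℝ) (ha : 0 ≤ a) (k n : ℕ) (hkn : k ≤ n) :
    (∫ t in (0:ℝ)..a, t ^ n * Real.exp (-t)) / n.factorial ≤
      (∫ t in (0:ℝ)..a, t ^ k * Real.exp (-t)) / k.factorial := by
  induction n, hkn using Nat.le_induction with
  | base => exact le_refl _
  | succ n hkn ih => exact le_trans (gamma_step a ha n) ih

end Statement16Aux

open Statement16Aux

/-- Bulk energy estimate: for every n, ρ > 0 and polynomial p of degree ≤ n,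
∫_{|z|≤ρ} |p(z)|² e^{−π|z|²} dm(z) ≥ (γ(n+1, πρ²)/n!) ‖p‖²_{F²},
where γ(n+1, a) = ∫_0^a tⁿ e^{−t} dt. -/
theorem statement16 (n : ℕ) (ρ : ℝ) (hρ : 0 < ρ) (p : Polynomial ℂ) (hp : p.natDegree ≤ n) :
    ((∫ t in (0 : ℝ)..(Real.pi * ρ ^ 2), t ^ n * Real.exp (-t)) / (Nat.factorial n : ℝ)) *
        fockNorm2 (fun z => p.eval z) ≤
      ∫ z in Metric.closedBall (0 : ℂ) ρ,
        ‖p.eval z‖ ^ 2 * Real.exp (-Real.pi * ‖z‖ ^ 2) := by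
  have hπ : (0:ℝ) < π := Real.pi_pos
  set a : ℝ := π * ρ ^ 2 with ha_def
  have ha : 0 ≤ a := by positivity
  set γ : ℕ → ℝ := fun k => ∫ t in (0:ℝ)..a, t ^ k * Real.exp (-t) with hγ_def
  have hγnn : ∀ k, 0 ≤ γ k := by
    intro k
    apply intervalIntegral.integral_nonneg ha
    intro t ht
    have := ht.1
    positivity
  have hcont : Continuous fun z : ℂ =>
      ‖p.eval z‖ ^ 2 * Real.exp (-π * ‖z‖ ^ 2) := by
    apply Continuous.mul
    · exact (p.continuous.norm).pow 2
    · exact Real.continuous_exp.comp (continuous_const.mul (continuous_norm.pow 2))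
  have hball_set : Metric.closedBall (0:ℂ) ρ = (fun z : ℂ => ‖z‖) ⁻¹' Iic ρ := by
    ext z
    simp [Metric.mem_closedBall, Complex.dist_eq, Complex.norm_def]
  -- RHS value
  have hRHS : (∫ z in Metric.closedBall (0:ℂ) ρ,
      ‖p.eval z‖ ^ 2 * Real.exp (-π * ‖z‖ ^ 2)) =
      ∑ k ∈ range (n+1), Complex.normSq (p.coeff k) * (γ k / π ^ k) := by
    rw [integral_eq_lintegral_of_nonneg_ae
      (Filter.Eventually.of_forall fun z => by positivity)
      hcont.aestronglyMeasurable.restrict]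
    have : (∫⁻ z in Metric.closedBall (0:ℂ) ρ, ENNReal.ofReal
        (‖p.eval z‖ ^ 2 * Real.exp (-π * ‖z‖ ^ 2))) =
        ∫⁻ z in (fun z : ℂ => ‖z‖) ⁻¹' Iic ρ, Fk p z := by rw [hball_set]; rfl
    rw [this, reduction n p hp (Iic ρ) measurableSet_Iic]
    have hrw : ∀ k ∈ range (n+1),
        ENNReal.ofReal (Complex.normSq (p.coeff k)) *
          (∫⁻ r in Ioi (0:ℝ) ∩ Iic ρ,
            ENNReal.ofReal (2 * π * (r ^ (2*k+1) * Real.exp (-π * r^2)))) =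
        ENNReal.ofReal (Complex.normSq (p.coeff k) * (γ k / π ^ k)) := by
      intro k _
      rw [radial_ball k ρ hρ, ← ENNReal.ofReal_mul (Complex.normSq_nonneg _)]
    rw [Finset.sum_congr rfl hrw,
      ← ENNReal.ofReal_sum_of_nonneg (fun k _ =>
        mul_nonneg (Complex.normSq_nonneg _) (div_nonneg (hγnn k) (by positivity))),
      ENNReal.toReal_ofReal]
    exact Finset.sum_nonneg fun k _ =>
      mul_nonneg (Complex.normSq_nonneg _) (div_nonneg (hγnn k) (by positivity))
  -- Fock norm value
  have hFock : fockNorm2 (fun z => p.eval z) =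
      ∑ k ∈ range (n+1), Complex.normSq (p.coeff k) * ((k.factorial : ℝ) / π ^ k) := by
    rw [fockNorm2, integral_eq_lintegral_of_nonneg_ae
      (Filter.Eventually.of_forall fun z => by positivity)
      hcont.aestronglyMeasurable]
    have : (∫⁻ z, ENNReal.ofReal
        (‖p.eval z‖ ^ 2 * Real.exp (-π * ‖z‖ ^ 2))) =
        ∫⁻ z in (fun z : ℂ => ‖z‖) ⁻¹' (univ : Set ℝ), Fk p z := by
      rw [Set.preimage_univ, Measure.restrict_univ]; rfl
    rw [this, reduction n p hp univ MeasurableSet.univ]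
    have hrw : ∀ k ∈ range (n+1),
        ENNReal.ofReal (Complex.normSq (p.coeff k)) *
          (∫⁻ r in Ioi (0:ℝ) ∩ univ,
            ENNReal.ofReal (2 * π * (r ^ (2*k+1) * Real.exp (-π * r^2)))) =
        ENNReal.ofReal (Complex.normSq (p.coeff k) * ((k.factorial : ℝ) / π ^ k)) := by
      intro k _
      rw [Set.inter_univ, radial_full k, ← ENNReal.ofReal_mul (Complex.normSq_nonneg _)]
    rw [Finset.sum_congr rfl hrw,
      ← ENNReal.ofReal_sum_of_nonneg (fun k _ =>
        mul_nonneg (Complex.normSq_nonneg _) (by positivity)),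
      ENNReal.toReal_ofReal]
    exact Finset.sum_nonneg fun k _ =>
      mul_nonneg (Complex.normSq_nonneg _) (by positivity)
  rw [hRHS, hFock, Finset.mul_sum]
  apply Finset.sum_le_sum
  intro k hk
  have hkn : k ≤ n := Nat.lt_succ_iff.mp (Finset.mem_range.mp hk)
  have hmono := gamma_ratio_mono a ha k n hkn
  have hc : (0:ℝ) ≤ Complex.normSq (p.coeff k) := Complex.normSq_nonneg _
  have hfk : (0:ℝ) < (k.factorial : ℝ) := by positivity
  have hfn : (0:ℝ) < (n.factorial : ℝ) := by positivity
  have hπk : (0:ℝ) < π ^ k := by positivity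
  calc γ n / ↑n.factorial * (Complex.normSq (p.coeff k) * (↑k.factorial / π ^ k))
      = (Complex.normSq (p.coeff k) * ↑k.factorial / π ^ k) * (γ n / ↑n.factorial) := by ring
    _ ≤ (Complex.normSq (p.coeff k) * ↑k.factorial / π ^ k) * (γ k / ↑k.factorial) := by
        apply mul_le_mul_of_nonneg_left hmono
        positivity
    _ = Complex.normSq (p.coeff k) * (γ k / π ^ k) := by
        field_simp
end
end

section
/- Let (Λ_n) be a Marcinkiewicz–Zygmund family for the polynomials of degree at most n in F² with bounds A, B > 0 and threshold n₀. Then for every ε ∈ [0,1) and all n ≥ n₀: #{λ ∈ Λ_n : π|λ|² ≥ n(1−ε)} ≤ B(n+1)/(1−ε)^n. -/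
open MeasureTheory

lemma fact_le_aux (k : ℕ) : ∀ d : ℕ, (k + d).factorial ≤ k.factorial * (k + d) ^ d := by
  intro d
  induction d with
  | zero => simp
  | succ d ih =>
      calc (k + (d+1)).factorial = (k + d + 1) * (k + d).factorial := by
            rw [← Nat.add_assoc]; rfl
        _ ≤ (k + d + 1) * (k.factorial * (k + d) ^ d) := Nat.mul_le_mul_left _ ih
        _ ≤ (k + d + 1) * (k.factorial * (k + d + 1) ^ d) := by
            exact Nat.mul_le_mul_left _
              (Nat.mul_le_mul_left _ (Nat.pow_le_pow_left (Nat.le_succ _) d))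
        _ = k.factorial * (k + (d+1)) ^ (d+1) := by ring

lemma fact_le (k n : ℕ) (h : k ≤ n) : n.factorial ≤ k.factorial * n ^ (n - k) := by
  have := fact_le_aux k (n - k)
  rwa [Nat.add_sub_cancel' h] at this

lemma gauss_int (n : ℕ) :
    ∫ z : ℂ, ‖z‖ ^ (2 * n) * Real.exp (-Real.pi * ‖z‖ ^ 2)
      = (n.factorial : ℝ) / Real.pi ^ n := by
  have key := Complex.integral_rpow_mul_exp_neg_mul_rpow (p := 2) (q := 2 * n) (b := Real.pi)
    (by norm_num) (by have := Nat.cast_nonneg (α := ℝ) n; linarith) Real.pi_pos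
  have h1 : ∀ x : ℂ, ‖x‖ ^ ((2 * n : ℕ) : ℝ) * Real.exp (-Real.pi * ‖x‖ ^ (2 : ℝ))
      = ‖x‖ ^ (2 * n) * Real.exp (-Real.pi * ‖x‖ ^ 2) := by
    intro x
    rw [Real.rpow_natCast, show (2:ℝ) = ((2:ℕ):ℝ) by norm_num, Real.rpow_natCast]
  rw [show ((2 * n : ℝ)) = ((2 * n : ℕ) : ℝ) by push_cast; ring] at key
  simp_rw [h1] at key
  rw [key]
  have h2 : (-(((2 * n : ℕ) : ℝ) + 2) / 2) = -((n : ℝ) + 1) := by push_cast; ring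
  have h3 : ((((2 * n : ℕ) : ℝ)) + 2) / 2 = ((n:ℝ) + 1) := by push_cast; ring
  rw [h2, h3, Real.Gamma_nat_eq_factorial, Real.rpow_neg Real.pi_pos.le,
    show ((n : ℝ) + 1) = ((n + 1 : ℕ) : ℝ) by push_cast; ring, Real.rpow_natCast]
  have hπ : (0:ℝ) < Real.pi := Real.pi_pos
  rw [pow_succ]
  field_simp

lemma fock_monomial (n : ℕ) :
    fockNorm2 (fun z => ((Real.sqrt Real.pi : ℝ) : ℂ) ^ n * z ^ n) = (n.factorial : ℝ) := by
  unfold fockNorm2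
  have hint : ∀ z : ℂ, ‖((Real.sqrt Real.pi : ℝ) : ℂ) ^ n * z ^ n‖ ^ 2
      * Real.exp (-Real.pi * ‖z‖ ^ 2)
      = Real.pi ^ n * (‖z‖ ^ (2 * n) * Real.exp (-Real.pi * ‖z‖ ^ 2)) := by
    intro z
    rw [norm_mul, norm_pow, norm_pow, Complex.norm_real, Real.norm_eq_abs,
      abs_of_nonneg (Real.sqrt_nonneg _), mul_pow, ← pow_mul, ← pow_mul,
      show Real.sqrt Real.pi ^ (n * 2) = Real.pi ^ n by
        rw [mul_comm, pow_mul, Real.sq_sqrt Real.pi_pos.le],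
      mul_comm n 2]
    ring
  simp_rw [hint]
  rw [MeasureTheory.integral_const_mul, gauss_int]
  field_simp

lemma term_lb (n : ℕ) (ε : ℝ) (hε0 : 0 ≤ ε) (hε1 : ε < 1) (t : ℝ) (ht : 0 ≤ t)
    (hl : (n : ℝ) * (1 - ε) ≤ t) :
    (n.factorial : ℝ) * (1 - ε) ^ n
        * (∑ k ∈ Finset.range (n+1), t ^ k / (k.factorial : ℝ))
      ≤ ((n : ℝ) + 1) * t ^ n := by
  have h1ε : (0:ℝ) < 1 - ε := by linarith
  have step : ∀ k ∈ Finset.range (n+1),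
      (n.factorial : ℝ) * (1 - ε) ^ n * (t ^ k / (k.factorial : ℝ)) ≤ t ^ n := by
    intro k hk
    have hk' : k ≤ n := Nat.lt_succ_iff.mp (Finset.mem_range.mp hk)
    have hkf : (0:ℝ) < (k.factorial : ℝ) := by exact_mod_cast k.factorial_pos
    rw [← mul_div_assoc, div_le_iff₀ hkf]
    have ha : (n.factorial : ℝ) ≤ (k.factorial : ℝ) * (n:ℝ) ^ (n - k) := by
      exact_mod_cast fact_le k n hk'
    have hb : (1-ε) ^ n ≤ (1-ε) ^ (n - k) :=
      pow_le_pow_of_le_one h1ε.le (by linarith) (Nat.sub_le n k)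
    have hc : ((n:ℝ) * (1-ε)) ^ (n - k) ≤ t ^ (n - k) :=
      pow_le_pow_left₀ (by positivity) hl _
    calc (n.factorial : ℝ) * (1-ε) ^ n * t ^ k
        ≤ ((k.factorial : ℝ) * (n:ℝ) ^ (n-k)) * (1-ε) ^ (n-k) * t ^ k := by
          refine mul_le_mul_of_nonneg_right ?_ (pow_nonneg ht k)
          exact mul_le_mul ha hb (pow_nonneg h1ε.le n) (by positivity)
      _ = (k.factorial : ℝ) * (((n:ℝ) * (1-ε)) ^ (n-k) * t ^ k) := by
          rw [mul_pow]; ring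
      _ ≤ (k.factorial : ℝ) * (t ^ (n-k) * t ^ k) := by
          refine mul_le_mul_of_nonneg_left ?_ hkf.le
          exact mul_le_mul_of_nonneg_right hc (pow_nonneg ht k)
      _ = t ^ n * (k.factorial : ℝ) := by
          rw [← pow_add, Nat.sub_add_cancel hk']; ring
  calc (n.factorial : ℝ) * (1 - ε) ^ n
        * (∑ k ∈ Finset.range (n+1), t ^ k / (k.factorial : ℝ))
      = ∑ k ∈ Finset.range (n+1),
          (n.factorial : ℝ) * (1 - ε) ^ n * (t ^ k / (k.factorial : ℝ)) := by
        rw [Finset.mul_sum]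
    _ ≤ ∑ k ∈ Finset.range (n+1), t ^ n := Finset.sum_le_sum step
    _ = ((n : ℝ) + 1) * t ^ n := by
        rw [Finset.sum_const, Finset.card_range, nsmul_eq_mul]; push_cast; ring

/-- If (Λ_n) is a Marcinkiewicz–Zygmund family for the polynomials of degree ≤ n in F²
with bounds A, B > 0 and threshold n₀, then for every ε ∈ [0,1) and all n ≥ n₀:
#{λ ∈ Λ_n : π|λ|² ≥ n(1−ε)} ≤ B(n+1)/(1−ε)ⁿ. -/
theorem statement17 (Λ : ℕ → Finset ℂ) (A B : ℝ) (hA : 0 < A) (hB : 0 < B) (n₀ : ℕ)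
    (hMZ : ∀ n : ℕ, n₀ ≤ n → ∀ p : Polynomial ℂ, p.natDegree ≤ n →
      A * fockNorm2 (fun z => p.eval z) ≤
          ∑ l ∈ Λ n, ‖p.eval l‖ ^ 2 / kdiag n l ∧
      ∑ l ∈ Λ n, ‖p.eval l‖ ^ 2 / kdiag n l ≤
          B * fockNorm2 (fun z => p.eval z))
    (ε : ℝ) (hε0 : 0 ≤ ε) (hε1 : ε < 1) (n : ℕ) (hn : n₀ ≤ n) :
    (((Λ n).filter (fun l => (n : ℝ) * (1 - ε) ≤ Real.pi * ‖l‖ ^ 2)).card : ℝ) ≤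
      B * ((n : ℝ) + 1) / (1 - ε) ^ n := by
  set q : Polynomial ℂ :=
    Polynomial.C (((Real.sqrt Real.pi : ℝ) : ℂ) ^ n) * Polynomial.X ^ n with hq
  have hdeg : q.natDegree ≤ n :=
    le_trans (Polynomial.natDegree_C_mul_le _ _) (le_of_eq (Polynomial.natDegree_X_pow n))
  obtain ⟨-, hub⟩ := hMZ n hn q hdeg
  have hqe : ∀ z : ℂ, q.eval z = ((Real.sqrt Real.pi : ℝ) : ℂ) ^ n * z ^ n := by
    intro z; simp [hq]
  have hfock : fockNorm2 (fun z => q.eval z) = (n.factorial : ℝ) := by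
    have : (fun z => q.eval z) = fun z => ((Real.sqrt Real.pi : ℝ) : ℂ) ^ n * z ^ n :=
      funext hqe
    rw [this]; exact fock_monomial n
  have habs : ∀ l : ℂ, ‖q.eval l‖ ^ 2 = (Real.pi * ‖l‖ ^ 2) ^ n := by
    intro l
    rw [hqe, norm_mul, norm_pow, norm_pow, Complex.norm_real, Real.norm_eq_abs,
      abs_of_nonneg (Real.sqrt_nonneg _), mul_pow, mul_pow, ← pow_mul, ← pow_mul,
      mul_comm n 2, pow_mul, pow_mul, Real.sq_sqrt Real.pi_pos.le]
  have hkpos : ∀ l : ℂ, (0:ℝ) < kdiag n l := by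
    intro l
    unfold kdiag
    refine Finset.sum_pos' (fun k _ => by positivity)
      ⟨0, Finset.mem_range.mpr (Nat.succ_pos n), by simp⟩
  set F := (Λ n).filter (fun l => (n : ℝ) * (1 - ε) ≤ Real.pi * ‖l‖ ^ 2) with hF
  have key : ∀ l ∈ F, (n.factorial : ℝ) * (1-ε) ^ n
      ≤ ((n:ℝ) + 1) * (‖q.eval l‖ ^ 2 / kdiag n l) := by
    intro l hl
    obtain ⟨hlmem, hlt⟩ := Finset.mem_filter.mp hl
    have ht : 0 ≤ Real.pi * ‖l‖ ^ 2 := by positivity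
    rw [habs l, ← mul_div_assoc, le_div_iff₀ (hkpos l)]
    have := term_lb n ε hε0 hε1 _ ht hlt
    unfold kdiag
    linarith [this]
  have h1ε : (0:ℝ) < 1 - ε := by linarith
  have hFpos : (0:ℝ) < (n.factorial : ℝ) := by exact_mod_cast n.factorial_pos
  have hsum1 : (F.card : ℝ) * ((n.factorial : ℝ) * (1-ε) ^ n)
      ≤ ((n:ℝ) + 1) * ∑ l ∈ Λ n, ‖q.eval l‖ ^ 2 / kdiag n l := by
    calc (F.card : ℝ) * ((n.factorial : ℝ) * (1-ε) ^ n)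
        = ∑ _l ∈ F, (n.factorial : ℝ) * (1-ε) ^ n := by
          rw [Finset.sum_const, nsmul_eq_mul]
      _ ≤ ∑ l ∈ F, ((n:ℝ) + 1) * (‖q.eval l‖ ^ 2 / kdiag n l) :=
          Finset.sum_le_sum key
      _ = ((n:ℝ) + 1) * ∑ l ∈ F, ‖q.eval l‖ ^ 2 / kdiag n l := by
          rw [Finset.mul_sum]
      _ ≤ ((n:ℝ) + 1) * ∑ l ∈ Λ n, ‖q.eval l‖ ^ 2 / kdiag n l := by
          refine mul_le_mul_of_nonneg_left ?_ (by positivity)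
          refine Finset.sum_le_sum_of_subset_of_nonneg (Finset.filter_subset _ _) ?_
          intro l _ _
          exact div_nonneg (by positivity) (hkpos l).le
  have hfinal : (F.card : ℝ) * ((n.factorial : ℝ) * (1-ε) ^ n)
      ≤ ((n:ℝ) + 1) * (B * (n.factorial : ℝ)) := by
    refine hsum1.trans (mul_le_mul_of_nonneg_left ?_ (by positivity))
    rw [← hfock]; exact hub
  rw [le_div_iff₀ (pow_pos h1ε n)]
  have h2 : ((F.card : ℝ) * (1-ε) ^ n) * (n.factorial : ℝ)
      ≤ (B * ((n:ℝ) + 1)) * (n.factorial : ℝ) := by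
    calc ((F.card : ℝ) * (1-ε) ^ n) * (n.factorial : ℝ)
        = (F.card : ℝ) * ((n.factorial : ℝ) * (1-ε) ^ n) := by ring
      _ ≤ ((n:ℝ) + 1) * (B * (n.factorial : ℝ)) := hfinal
      _ = (B * ((n:ℝ) + 1)) * (n.factorial : ℝ) := by ring
  exact le_of_mul_le_mul_right h2 hFpos
end

section
/- Let f : ℂ → ℂ be entire and let ρ > 0. Then for every λ ∈ ℂ: |f(λ)|² e^{−π|λ|²} ≤ (e^{πρ²}/(πρ²)) · ∫_{B(λ,ρ)} |f(z)|² e^{−π|z|²} dm(z), where B(λ,ρ) is the closed disk of center λ and radius ρ. -/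
open MeasureTheory Set intervalIntegral

lemma circle_mean (G : ℂ → ℂ) (hG : Differentiable ℂ G) (l : ℂ) {r : ℝ} (hr : 0 < r) :
    2 * Real.pi * ‖G l‖ ≤ ∫ θ in (0:ℝ)..(2 * Real.pi), ‖G (circleMap l r θ)‖ := by
  have hC := Complex.circleIntegral_sub_center_inv_smul_of_differentiable_on_off_countable hr (c := l)
    Set.countable_empty hG.continuous.continuousOn (fun z _ => hG.differentiableAt)
  have hne : ∀ θ : ℝ, circleMap 0 r θ ≠ 0 := by
    intro θ; simp [circleMap, hr.ne', Complex.exp_ne_zero]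
  have h1 : (∮ z in C(l, r), (z - l)⁻¹ • G z)
      = Complex.I * ∫ θ in (0:ℝ)..(2 * Real.pi), G (circleMap l r θ) := by
    simp only [circleIntegral, deriv_circleMap, circleMap_sub_center, smul_eq_mul]
    rw [← intervalIntegral.integral_const_mul]
    refine intervalIntegral.integral_congr fun θ _ => ?_
    rw [mul_mul_mul_comm, mul_inv_cancel₀ (hne θ), one_mul]
  have h2 : (∫ θ in (0:ℝ)..(2 * Real.pi), G (circleMap l r θ)) = (2 * Real.pi : ℝ) • G l := by
    apply mul_left_cancel₀ Complex.I_ne_zero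
    rw [← h1, hC]
    simp [smul_eq_mul]
    ring
  calc 2 * Real.pi * ‖G l‖ = ‖∫ θ in (0:ℝ)..(2 * Real.pi), G (circleMap l r θ)‖ := by
        rw [h2, norm_smul]
        simp [Real.pi_nonneg, abs_of_nonneg, Real.pi_pos.le]
    _ ≤ ∫ θ in (0:ℝ)..(2 * Real.pi), ‖G (circleMap l r θ)‖ :=
        intervalIntegral.norm_integral_le_integral_norm (by positivity)

lemma polar_symm_eq (r θ : ℝ) : Complex.polarCoord.symm (r, θ) = circleMap 0 r θ := by
  simp [Complex.polarCoord_symm_apply, circleMap, Complex.exp_mul_I, ← Complex.ofReal_cos,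
    ← Complex.ofReal_sin]

lemma submean (G : ℂ → ℂ) (hG : Differentiable ℂ G) (l : ℂ) {ρ : ℝ} (hρ : 0 < ρ) :
    Real.pi * ρ ^ 2 * ‖G l‖ ≤ ∫ z in Metric.closedBall l ρ, ‖G z‖ := by
  set K : ℝ × ℝ → ℝ := fun p => p.1 * ‖G (circleMap l p.1 p.2)‖ with hK
  have hcm : Continuous fun p : ℝ × ℝ => circleMap l p.1 p.2 := by
    unfold circleMap; continuity
  have hKc : Continuous K := by
    apply continuous_fst.mul ((hG.continuous.comp hcm).norm)
  have hKint : IntegrableOn K (Ioc 0 ρ ×ˢ Ioo (-Real.pi) Real.pi) := by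
    refine (hKc.continuousOn.integrableOn_compact (isCompact_Icc.prod isCompact_Icc)).mono_set
      (prod_mono Ioc_subset_Icc_self Ioo_subset_Icc_self)
  have hS : MeasurableSet (Ioc (0:ℝ) ρ ×ˢ Ioo (-Real.pi) Real.pi) :=
    measurableSet_Ioc.prod measurableSet_Ioo
  have htarget : MeasurableSet Complex.polarCoord.target := by
    rw [Complex.polarCoord_target]
    exact measurableSet_Ioi.prod measurableSet_Ioo
  -- step 1: express the ball integral in polar coordinates
  have step1 : (∫ z in Metric.closedBall l ρ, ‖G z‖)
      = ∫ p in Ioc 0 ρ ×ˢ Ioo (-Real.pi) Real.pi, K p := by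
    have e2 : ∀ p ∈ Complex.polarCoord.target,
        p.1 • (Metric.closedBall (0:ℂ) ρ).indicator (fun w => ‖G (l + w)‖)
          (Complex.polarCoord.symm p)
        = (Ioc 0 ρ ×ˢ Ioo (-Real.pi) Real.pi).indicator K p := by
      rintro ⟨r, θ⟩ hp
      rw [Complex.polarCoord_target] at hp
      obtain ⟨hr, hθ⟩ := hp
      rw [polar_symm_eq]
      have habs : circleMap 0 r θ ∈ Metric.closedBall (0:ℂ) ρ ↔ r ≤ ρ := by
        simp [Metric.mem_closedBall, Complex.dist_eq, abs_of_pos (by exact hr : (0:ℝ) < r)]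
      have hmap : circleMap l r θ = l + circleMap 0 r θ := by
        rw [← circleMap_sub_center l r θ]; ring
      by_cases h : r ≤ ρ
      · rw [Set.indicator_of_mem (habs.mpr h), Set.indicator_of_mem
          (show ((r,θ) : ℝ × ℝ) ∈ Ioc 0 ρ ×ˢ Ioo (-Real.pi) Real.pi from ⟨⟨hr, h⟩, hθ⟩)]
        simp only [hK, smul_eq_mul, hmap]
      · rw [Set.indicator_of_notMem (fun hh => h (habs.mp hh)),
          Set.indicator_of_notMem (fun hh => h hh.1.2), smul_zero]
    calc (∫ z in Metric.closedBall l ρ, ‖G z‖)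
        = ∫ w, (Metric.closedBall (0:ℂ) ρ).indicator (fun w => ‖G (l + w)‖) w := by
          rw [← MeasureTheory.integral_indicator measurableSet_closedBall]
          rw [← integral_add_left_eq_self (fun z => (Metric.closedBall l ρ).indicator
            (fun z => ‖G z‖) z) l]
          congr 1
          funext w
          have hiff : l + w ∈ Metric.closedBall l ρ ↔ w ∈ Metric.closedBall (0:ℂ) ρ := by
            simp [Metric.mem_closedBall, dist_eq_norm]
          by_cases h : w ∈ Metric.closedBall (0:ℂ) ρ
          · rw [Set.indicator_of_mem (hiff.mpr h), Set.indicator_of_mem h]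
          · rw [Set.indicator_of_notMem (fun hh => h (hiff.mp hh)),
              Set.indicator_of_notMem h]
      _ = ∫ p in Complex.polarCoord.target,
            p.1 • (Metric.closedBall (0:ℂ) ρ).indicator (fun w => ‖G (l + w)‖)
              (Complex.polarCoord.symm p) :=
          (Complex.integral_comp_polarCoord_symm _).symm
      _ = ∫ p in Complex.polarCoord.target,
            (Ioc 0 ρ ×ˢ Ioo (-Real.pi) Real.pi).indicator K p :=
          setIntegral_congr_fun htarget e2
      _ = ∫ p in Complex.polarCoord.target ∩ (Ioc 0 ρ ×ˢ Ioo (-Real.pi) Real.pi), K p :=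
          setIntegral_indicator hS
      _ = ∫ p in Ioc 0 ρ ×ˢ Ioo (-Real.pi) Real.pi, K p := by
          rw [Set.inter_eq_self_of_subset_right]
          rw [Complex.polarCoord_target]
          exact prod_mono Ioc_subset_Ioi_self (fun x hx => hx)
  have hvol : (volume : Measure (ℝ × ℝ)) = (volume : Measure ℝ).prod volume :=
    (MeasureTheory.Measure.volume_eq_prod ℝ ℝ)
  have hKint' : Integrable K ((((volume : Measure ℝ).restrict (Ioc 0 ρ)).prod
      ((volume : Measure ℝ).restrict (Ioo (-Real.pi) Real.pi)))) := by
    rw [Measure.prod_restrict, ← hvol]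
    exact hKint
  have step2 : (∫ p in Ioc 0 ρ ×ˢ Ioo (-Real.pi) Real.pi, K p)
      = ∫ r in Ioc 0 ρ, ∫ θ in Ioo (-Real.pi) Real.pi, K (r, θ) := by
    rw [show (∫ p in Ioc 0 ρ ×ˢ Ioo (-Real.pi) Real.pi, K p)
        = ∫ p in Ioc 0 ρ ×ˢ Ioo (-Real.pi) Real.pi, K p
          ∂((volume : Measure ℝ).prod volume) by rw [← hvol]]
    exact MeasureTheory.setIntegral_prod K (by rw [hvol] at hKint; exact hKint)
  have hinner : ∀ r ∈ Ioc (0:ℝ) ρ,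
      2 * Real.pi * ‖G l‖ * r ≤ ∫ θ in Ioo (-Real.pi) Real.pi, K (r, θ) := by
    intro r hr
    have h1 : (∫ θ in Ioo (-Real.pi) Real.pi, K (r, θ))
        = r * ∫ θ in (0:ℝ)..(2 * Real.pi), ‖G (circleMap l r θ)‖ := by
      have e : (∫ θ in Ioo (-Real.pi) Real.pi, K (r, θ))
          = ∫ θ in Ioo (-Real.pi) Real.pi, r * ‖G (circleMap l r θ)‖ := rfl
      rw [e, MeasureTheory.integral_const_mul]
      congr 1
      rw [← MeasureTheory.integral_Ioc_eq_integral_Ioo,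
        ← intervalIntegral.integral_of_le (by linarith [Real.pi_pos] : -Real.pi ≤ Real.pi)]
      have hper : Function.Periodic (fun θ => ‖G (circleMap l r θ)‖) (2 * Real.pi) :=
        fun θ => by simp [periodic_circleMap l r θ]
      have hpe := hper.intervalIntegral_add_eq (-Real.pi) 0
      have h2 : -Real.pi + 2 * Real.pi = Real.pi := by ring
      rw [h2, zero_add] at hpe
      exact hpe
    rw [h1]
    have := circle_mean G hG l (hr.1 : (0:ℝ) < r)
    calc 2 * Real.pi * ‖G l‖ * r ≤ (∫ θ in (0:ℝ)..(2 * Real.pi), ‖G (circleMap l r θ)‖) * r :=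
          mul_le_mul_of_nonneg_right this hr.1.le
      _ = r * ∫ θ in (0:ℝ)..(2 * Real.pi), ‖G (circleMap l r θ)‖ := mul_comm _ _
  have hLint : IntegrableOn (fun r : ℝ => 2 * Real.pi * ‖G l‖ * r) (Ioc 0 ρ) :=
    ((continuous_const.mul continuous_id).continuousOn.integrableOn_compact
      isCompact_Icc).mono_set Ioc_subset_Icc_self
  have hRint : IntegrableOn (fun r : ℝ => ∫ θ in Ioo (-Real.pi) Real.pi, K (r, θ)) (Ioc 0 ρ) :=
    hKint'.integral_prod_left
  have mono := setIntegral_mono_on hLint hRint measurableSet_Ioc hinner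
  have hid : (∫ r in Ioc (0:ℝ) ρ, 2 * Real.pi * ‖G l‖ * r)
      = Real.pi * ρ ^ 2 * ‖G l‖ := by
    rw [MeasureTheory.integral_const_mul, ← intervalIntegral.integral_of_le hρ.le,
      integral_id]
    ring
  rw [step1, step2]
  rw [hid] at mono
  exact mono

/-- Pointwise bound for entire functions: for every entire f, ρ > 0 and λ ∈ ℂ,
|f(λ)|² e^{−π|λ|²} ≤ (e^{πρ²}/(πρ²)) ∫_{B(λ,ρ)} |f(z)|² e^{−π|z|²} dm(z). -/
theorem statement19 (f : ℂ → ℂ) (hf : Differentiable ℂ f) (ρ : ℝ) (hρ : 0 < ρ) (l : ℂ) :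
    ‖f l‖ ^ 2 * Real.exp (-Real.pi * ‖l‖ ^ 2) ≤
      (Real.exp (Real.pi * ρ ^ 2) / (Real.pi * ρ ^ 2)) *
        ∫ z in Metric.closedBall l ρ,
          ‖f z‖ ^ 2 * Real.exp (-Real.pi * ‖z‖ ^ 2) := by
  set G : ℂ → ℂ := fun z => f z ^ 2 *
    Complex.exp ((Real.pi : ℂ) * (l * (starRingEnd ℂ) l) -
      2 * (Real.pi : ℂ) * (z * (starRingEnd ℂ) l)) with hGdef
  have hGd : Differentiable ℂ G :=
    (hf.pow 2).mul (Complex.differentiable_exp.comp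
      ((differentiable_const _).sub ((differentiable_id.mul_const _).const_mul _)))
  set A : ℂ → ℝ := fun z => ‖f z‖ ^ 2 * Real.exp (-Real.pi * ‖z‖ ^ 2)
    with hAdef
  have hnorm : ∀ z, ‖G z‖ = A z * Real.exp (Real.pi * ‖z - l‖ ^ 2) := by
    intro z
    simp only [hGdef, hAdef, norm_mul, norm_pow, Complex.norm_exp,
      mul_assoc, ← Real.exp_add]
    congr 1
    simp only [Complex.sub_re, Complex.mul_re, Complex.mul_im, Complex.ofReal_re,
      Complex.ofReal_im, Complex.conj_re, Complex.conj_im, Complex.sq_norm,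
      Complex.normSq_apply, Complex.sub_im, Complex.re_ofNat, Complex.im_ofNat]
    ring
  have hGl : ‖G l‖ = A l := by
    rw [hnorm l]
    simp
  have hsub := submean G hGd l hρ
  have hAc : Continuous A :=
    ((continuous_norm.comp hf.continuous).pow 2).mul
      (Real.continuous_exp.comp (continuous_const.mul (continuous_norm.pow 2)))
  have hbound : ∀ z ∈ Metric.closedBall l ρ, ‖G z‖ ≤ A z * Real.exp (Real.pi * ρ ^ 2) := by
    intro z hz
    rw [hnorm z]
    have h1 : ‖z - l‖ ≤ ρ := by
      rw [Metric.mem_closedBall, Complex.dist_eq] at hz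
      exact hz
    have h2 : Real.exp (Real.pi * ‖z - l‖ ^ 2) ≤ Real.exp (Real.pi * ρ ^ 2) := by
      apply Real.exp_le_exp.mpr
      have := pow_le_pow_left₀ (norm_nonneg _) h1 2
      nlinarith [Real.pi_pos]
    exact mul_le_mul_of_nonneg_left h2 (by positivity)
  have hint1 : IntegrableOn (fun z => ‖G z‖) (Metric.closedBall l ρ) :=
    hGd.continuous.norm.continuousOn.integrableOn_compact (isCompact_closedBall _ _)
  have hint2 : IntegrableOn (fun z => A z * Real.exp (Real.pi * ρ ^ 2))
      (Metric.closedBall l ρ) :=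
    (hAc.mul continuous_const).continuousOn.integrableOn_compact (isCompact_closedBall _ _)
  have h3 : (∫ z in Metric.closedBall l ρ, ‖G z‖)
      ≤ (∫ z in Metric.closedBall l ρ, A z) * Real.exp (Real.pi * ρ ^ 2) := by
    rw [← MeasureTheory.integral_mul_const]
    exact setIntegral_mono_on hint1 hint2 measurableSet_closedBall hbound
  have hpos : (0:ℝ) < Real.pi * ρ ^ 2 := by positivity
  rw [div_mul_eq_mul_div, le_div_iff₀ hpos]
  have key : Real.pi * ρ ^ 2 * A l ≤
      (∫ z in Metric.closedBall l ρ, A z) * Real.exp (Real.pi * ρ ^ 2) := by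
    rw [← hGl]
    exact le_trans hsub h3
  calc ‖f l‖ ^ 2 * Real.exp (-Real.pi * ‖l‖ ^ 2) * (Real.pi * ρ ^ 2)
      = Real.pi * ρ ^ 2 * A l := by rw [hAdef]; ring
    _ ≤ (∫ z in Metric.closedBall l ρ, A z) * Real.exp (Real.pi * ρ ^ 2) := key
    _ = Real.exp (Real.pi * ρ ^ 2) * ∫ z in Metric.closedBall l ρ,
          ‖f z‖ ^ 2 * Real.exp (-Real.pi * ‖z‖ ^ 2) := by
        rw [hAdef]; ring
end
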